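/- arXiv:math/0510390 — 3 statements merged into one kernel-verified Lean document; each statement's English description precedes it below -/
import Mathlib

section
/- Let k ≤ n be positive integers. For any two chord diagrams c, c′ ∈ 𝒞(k), β_{ĉ′}(u_k(ĉ)) = 1 if c′ = c, and β_{ĉ′}(u_k(ĉ)) = 0 if c′ ≠ c. (Hence the vectors u_k(ĉ) are dual to the functionals β_{ĉ′}.) -/
open scoped BigOperators

noncomputable section

/-- `Vs n` is the even symplectic vector space `ℂ^{2n}` with canonical coordinates
`p₁,…,p_n` (indexed by `Sum.inl`) and `q₁,…,q_n` (indexed by `Sum.inr`). -/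
abbrev Vs (n : ℕ) : Type := (Fin n ⊕ Fin n) → ℂ

/-- the basis vector `p_i`. -/
def pvec (n : ℕ) (i : Fin n) : Vs n := Pi.single (Sum.inl i) 1

/-- the basis vector `q_i`. -/
def qvec (n : ℕ) (i : Fin n) : Vs n := Pi.single (Sum.inr i) 1

/-- The canonical symplectic form on `ℂ^{2n}`, determined by `⟨p_i,q_j⟩ = δ_{ij}`,
`⟨p_i,p_j⟩ = ⟨q_i,q_j⟩ = 0` and antisymmetry. -/
def symp (n : ℕ) (a b : Vs n) : ℂ :=
  ∑ i : Fin n, (a (Sum.inl i) * b (Sum.inr i) - a (Sum.inr i) * b (Sum.inl i))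

/-- `ξ ∈ sp(2n,ℂ)`. -/
def IsSp (n : ℕ) (ξ : Vs n →ₗ[ℂ] Vs n) : Prop :=
  ∀ a b : Vs n, symp n (ξ a) b + symp n a (ξ b) = 0

/-- An oriented chord diagram on `{1,…,2k}`: a list of `k` ordered pairs such that every
element of `Fin (2k)` occurs as an entry (hence, by cardinality, exactly once). -/
def IsOCD (k : ℕ) (c : Fin k → Fin (2 * k) × Fin (2 * k)) : Prop :=
  Function.Surjective (fun x : Fin k × Bool => if x.2 then (c x.1).2 else (c x.1).1)

/-- The canonical representative `ĉ` of an (unoriented) chord diagram: each pair is ordered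
increasingly, and the pairs are listed in increasing order of their first entries.  Chord
diagrams `c ∈ 𝒞(k)` are in canonical bijection with such representatives. -/
def IsCDRep (k : ℕ) (c : Fin k → Fin (2 * k) × Fin (2 * k)) : Prop :=
  IsOCD k c ∧ (∀ r : Fin k, (c r).1 < (c r).2) ∧ ∀ r s : Fin k, r < s → (c r).1 < (c s).1

/-- `β_c`, evaluated on the pure tensor `x₁ ⊗ ⋯ ⊗ x_{2k}`:
`β_c(x₁⊗⋯⊗x_{2k}) = ∏_r ⟨x_{i_r}, x_{j_r}⟩`. -/
def betaFun (n k : ℕ) (c : Fin k → Fin (2 * k) × Fin (2 * k)) (x : Fin (2 * k) → Vs n) : ℂ :=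
  ∏ r : Fin k, symp n (x (c r).1) (x (c r).2)

/-- The pure tensor `u_k(c)` (for `k ≤ n`): its `i_r`-th tensor factor is `p_r` and its
`j_r`-th tensor factor is `q_r`. -/
def uFam (n k : ℕ) (hkn : k ≤ n) (c : Fin k → Fin (2 * k) × Fin (2 * k)) :
    Fin (2 * k) → Vs n := fun i =>
  ∑ r : Fin k,
    ((if i = (c r).1 then pvec n (Fin.castLE hkn r) else 0) +
     (if i = (c r).2 then qvec n (Fin.castLE hkn r) else 0))

instance (k : ℕ) (c : Fin k → Fin (2 * k) × Fin (2 * k)) : Decidable (IsOCD k c) :=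
  inferInstanceAs (Decidable (Function.Surjective _))

instance (k : ℕ) (c : Fin k → Fin (2 * k) × Fin (2 * k)) : Decidable (IsCDRep k c) :=
  inferInstanceAs (Decidable (_ ∧ _))

lemma symp_pq (n : ℕ) (r s : Fin n) : symp n (pvec n r) (qvec n s) = if r = s then 1 else 0 := by
  simp [symp, pvec, qvec, Pi.single_apply, eq_comm]
lemma symp_pp (n : ℕ) (r s : Fin n) : symp n (pvec n r) (pvec n s) = 0 := by
  simp [symp, pvec, qvec, Pi.single_apply]
lemma symp_qq (n : ℕ) (r s : Fin n) : symp n (qvec n r) (qvec n s) = 0 := by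
  simp [symp, pvec, qvec, Pi.single_apply]
lemma symp_qp (n : ℕ) (r s : Fin n) : symp n (qvec n r) (pvec n s) = -if r = s then 1 else 0 := by
  simp [symp, pvec, qvec, Pi.single_apply, eq_comm]

lemma isOCD_inj {k : ℕ} {c : Fin k → Fin (2 * k) × Fin (2 * k)} (h : IsOCD k c) :
    Function.Injective (fun x : Fin k × Bool => if x.2 then (c x.1).2 else (c x.1).1) := by
  have : Function.Bijective (fun x : Fin k × Bool => if x.2 then (c x.1).2 else (c x.1).1) := by
    rw [Fintype.bijective_iff_surjective_and_card]
    exact ⟨h, by simp [Nat.mul_comm]⟩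
  exact this.1

lemma fst_inj {k : ℕ} {c : Fin k → Fin (2 * k) × Fin (2 * k)} (h : IsOCD k c)
    {r s : Fin k} (e : (c r).1 = (c s).1) : r = s := by
  have := isOCD_inj h (a₁ := (r, false)) (a₂ := (s, false)) (by simpa using e)
  exact (Prod.ext_iff.1 this).1

lemma snd_inj {k : ℕ} {c : Fin k → Fin (2 * k) × Fin (2 * k)} (h : IsOCD k c)
    {r s : Fin k} (e : (c r).2 = (c s).2) : r = s := by
  have := isOCD_inj h (a₁ := (r, true)) (a₂ := (s, true)) (by simpa using e)
  exact (Prod.ext_iff.1 this).1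

lemma fst_ne_snd {k : ℕ} {c : Fin k → Fin (2 * k) × Fin (2 * k)} (h : IsOCD k c)
    (r s : Fin k) : (c r).1 ≠ (c s).2 := by
  intro e
  have := isOCD_inj h (a₁ := (r, false)) (a₂ := (s, true)) (by simpa using e)
  simpa using (Prod.ext_iff.1 this).2

lemma uFam_fst {n k : ℕ} (hkn : k ≤ n) {c : Fin k → Fin (2 * k) × Fin (2 * k)}
    (hc : IsCDRep k c) (r : Fin k) :
    uFam n k hkn c (c r).1 = pvec n (Fin.castLE hkn r) := by
  rw [uFam, Finset.sum_eq_single r]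
  · rw [if_pos rfl, if_neg (fst_ne_snd hc.1 r r), add_zero]
  · intro s _ hs
    rw [if_neg (fun e => hs (fst_inj hc.1 e).symm), if_neg (fst_ne_snd hc.1 r s), add_zero]
  · simp
lemma uFam_snd {n k : ℕ} (hkn : k ≤ n) {c : Fin k → Fin (2 * k) × Fin (2 * k)}
    (hc : IsCDRep k c) (r : Fin k) :
    uFam n k hkn c (c r).2 = qvec n (Fin.castLE hkn r) := by
  rw [uFam, Finset.sum_eq_single r]
  · rw [if_pos rfl, if_neg (Ne.symm (fst_ne_snd hc.1 r r)), zero_add]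
  · intro s _ hs
    rw [if_neg (Ne.symm (fst_ne_snd hc.1 s r)),
      if_neg (fun e => hs (snd_inj hc.1 e).symm), add_zero]
  · simp


/-- for `k ≤ n` and chord diagrams `c, c' ∈ 𝒞(k)` (given by their canonical
representatives `ĉ, ĉ'`), `β_{ĉ'}(u_k(ĉ)) = 1` if `c' = c` and `= 0` otherwise. -/
theorem beta_u_duality (n k : ℕ) (hk : 0 < k) (hkn : k ≤ n)
    (c c' : Fin k → Fin (2 * k) × Fin (2 * k)) (hc : IsCDRep k c) (hc' : IsCDRep k c') :
    betaFun n k c' (uFam n k hkn c) = if c' = c then 1 else 0 := by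
  -- key dichotomy for each factor
  have key : ∀ s : Fin k, (∃ t : Fin k, c' s = c t ∧
      symp n (uFam n k hkn c (c' s).1) (uFam n k hkn c (c' s).2) = 1) ∨
      symp n (uFam n k hkn c (c' s).1) (uFam n k hkn c (c' s).2) = 0 := by
    intro s
    obtain ⟨⟨r, b⟩, hr⟩ := hc.1 (c' s).1
    obtain ⟨⟨r', b'⟩, hr'⟩ := hc.1 (c' s).2
    simp only at hr hr'
    cases b <;> cases b' <;> simp only [if_true, if_false, Bool.false_eq_true] at hr hr'
    · right; rw [← hr, ← hr', uFam_fst hkn hc, uFam_fst hkn hc, symp_pp]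
    · -- (c' s).1 = (c r).1, (c' s).2 = (c r').2
      by_cases hrr : r = r'
      · left
        subst hrr
        refine ⟨r, Prod.ext hr.symm hr'.symm, ?_⟩
        rw [← hr, ← hr', uFam_fst hkn hc, uFam_snd hkn hc, symp_pq, if_pos rfl]
      · right
        rw [← hr, ← hr', uFam_fst hkn hc, uFam_snd hkn hc, symp_pq,
          if_neg (fun e => hrr (Fin.castLE_injective hkn e))]
    · -- (c' s).1 = (c r).2, (c' s).2 = (c r').1
      by_cases hrr : r = r'
      · exfalso
        subst hrr
        have h1 := hc'.2.1 s
        have h2 := hc.2.1 r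
        rw [← hr, ← hr'] at h1
        exact absurd (h1.trans h2) (lt_irrefl _)
      · right
        rw [← hr, ← hr', uFam_snd hkn hc, uFam_fst hkn hc, symp_qp,
          if_neg (fun e => hrr (Fin.castLE_injective hkn e)), neg_zero]
    · right; rw [← hr, ← hr', uFam_snd hkn hc, uFam_snd hkn hc, symp_qq]
  by_cases hall : ∀ s : Fin k, ∃ t : Fin k, c' s = c t ∧
      symp n (uFam n k hkn c (c' s).1) (uFam n k hkn c (c' s).2) = 1
  · -- then c' = c and product is 1
    choose σ hσ hone using hall
    have hmono : StrictMono σ := by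
      intro a b hab
      have h1 : (c (σ a)).1 < (c (σ b)).1 := by
        rw [← hσ a, ← hσ b]; exact hc'.2.2 a b hab
      rcases lt_trichotomy (σ a) (σ b) with h | h | h
      · exact h
      · rw [h] at h1; exact absurd h1 (lt_irrefl _)
      · exact absurd (h1.trans (hc.2.2 _ _ h)) (lt_irrefl _)
    have hσid : σ = id := by
      have hsurj : Function.Surjective σ :=
        Finite.surjective_of_injective hmono.injective
      exact (hmono.range_inj strictMono_id).1
        (by rw [Set.range_eq_univ.2 hsurj, Set.range_id])
    have hcc : c' = c := by
      funext s
      rw [hσ s, hσid, id]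
    rw [if_pos hcc, betaFun]
    exact Finset.prod_eq_one (fun s _ => hone s)
  · push_neg at hall
    obtain ⟨s, hs⟩ := hall
    have hzero : symp n (uFam n k hkn c (c' s).1) (uFam n k hkn c (c' s).2) = 0 := by
      rcases key s with ⟨t, ht, h1⟩ | h0
      · exact absurd h1 (hs t ht)
      · exact h0
    have hne : c' ≠ c := by
      intro e
      subst e
      apply hs s rfl
      rw [uFam_fst hkn hc, uFam_snd hkn hc, symp_pq, if_pos rfl]
    rw [if_neg hne, betaFun]
    exact Finset.prod_eq_zero (Finset.mem_univ s) hzero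

end
end

section
/- Let k ≤ n be positive integers. The family {β_ĉ : c ∈ 𝒞(k)} is a basis of the space of sp(2n,ℂ)-invariant linear functionals on V^{⊗2k}: every invariant functional is a unique linear combination of the β_ĉ. (This is the even, m = 0, case of part (ii) of the paper's invariant-theory lemma for osp(2n|m).) -/
open scoped BigOperators

noncomputable section

namespace SpAux

abbrev Idx (n : ℕ) := Fin n ⊕ Fin n

/-- basis vector -/
def ev (n : ℕ) (b : Idx n) : Vs n := Pi.single b 1

/-- pairing of basis vectors -/
def Dp (n : ℕ) (b b' : Idx n) : ℂ :=
  match b, b' with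
  | Sum.inl i, Sum.inr j => if i = j then 1 else 0
  | Sum.inr i, Sum.inl j => if i = j then -1 else 0
  | _, _ => 0

variable {n : ℕ}

lemma symp_ev_ev (b b' : Idx n) : symp n (ev n b) (ev n b') = Dp n b b' := by
  rcases b with i | i <;> rcases b' with j | j <;>
    simp [symp, ev, Dp, Pi.single_apply, eq_comm] <;> split <;> simp

lemma symp_antisymm (a b : Vs n) : symp n a b = - symp n b a := by
  simp only [symp, ← Finset.sum_neg_distrib]
  exact Finset.sum_congr rfl fun i _ => by ring

lemma symp_add_right (a b c : Vs n) : symp n a (b + c) = symp n a b + symp n a c := by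
  simp only [symp, Pi.add_apply, ← Finset.sum_add_distrib]
  exact Finset.sum_congr rfl fun i _ => by ring

lemma symp_smul_right (a : Vs n) (t : ℂ) (b : Vs n) : symp n a (t • b) = t * symp n a b := by
  simp only [symp, Pi.smul_apply, smul_eq_mul, Finset.mul_sum]
  exact Finset.sum_congr rfl fun i _ => by ring

lemma symp_add_left (a b c : Vs n) : symp n (a + b) c = symp n a c + symp n b c := by
  simp only [symp, Pi.add_apply, ← Finset.sum_add_distrib]
  exact Finset.sum_congr rfl fun i _ => by ring

lemma symp_smul_left (a : Vs n) (t : ℂ) (b : Vs n) : symp n (t • a) b = t * symp n a b := by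
  simp only [symp, Pi.smul_apply, smul_eq_mul, Finset.mul_sum]
  exact Finset.sum_congr rfl fun i _ => by ring

lemma Dp_antisymm (b b' : Idx n) : Dp n b b' = - Dp n b' b := by
  rcases b with i | i <;> rcases b' with j | j <;> simp [Dp, eq_comm] <;> split <;> simp

lemma Dp_ne_zero {b b' : Idx n} (h : Dp n b b' ≠ 0) :
    (∃ m, b = Sum.inl m ∧ b' = Sum.inr m) ∨ (∃ m, b = Sum.inr m ∧ b' = Sum.inl m) := by
  rcases b with i | i <;> rcases b' with j | j <;> simp only [Dp] at h
  · exact absurd rfl h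
  · refine Or.inl ⟨i, rfl, ?_⟩
    by_cases hij : i = j
    · rw [hij]
    · exact absurd (by simp [hij]) h
  · refine Or.inr ⟨i, rfl, ?_⟩
    by_cases hij : i = j
    · rw [hij]
    · exact absurd (by simp [hij]) h
  · exact absurd rfl h

end SpAux
namespace SpAux
variable {n k : ℕ}

/-- the element `ξ_{v,w} ∈ sp`: `x ↦ ⟨e_v,x⟩ e_w + ⟨e_w,x⟩ e_v`. -/
def xiVW (n : ℕ) (v w : Idx n) : Vs n →ₗ[ℂ] Vs n where
  toFun x := symp n (ev n v) x • ev n w + symp n (ev n w) x • ev n v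
  map_add' x y := by
    simp only [symp_add_right]
    module
  map_smul' t x := by
    simp only [symp_smul_right, RingHom.id_apply]
    module

lemma isSp_xiVW (v w : Idx n) : IsSp n (xiVW n v w) := by
  intro a b
  simp only [xiVW, LinearMap.coe_mk, AddHom.coe_mk, symp_add_left, symp_add_right,
    symp_smul_left, symp_smul_right]
  have h1 : symp n (ev n w) a = - symp n a (ev n w) := by rw [symp_antisymm]
  have h2 : symp n (ev n v) a = - symp n a (ev n v) := by rw [symp_antisymm]
  rw [h1, h2]; ring

lemma xiVW_ev (v w b : Idx n) :
    xiVW n v w (ev n b) = Dp n v b • ev n w + Dp n w b • ev n v := by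
  simp [xiVW, symp_ev_ev]

/-- The master relation satisfied by (the basis values of) any invariant functional. -/
def MR (n k : ℕ) (F : (Fin (2 * k) → Idx n) → ℂ) : Prop :=
  ∀ (v w : Idx n) (a : Fin (2 * k) → Idx n),
    ∑ i : Fin (2 * k),
      (Dp n v (a i) * F (Function.update a i w) + Dp n w (a i) * F (Function.update a i v)) = 0

lemma ev_update (a : Fin (2 * k) → Idx n) (i : Fin (2 * k)) (b : Idx n) :
    (ev n) ∘ (Function.update a i b) = Function.update ((ev n) ∘ a) i (ev n b) := by
  funext j
  by_cases h : j = i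
  · subst h; simp
  · simp [Function.update_of_ne h]

lemma MR_of_invariant (f : MultilinearMap ℂ (fun _ : Fin (2 * k) => Vs n) ℂ)
    (hf : ∀ ξ : Vs n →ₗ[ℂ] Vs n, IsSp n ξ → ∀ x : Fin (2 * k) → Vs n,
      ∑ i : Fin (2 * k), f (Function.update x i (ξ (x i))) = 0) :
    MR n k (fun a => f ((ev n) ∘ a)) := by
  intro v w a
  have h := hf (xiVW n v w) (isSp_xiVW v w) ((ev n) ∘ a)
  rw [← h]
  apply Finset.sum_congr rfl
  intro i _
  rw [Function.comp_apply, xiVW_ev, MultilinearMap.map_update_add, MultilinearMap.map_update_smul,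
    MultilinearMap.map_update_smul, ← ev_update, ← ev_update]
  simp [mul_comm]

lemma MR_sub {F G : (Fin (2 * k) → Idx n) → ℂ} (hF : MR n k F) (hG : MR n k G) :
    MR n k (F - G) := by
  intro v w a
  have h1 := hF v w a
  have h2 := hG v w a
  have : ∑ i : Fin (2 * k),
      ((Dp n v (a i) * F (Function.update a i w) + Dp n w (a i) * F (Function.update a i v))
      - (Dp n v (a i) * G (Function.update a i w) + Dp n w (a i) * G (Function.update a i v)))
      = 0 := by
    rw [Finset.sum_sub_distrib, h1, h2, sub_zero]
  rw [← this]
  apply Finset.sum_congr rfl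
  intro i _
  simp only [Pi.sub_apply]
  ring

lemma MR_sum {ι : Type*} [Fintype ι] (G : ι → (Fin (2 * k) → Idx n) → ℂ)
    (hG : ∀ t, MR n k (G t)) : MR n k (fun a => ∑ t, G t a) := by
  intro v w a
  simp only
  have : ∀ i : Fin (2 * k),
      (Dp n v (a i) * ∑ t, G t (Function.update a i w) +
        Dp n w (a i) * ∑ t, G t (Function.update a i v))
      = ∑ t, (Dp n v (a i) * G t (Function.update a i w) +
        Dp n w (a i) * G t (Function.update a i v)) := by
    intro i
    rw [Finset.mul_sum, Finset.mul_sum, ← Finset.sum_add_distrib]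
  rw [Finset.sum_congr rfl fun i _ => this i, Finset.sum_comm]
  exact Finset.sum_eq_zero fun t _ => hG t v w a

lemma MR_smul (t : ℂ) {F : (Fin (2 * k) → Idx n) → ℂ} (hF : MR n k F) :
    MR n k (fun a => t * F a) := by
  intro v w a
  have h1 := hF v w a
  calc ∑ i : Fin (2 * k), (Dp n v (a i) * (t * F (Function.update a i w)) +
        Dp n w (a i) * (t * F (Function.update a i v)))
      = t * ∑ i : Fin (2 * k), (Dp n v (a i) * F (Function.update a i w) +
        Dp n w (a i) * F (Function.update a i v)) := by
        rw [Finset.mul_sum]; exact Finset.sum_congr rfl fun i _ => by ring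
    _ = 0 := by rw [h1, mul_zero]

end SpAux
namespace SpAux
variable {n k : ℕ}

/-- endpoints map of a chord diagram -/
def pos (k : ℕ) (c : Fin k → Fin (2 * k) × Fin (2 * k)) : Fin k × Bool → Fin (2 * k) :=
  fun rb => if rb.2 then (c rb.1).2 else (c rb.1).1

lemma pos_bijective {c : Fin k → Fin (2 * k) × Fin (2 * k)} (hc : IsOCD k c) :
    Function.Bijective (pos k c) := by
  have hcard : Fintype.card (Fin k × Bool) = Fintype.card (Fin (2 * k)) := by
    simp [Fintype.card_prod, two_mul, Nat.mul_comm k 2]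
  exact (Fintype.bijective_iff_surjective_and_card _).2 ⟨hc, hcard⟩

/-- the equivalence `Fin k × Bool ≃ Fin (2k)` given by an OCD -/
def Ec {c : Fin k → Fin (2 * k) × Fin (2 * k)} (hc : IsOCD k c) : Fin k × Bool ≃ Fin (2 * k) :=
  Equiv.ofBijective (pos k c) (pos_bijective hc)

lemma Ec_apply {c : Fin k → Fin (2 * k) × Fin (2 * k)} (hc : IsOCD k c) (rb : Fin k × Bool) :
    Ec hc rb = pos k c rb := rfl

lemma Ec_symm_fst {c : Fin k → Fin (2 * k) × Fin (2 * k)} (hc : IsOCD k c) (r : Fin k) :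
    (Ec hc).symm ((c r).1) = (r, false) := by
  apply (Ec hc).injective
  simp [Ec_apply, pos, Equiv.apply_symm_apply]

lemma Ec_symm_snd {c : Fin k → Fin (2 * k) × Fin (2 * k)} (hc : IsOCD k c) (r : Fin k) :
    (Ec hc).symm ((c r).2) = (r, true) := by
  apply (Ec hc).injective
  simp [Ec_apply, pos, Equiv.apply_symm_apply]

lemma chord_fst_ne_snd {c : Fin k → Fin (2 * k) × Fin (2 * k)} (hc : IsOCD k c) (r : Fin k) :
    (c r).1 ≠ (c r).2 := by
  intro h
  have : ((r, false) : Fin k × Bool) = (r, true) := by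
    have := (pos_bijective hc).1 (a₁ := (r, false)) (a₂ := (r, true)) (by simp [pos, h])
    exact this
  simp at this

lemma chord_endpoint_ne {c : Fin k → Fin (2 * k) × Fin (2 * k)} (hc : IsOCD k c)
    {r s : Fin k} (hrs : r ≠ s) (b b' : Bool) :
    pos k c (r, b) ≠ pos k c (s, b') := by
  intro h
  exact hrs (congrArg Prod.fst ((pos_bijective hc).1 h))

/-- index family: chord `r` carries letter `φ r`, orientation flipped when `ε r`. -/
def genIdx (hkn : k ≤ n) {c : Fin k → Fin (2 * k) × Fin (2 * k)} (hc : IsOCD k c)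
    (ε : Fin k → Bool) (φ : Fin k → Fin n) : Fin (2 * k) → Idx n := fun i =>
  let rb := (Ec hc).symm i
  if xor rb.2 (ε rb.1) then Sum.inr (φ rb.1) else Sum.inl (φ rb.1)

lemma genIdx_fst (hkn : k ≤ n) {c : Fin k → Fin (2 * k) × Fin (2 * k)} (hc : IsOCD k c)
    (ε : Fin k → Bool) (φ : Fin k → Fin n) (r : Fin k) :
    genIdx hkn hc ε φ ((c r).1) = if ε r then Sum.inr (φ r) else Sum.inl (φ r) := by
  simp only [genIdx, Ec_symm_fst hc r]
  cases ε r <;> simp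

lemma genIdx_snd (hkn : k ≤ n) {c : Fin k → Fin (2 * k) × Fin (2 * k)} (hc : IsOCD k c)
    (ε : Fin k → Bool) (φ : Fin k → Fin n) (r : Fin k) :
    genIdx hkn hc ε φ ((c r).2) = if ε r then Sum.inl (φ r) else Sum.inr (φ r) := by
  simp only [genIdx, Ec_symm_snd hc r]
  cases ε r <;> simp

/-- the canonical index family of a chord diagram -/
def uIdx (hkn : k ≤ n) {c : Fin k → Fin (2 * k) × Fin (2 * k)} (hc : IsOCD k c) :
    Fin (2 * k) → Idx n :=
  genIdx hkn hc (fun _ => false) (Fin.castLE hkn)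

lemma pos_ne {c : Fin k → Fin (2 * k) × Fin (2 * k)} (hc : IsOCD k c)
    {r s : Fin k} {b b' : Bool} (h : (r, b) ≠ (s, b')) : pos k c (r, b) ≠ pos k c (s, b') :=
  fun he => h ((pos_bijective hc).1 he)

lemma uFam_eq_ev_uIdx (hkn : k ≤ n) {c : Fin k → Fin (2 * k) × Fin (2 * k)} (hc : IsOCD k c) :
    uFam n k hkn c = (ev n) ∘ (uIdx hkn hc) := by
  funext i
  obtain ⟨⟨r₀, b₀⟩, rfl⟩ := (pos_bijective hc).2 i
  rw [uFam, Function.comp_apply]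
  rw [Finset.sum_eq_single r₀]
  · cases b₀
    · have h1 : pos k c (r₀, false) = (c r₀).1 := rfl
      have h2 : pos k c (r₀, false) ≠ (c r₀).2 :=
        pos_ne hc (b' := true) (by simp)
      rw [if_pos h1, if_neg h2]
      have he : (Ec hc).symm (pos k c (r₀, false)) = (r₀, false) := by
        rw [← Ec_apply hc]; exact (Ec hc).symm_apply_apply _
      simp [uIdx, genIdx, he, ev, pvec]
    · have h1 : pos k c (r₀, true) ≠ (c r₀).1 :=
        pos_ne hc (b' := false) (by simp)
      have h2 : pos k c (r₀, true) = (c r₀).2 := rfl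
      rw [if_neg h1, if_pos h2]
      have he : (Ec hc).symm (pos k c (r₀, true)) = (r₀, true) := by
        rw [← Ec_apply hc]; exact (Ec hc).symm_apply_apply _
      simp [uIdx, genIdx, he, ev, qvec]
  · intro r _ hr
    have h1 : pos k c (r₀, b₀) ≠ (c r).1 := pos_ne hc (b' := false) (by simp [Ne.symm hr])
    have h2 : pos k c (r₀, b₀) ≠ (c r).2 := pos_ne hc (b' := true) (by simp [Ne.symm hr])
    rw [if_neg h1, if_neg h2, add_zero]
  · intro h
    exact absurd (Finset.mem_univ r₀) h

end SpAux
namespace SpAux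
variable {n k : ℕ}

/-- the product of chord factors away from chord `r₀` -/
def Rest (n k : ℕ) (c : Fin k → Fin (2 * k) × Fin (2 * k)) (x : Fin (2 * k) → Vs n)
    (r₀ : Fin k) : ℂ :=
  ∏ r ∈ Finset.univ.erase r₀, symp n (x (c r).1) (x (c r).2)

lemma beta_update_fst [DecidableEq (Fin (2 * k))] {c : Fin k → Fin (2 * k) × Fin (2 * k)} (hc : IsOCD k c)
    (x : Fin (2 * k) → Vs n) (r₀ : Fin k) (y : Vs n) :
    betaFun n k c (Function.update x ((c r₀).1) y) =
      symp n y (x ((c r₀).2)) * Rest n k c x r₀ := by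
  rw [betaFun, ← Finset.mul_prod_erase Finset.univ _ (Finset.mem_univ r₀), Rest]
  congr 1
  · rw [Function.update_self, Function.update_of_ne (Ne.symm (chord_fst_ne_snd hc r₀))]
  · apply Finset.prod_congr rfl
    intro r hr
    have hr₀ : r ≠ r₀ := (Finset.mem_erase.1 hr).1
    have ha : (c r).1 ≠ (c r₀).1 := pos_ne hc (b := false) (b' := false) (by simp [hr₀])
    have hb : (c r).2 ≠ (c r₀).1 := pos_ne hc (b := true) (b' := false) (by simp [hr₀])
    rw [Function.update_of_ne ha, Function.update_of_ne hb]

lemma beta_update_snd [DecidableEq (Fin (2 * k))] {c : Fin k → Fin (2 * k) × Fin (2 * k)} (hc : IsOCD k c)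
    (x : Fin (2 * k) → Vs n) (r₀ : Fin k) (y : Vs n) :
    betaFun n k c (Function.update x ((c r₀).2) y) =
      symp n (x ((c r₀).1)) y * Rest n k c x r₀ := by
  rw [betaFun, ← Finset.mul_prod_erase Finset.univ _ (Finset.mem_univ r₀), Rest]
  congr 1
  · rw [Function.update_self, Function.update_of_ne (chord_fst_ne_snd hc r₀)]
  · apply Finset.prod_congr rfl
    intro r hr
    have hr₀ : r ≠ r₀ := (Finset.mem_erase.1 hr).1
    have ha : (c r).1 ≠ (c r₀).2 := pos_ne hc (b := false) (b' := true) (by simp [hr₀])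
    have hb : (c r).2 ≠ (c r₀).2 := pos_ne hc (b := true) (b' := true) (by simp [hr₀])
    rw [Function.update_of_ne ha, Function.update_of_ne hb]

/-- `betaFun` as a multilinear map. -/
def betaML {c : Fin k → Fin (2 * k) × Fin (2 * k)} (hc : IsOCD k c) :
    MultilinearMap ℂ (fun _ : Fin (2 * k) => Vs n) ℂ where
  toFun := betaFun n k c
  map_update_add' x i y z := by
    obtain ⟨⟨r₀, b₀⟩, rfl⟩ := (pos_bijective hc).2 i
    cases b₀
    · have hp : pos k c (r₀, false) = (c r₀).1 := rfl
      simp only [hp]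
      rw [beta_update_fst hc, beta_update_fst hc, beta_update_fst hc, symp_add_left]
      ring
    · have hp : pos k c (r₀, true) = (c r₀).2 := rfl
      simp only [hp]
      rw [beta_update_snd hc, beta_update_snd hc, beta_update_snd hc, symp_add_right]
      ring
  map_update_smul' x i t y := by
    obtain ⟨⟨r₀, b₀⟩, rfl⟩ := (pos_bijective hc).2 i
    cases b₀
    · have hp : pos k c (r₀, false) = (c r₀).1 := rfl
      simp only [hp]
      rw [beta_update_fst hc, beta_update_fst hc, symp_smul_left]
      simp only [smul_eq_mul]; ring
    · have hp : pos k c (r₀, true) = (c r₀).2 := rfl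
      simp only [hp]
      rw [beta_update_snd hc, beta_update_snd hc, symp_smul_right]
      simp only [smul_eq_mul]; ring

/-- expansion of a multilinear functional over the standard basis -/
lemma ml_expand (T : MultilinearMap ℂ (fun _ : Fin (2 * k) => Vs n) ℂ)
    (x : Fin (2 * k) → Vs n) :
    T x = ∑ a : Fin (2 * k) → Idx n, (∏ i, x i (a i)) * T ((ev n) ∘ a) := by
  have hx : x = fun i => ∑ b : Idx n, x i b • ev n b := by
    funext i cdx
    simp [ev, Pi.single_apply, Finset.sum_apply]
  conv_lhs => rw [hx]
  rw [MultilinearMap.map_sum]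
  apply Finset.sum_congr rfl
  intro a _
  rw [MultilinearMap.map_smul_univ]
  simp [Function.comp_def]

/-- the master relation for `betaFun` -/
lemma MR_beta {c : Fin k → Fin (2 * k) × Fin (2 * k)} (hc : IsOCD k c) :
    MR n k (fun a => betaFun n k c ((ev n) ∘ a)) := by
  intro v w a
  simp only
  have hre : ∀ (i : Fin (2 * k)) (b : Idx n),
      (ev n) ∘ (Function.update a i b) = Function.update ((ev n) ∘ a) i (ev n b) :=
    fun i b => ev_update a i b
  rw [← Equiv.sum_comp (Ec hc)]
  rw [Fintype.sum_prod_type]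
  apply Finset.sum_eq_zero
  intro r _
  have h1 : Ec hc (r, false) = (c r).1 := rfl
  have h2 : Ec hc (r, true) = (c r).2 := rfl
  rw [Fintype.sum_bool]
  rw [h1, h2, hre, hre, hre, hre,
    beta_update_fst hc, beta_update_fst hc, beta_update_snd hc, beta_update_snd hc]
  have e1 : ∀ b : Idx n, Dp n b (a ((c r).1)) = symp n (ev n b) (((ev n) ∘ a) ((c r).1)) := by
    intro b; rw [Function.comp_apply, symp_ev_ev]
  have e2 : ∀ b : Idx n, Dp n b (a ((c r).2)) = symp n (ev n b) (((ev n) ∘ a) ((c r).2)) := by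
    intro b; rw [Function.comp_apply, symp_ev_ev]
  rw [e1, e1, e2, e2]
  have a1 : symp n (((ev n) ∘ a) ((c r).1)) (ev n w) = - symp n (ev n w) (((ev n) ∘ a) ((c r).1)) := by
    rw [symp_antisymm]
  have a2 : symp n (((ev n) ∘ a) ((c r).1)) (ev n v) = - symp n (ev n v) (((ev n) ∘ a) ((c r).1)) := by
    rw [symp_antisymm]
  rw [a1, a2]
  ring

end SpAux
namespace SpAux
variable {n k : ℕ}

lemma uIdx_fst (hkn : k ≤ n) {d : Fin k → Fin (2 * k) × Fin (2 * k)} (hd : IsOCD k d)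
    (s : Fin k) : uIdx hkn hd ((d s).1) = Sum.inl (Fin.castLE hkn s) := by
  rw [uIdx, genIdx_fst]; simp

lemma uIdx_snd (hkn : k ≤ n) {d : Fin k → Fin (2 * k) × Fin (2 * k)} (hd : IsOCD k d)
    (s : Fin k) : uIdx hkn hd ((d s).2) = Sum.inr (Fin.castLE hkn s) := by
  rw [uIdx, genIdx_snd]; simp

/-- a strictly monotone self-map of `Fin k` which is surjective-ish via injectivity -/
lemma strictMono_fin_id {σ : Fin k → Fin k} (h : StrictMono σ) : ∀ r, σ r = r := by
  have hsurj : Function.Surjective σ :=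
    Finite.surjective_of_injective h.injective
  let e : Fin k ≃o Fin k := StrictMono.orderIsoOfSurjective σ h hsurj
  haveI wf : WellFoundedLT (Fin k) := inferInstance
  intro r
  have hge : r ≤ σ r := @StrictMono.le_apply (Fin k) _ wf σ h r
  refine le_antisymm ?_ hge
  have h1 : r ≤ e.symm r := @StrictMono.le_apply (Fin k) _ wf _ (OrderIso.strictMono e.symm) r
  have h2 : σ (e.symm r) = r := by
    have : e (e.symm r) = r := e.apply_symm_apply r
    exact this
  calc σ r ≤ σ (e.symm r) := h.monotone h1
    _ = r := h2

/-- evaluation of `β_c` on `u(d)`: the identity matrix. -/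
lemma beta_eval (hkn : k ≤ n) {c d : Fin k → Fin (2 * k) × Fin (2 * k)}
    (hc : IsCDRep k c) (hd : IsCDRep k d) :
    betaFun n k c (uFam n k hkn d) = if c = d then 1 else 0 := by
  rw [betaFun, uFam_eq_ev_uIdx hkn hd.1]
  by_cases hcd : c = d
  · subst hcd
    rw [if_pos rfl]
    apply Finset.prod_eq_one
    intro r _
    rw [Function.comp_apply, Function.comp_apply, symp_ev_ev,
      uIdx_fst hkn hd.1, uIdx_snd hkn hd.1]
    simp [Dp]
  · rw [if_neg hcd]
    by_contra hne
    have hall : ∀ r : Fin k, symp n ((ev n ∘ uIdx hkn hd.1) ((c r).1))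
        ((ev n ∘ uIdx hkn hd.1) ((c r).2)) ≠ 0 := by
      intro r hzero
      exact hne (Finset.prod_eq_zero (Finset.mem_univ r) hzero)
    -- for each r, produce s with c r = d s
    have key : ∀ r : Fin k, ∃ s : Fin k, c r = d s := by
      intro r
      have h := hall r
      rw [Function.comp_apply, Function.comp_apply, symp_ev_ev] at h
      obtain ⟨⟨s₁, b₁⟩, h1⟩ := (pos_bijective hd.1).2 ((c r).1)
      obtain ⟨⟨s₂, b₂⟩, h2⟩ := (pos_bijective hd.1).2 ((c r).2)
      rcases Dp_ne_zero h with ⟨m, hm1, hm2⟩ | ⟨m, hm1, hm2⟩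
      · -- (c r).1 ↦ inl m, (c r).2 ↦ inr m
        cases b₁
        · cases b₂
          · -- both false : second would be inl, contradiction with hm2
            exfalso
            have : uIdx hkn hd.1 ((c r).2) = Sum.inl (Fin.castLE hkn s₂) := by
              rw [← h2]; exact uIdx_fst hkn hd.1 s₂
            rw [hm2] at this; exact Sum.inr_ne_inl this
          · -- b₁ = false, b₂ = true
            have e1 : uIdx hkn hd.1 ((c r).1) = Sum.inl (Fin.castLE hkn s₁) := by
              rw [← h1]; exact uIdx_fst hkn hd.1 s₁
            have e2 : uIdx hkn hd.1 ((c r).2) = Sum.inr (Fin.castLE hkn s₂) := by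
              rw [← h2]; exact uIdx_snd hkn hd.1 s₂
            rw [hm1] at e1; rw [hm2] at e2
            have hs : s₁ = s₂ := by
              have hm : Fin.castLE hkn s₁ = Fin.castLE hkn s₂ := by
                rw [← Sum.inl.inj e1, ← Sum.inr.inj e2]
              exact Fin.castLE_injective hkn hm
            subst hs
            exact ⟨s₁, Prod.ext (by rw [← h1]; rfl) (by rw [← h2]; rfl)⟩
        · -- b₁ = true : first would be inr, contradiction with hm1
          exfalso
          have : uIdx hkn hd.1 ((c r).1) = Sum.inr (Fin.castLE hkn s₁) := by
            rw [← h1]; exact uIdx_snd hkn hd.1 s₁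
          rw [hm1] at this; exact Sum.inl_ne_inr this
      · -- (c r).1 ↦ inr m : means (c r).1 = (d s₁).2, (c r).2 = (d s₂).1, order contradiction
        exfalso
        cases b₁
        · have : uIdx hkn hd.1 ((c r).1) = Sum.inl (Fin.castLE hkn s₁) := by
            rw [← h1]; exact uIdx_fst hkn hd.1 s₁
          rw [hm1] at this; exact Sum.inr_ne_inl this
        · cases b₂
          · have e1 : uIdx hkn hd.1 ((c r).1) = Sum.inr (Fin.castLE hkn s₁) := by
              rw [← h1]; exact uIdx_snd hkn hd.1 s₁
            have e2 : uIdx hkn hd.1 ((c r).2) = Sum.inl (Fin.castLE hkn s₂) := by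
              rw [← h2]; exact uIdx_fst hkn hd.1 s₂
            rw [hm1] at e1; rw [hm2] at e2
            have hs : s₁ = s₂ := Fin.castLE_injective hkn
              (by rw [← Sum.inr.inj e1, ← Sum.inl.inj e2])
            subst hs
            -- (c r).1 = (d s₁).2 and (c r).2 = (d s₁).1 : contradicts (c r).1 < (c r).2
            have hlt := hc.2.1 r
            have ha : (c r).1 = (d s₁).2 := by rw [← h1]; rfl
            have hb : (c r).2 = (d s₁).1 := by rw [← h2]; rfl
            rw [ha, hb] at hlt
            exact absurd (hd.2.1 s₁) (not_lt.2 (le_of_lt hlt))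
          · have : uIdx hkn hd.1 ((c r).2) = Sum.inr (Fin.castLE hkn s₂) := by
              rw [← h2]; exact uIdx_snd hkn hd.1 s₂
            rw [hm2] at this; exact Sum.inl_ne_inr this
    choose σ hσ using key
    have hmono : StrictMono σ := by
      intro r r' hrr
      have h1 : (c r).1 < (c r').1 := hc.2.2 r r' hrr
      rw [hσ r, hσ r'] at h1
      by_contra hle
      rcases lt_or_eq_of_le (not_lt.1 hle) with hlt | heq
      · exact absurd (hd.2.2 _ _ hlt) (not_lt.2 (le_of_lt h1))
      · rw [heq] at h1; exact lt_irrefl _ h1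
    exact hcd (funext fun r => by rw [hσ r, strictMono_fin_id hmono r])

end SpAux
namespace SpAux
variable {n k : ℕ}

/-- number of slots carrying a given basis label -/
def cnt (a : Fin (2 * k) → Idx n) (b : Idx n) : ℕ :=
  (Finset.univ.filter (fun i => a i = b)).card

lemma sum_one {g : Fin (2 * k) → ℂ} (s : Fin (2 * k)) (h : ∀ i, i ≠ s → g i = 0) :
    ∑ i, g i = g s :=
  Finset.sum_eq_single s (fun i _ hi => h i hi) (fun hs => absurd (Finset.mem_univ s) hs)

lemma sum_two {g : Fin (2 * k) → ℂ} (s t : Fin (2 * k)) (hst : s ≠ t)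
    (h : ∀ i, i ≠ s → i ≠ t → g i = 0) : ∑ i, g i = g s + g t := by
  rw [← Finset.sum_pair hst]
  refine (Finset.sum_subset (Finset.subset_univ _) ?_).symm
  intro i _ hi
  simp only [Finset.mem_insert, Finset.mem_singleton, not_or] at hi
  exact h i hi.1 hi.2

lemma sum_three {g : Fin (2 * k) → ℂ} (s t u : Fin (2 * k)) (hst : s ≠ t) (hsu : s ≠ u)
    (htu : t ≠ u) (h : ∀ i, i ≠ s → i ≠ t → i ≠ u → g i = 0) :
    ∑ i, g i = g s + g t + g u := by
  have : ∑ i ∈ ({s, t, u} : Finset (Fin (2 * k))), g i = g s + g t + g u := by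
    rw [Finset.sum_insert (by simp [hst, hsu]), Finset.sum_pair htu, add_assoc]
  rw [← this]
  refine (Finset.sum_subset (Finset.subset_univ _) ?_).symm
  intro i _ hi
  simp only [Finset.mem_insert, Finset.mem_singleton, not_or] at hi
  exact h i hi.1 hi.2.1 hi.2.2

lemma update_self_of_eq {a : Fin (2 * k) → Idx n} {i : Fin (2 * k)} {b : Idx n}
    (h : a i = b) : Function.update a i b = a := by
  rw [← h, Function.update_eq_self]

/-- Phase 1: an invariant functional vanishes on unbalanced indices. -/
lemma F_unbalanced {F : (Fin (2 * k) → Idx n) → ℂ} (hMR : MR n k F)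
    (a : Fin (2 * k) → Idx n) (ℓ : Fin n)
    (hne : cnt a (Sum.inl ℓ) ≠ cnt a (Sum.inr ℓ)) : F a = 0 := by
  have h := hMR (Sum.inl ℓ) (Sum.inr ℓ) a
  have hterm : ∀ i : Fin (2 * k),
      Dp n (Sum.inl ℓ) (a i) * F (Function.update a i (Sum.inr ℓ)) +
      Dp n (Sum.inr ℓ) (a i) * F (Function.update a i (Sum.inl ℓ))
      = (if a i = Sum.inr ℓ then F a else 0) + (if a i = Sum.inl ℓ then -(F a) else 0) := by
    intro i
    rcases hai : a i with m | m
    · by_cases hm : m = ℓ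
      · subst hm
        rw [update_self_of_eq hai]
        simp [Dp, hai]
      · have hml : ¬ ℓ = m := fun h' => hm h'.symm
        simp [Dp, hm, hai, hml]
    · by_cases hm : m = ℓ
      · subst hm
        rw [update_self_of_eq hai]
        simp [Dp, hai]
      · have hml : ¬ ℓ = m := fun h' => hm h'.symm
        simp [Dp, hm, hai, hml]
  rw [Finset.sum_congr rfl (fun i _ => hterm i), Finset.sum_add_distrib,
    ← Finset.sum_filter, ← Finset.sum_filter] at h
  simp only [Finset.sum_const, nsmul_eq_mul] at h
  have : ((cnt a (Sum.inr ℓ) : ℂ) - (cnt a (Sum.inl ℓ) : ℂ)) * F a = 0 := by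
    rw [sub_mul]; rw [← cnt, ← cnt] at h; linear_combination h
  rcases mul_eq_zero.1 this with h0 | h0
  · exfalso
    apply hne
    have := sub_eq_zero.1 h0
    exact_mod_cast this.symm
  · exact h0

end SpAux
namespace SpAux
variable {n k : ℕ}

lemma Dp_inl_eq (ℓ : Fin n) (b : Idx n) :
    Dp n (Sum.inl ℓ) b = if b = Sum.inr ℓ then 1 else 0 := by
  rcases b with m | m <;> simp [Dp] <;> by_cases h : ℓ = m <;> simp [h, eq_comm]

lemma Dp_inr_eq (ℓ : Fin n) (b : Idx n) :
    Dp n (Sum.inr ℓ) b = if b = Sum.inl ℓ then -1 else 0 := by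
  rcases b with m | m <;> simp [Dp] <;> by_cases h : ℓ = m <;> simp [h, eq_comm]

/-- C1: flipping the orientation of a chord negates the value. -/
lemma F_flip {F : (Fin (2 * k) → Idx n) → ℂ} (hMR : MR n k F)
    (a : Fin (2 * k) → Idx n) (s t : Fin (2 * k)) (ℓ : Fin n)
    (hs : a s = Sum.inl ℓ) (ht : a t = Sum.inr ℓ)
    (hrest : ∀ i, i ≠ s → i ≠ t → a i ≠ Sum.inl ℓ ∧ a i ≠ Sum.inr ℓ) :
    F a = - F (Function.update (Function.update a s (Sum.inr ℓ)) t (Sum.inl ℓ)) := by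
  have hst : s ≠ t := by
    intro he
    rw [he, ht] at hs
    exact Sum.inr_ne_inl hs
  set x := Function.update a s (Sum.inr ℓ) with hx
  have h := hMR (Sum.inl ℓ) (Sum.inl ℓ) x
  have hsum : ∑ i : Fin (2 * k),
      (Dp n (Sum.inl ℓ) (x i) * F (Function.update x i (Sum.inl ℓ)) +
       Dp n (Sum.inl ℓ) (x i) * F (Function.update x i (Sum.inl ℓ))) =
      (Dp n (Sum.inl ℓ) (x s) * F (Function.update x s (Sum.inl ℓ)) +
       Dp n (Sum.inl ℓ) (x s) * F (Function.update x s (Sum.inl ℓ))) +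
      (Dp n (Sum.inl ℓ) (x t) * F (Function.update x t (Sum.inl ℓ)) +
       Dp n (Sum.inl ℓ) (x t) * F (Function.update x t (Sum.inl ℓ))) := by
    apply sum_two s t hst
    intro i his hit
    have hxi : x i = a i := Function.update_of_ne his _ _
    rw [hxi, Dp_inl_eq, if_neg (hrest i his hit).2]
    ring
  rw [hsum] at h
  have hxs : x s = Sum.inr ℓ := Function.update_self _ _ _
  have hxt : x t = Sum.inr ℓ := by
    rw [hx, Function.update_of_ne (Ne.symm hst)]; exact ht
  have hfs : Function.update x s (Sum.inl ℓ) = a := by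
    rw [hx, Function.update_idem]; exact update_self_of_eq hs
  rw [hxs, hxt, hfs, Dp_inl_eq, if_pos rfl] at h
  linear_combination h / 2

/-- C2': expanding one repeated-letter pair into a fresh letter. -/
lemma F_expand {F : (Fin (2 * k) → Idx n) → ℂ} (hMR : MR n k F)
    (a : Fin (2 * k) → Idx n) (t : Fin (2 * k)) (ℓ j : Fin n)
    (ht : a t = Sum.inr ℓ)
    (hfresh : ∀ i, a i ≠ Sum.inl j ∧ a i ≠ Sum.inr j) :
    F a = ∑ i ∈ Finset.univ.filter (fun i => a i = Sum.inl ℓ),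
      F (Function.update (Function.update a t (Sum.inr j)) i (Sum.inl j)) := by
  set x := Function.update a t (Sum.inr j) with hx
  have h := hMR (Sum.inl j) (Sum.inr ℓ) x
  have hterm : ∀ i : Fin (2 * k),
      Dp n (Sum.inl j) (x i) * F (Function.update x i (Sum.inr ℓ)) +
      Dp n (Sum.inr ℓ) (x i) * F (Function.update x i (Sum.inl j))
      = (if i = t then F a else 0) +
        (if a i = Sum.inl ℓ then -(F (Function.update x i (Sum.inl j))) else 0) := by
    intro i
    by_cases hit : i = t
    · subst hit
      have hxi : x i = Sum.inr j := Function.update_self _ _ _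
      have hback : Function.update x i (Sum.inr ℓ) = a := by
        rw [hx, Function.update_idem]; exact update_self_of_eq ht
      rw [hxi, hback, Dp_inl_eq, Dp_inr_eq]
      simp [ht]
    · have hxi : x i = a i := Function.update_of_ne hit _ _
      rw [hxi, Dp_inl_eq, Dp_inr_eq, if_neg (hfresh i).2, if_neg hit]
      by_cases hℓ : a i = Sum.inl ℓ
      · rw [if_pos hℓ, if_pos hℓ]; ring
      · rw [if_neg hℓ, if_neg hℓ]; ring
  rw [Finset.sum_congr rfl (fun i _ => hterm i), Finset.sum_add_distrib] at h
  rw [Finset.sum_ite_eq' Finset.univ t (fun _ => F a), if_pos (Finset.mem_univ t),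
    ← Finset.sum_filter] at h
  rw [Finset.sum_neg_distrib] at h
  linear_combination h

end SpAux
namespace SpAux
variable {n k : ℕ}

lemma ne_of_values {a : Fin (2 * k) → Idx n} {p q : Fin (2 * k)} {b b' : Idx n}
    (hp : a p = b) (hq : a q = b') (hbb : b ≠ b') : p ≠ q := by
  intro he
  exact hbb (by rw [← hp, he, hq])

/-- C3: swapping the letters of two chords preserves the value. -/
lemma F_transpose {F : (Fin (2 * k) → Idx n) → ℂ} (hMR : MR n k F)
    (a : Fin (2 * k) → Idx n) (u1 v1 u2 v2 : Fin (2 * k)) (i j : Fin n) (hij : i ≠ j)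
    (h1 : a u1 = Sum.inl i) (h2 : a v1 = Sum.inr i)
    (h3 : a u2 = Sum.inl j) (h4 : a v2 = Sum.inr j)
    (hrest : ∀ t, t ≠ u1 → t ≠ v1 → t ≠ u2 → t ≠ v2 →
      a t ≠ Sum.inl i ∧ a t ≠ Sum.inr i ∧ a t ≠ Sum.inl j ∧ a t ≠ Sum.inr j) :
    F a = F (Function.update (Function.update (Function.update (Function.update a
      u1 (Sum.inl j)) v1 (Sum.inr j)) u2 (Sum.inl i)) v2 (Sum.inr i)) := by
  have inlij : (Sum.inl i : Idx n) ≠ Sum.inl j := fun h => hij (Sum.inl.inj h)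
  have inrij : (Sum.inr i : Idx n) ≠ Sum.inr j := fun h => hij (Sum.inr.inj h)
  have d12 : u1 ≠ v1 := ne_of_values h1 h2 (by simp)
  have d13 : u1 ≠ u2 := ne_of_values h1 h3 inlij
  have d14 : u1 ≠ v2 := ne_of_values h1 h4 (by simp)
  have d23 : v1 ≠ u2 := ne_of_values h2 h3 (by simp)
  have d24 : v1 ≠ v2 := ne_of_values h2 h4 inrij
  have d34 : u2 ≠ v2 := ne_of_values h3 h4 (by simp)
  set z := Function.update a v1 (Sum.inr j) with hz
  set m := Function.update z u1 (Sum.inl j) with hm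
  set x' := Function.update m v2 (Sum.inr i) with hx'
  -- values of z
  have zv1 : z v1 = Sum.inr j := Function.update_self _ _ _
  have zv2 : z v2 = Sum.inr j := by rw [hz, Function.update_of_ne (Ne.symm d24)]; exact h4
  have zu1 : z u1 = Sum.inl i := by rw [hz, Function.update_of_ne d12]; exact h1
  have zu2 : z u2 = Sum.inl j := by rw [hz, Function.update_of_ne (Ne.symm d23)]; exact h3
  -- values of x'
  have mv2 : m v2 = Sum.inr j := by rw [hm, Function.update_of_ne (Ne.symm d14)]; exact zv2
  have xv2 : x' v2 = Sum.inr i := Function.update_self _ _ _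
  have xu1 : x' u1 = Sum.inl j := by
    rw [hx', Function.update_of_ne d14, hm]; exact Function.update_self _ _ _
  have xu2 : x' u2 = Sum.inl j := by
    rw [hx', Function.update_of_ne d34, hm, Function.update_of_ne (Ne.symm d13)]; exact zu2
  have xv1 : x' v1 = Sum.inr j := by
    rw [hx', Function.update_of_ne d24, hm, Function.update_of_ne (Ne.symm d12)]; exact zv1
  -- argument identities
  have e1 : Function.update z v1 (Sum.inr i) = a := by
    rw [hz, Function.update_idem]; exact update_self_of_eq h2
  have e3 : Function.update x' v2 (Sum.inr j) = m := by
    rw [hx', Function.update_idem]; exact update_self_of_eq mv2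
  have e4 : Function.update x' u1 (Sum.inl i) = Function.update z v2 (Sum.inr i) := by
    rw [hx', Function.update_comm (Ne.symm d14), hm, Function.update_idem]
    rw [update_self_of_eq zu1]
  have e5 : Function.update x' u2 (Sum.inl i) =
      Function.update (Function.update (Function.update (Function.update a
        u1 (Sum.inl j)) v1 (Sum.inr j)) u2 (Sum.inl i)) v2 (Sum.inr i) := by
    rw [hx', Function.update_comm (Ne.symm d34), hm, hz, Function.update_comm (Ne.symm d12)]
  -- relation II
  have hII := hMR (Sum.inl j) (Sum.inr i) z
  have hsumII : ∑ t : Fin (2 * k),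
      (Dp n (Sum.inl j) (z t) * F (Function.update z t (Sum.inr i)) +
       Dp n (Sum.inr i) (z t) * F (Function.update z t (Sum.inl j)))
      = (Dp n (Sum.inl j) (z v1) * F (Function.update z v1 (Sum.inr i)) +
       Dp n (Sum.inr i) (z v1) * F (Function.update z v1 (Sum.inl j)))
      + (Dp n (Sum.inl j) (z v2) * F (Function.update z v2 (Sum.inr i)) +
       Dp n (Sum.inr i) (z v2) * F (Function.update z v2 (Sum.inl j)))
      + (Dp n (Sum.inl j) (z u1) * F (Function.update z u1 (Sum.inr i)) +
       Dp n (Sum.inr i) (z u1) * F (Function.update z u1 (Sum.inl j))) := by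
    apply sum_three v1 v2 u1 d24 (Ne.symm d12) (Ne.symm d14)
    intro t a1 a2 a3
    have hzt : z t = a t := Function.update_of_ne a1 _ _
    by_cases hu2 : t = u2
    · subst hu2
      have g1 : (Sum.inl j : Idx n) ≠ Sum.inr j := by simp
      have g2 : (Sum.inl j : Idx n) ≠ Sum.inl i := Ne.symm inlij
      rw [zu2, Dp_inl_eq, Dp_inr_eq, if_neg g1, if_neg g2]
      ring
    · obtain ⟨f1, f2, f3, f4⟩ := hrest t a3 a1 hu2 a2
      rw [hzt, Dp_inl_eq, Dp_inr_eq, if_neg f4, if_neg f1]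
      ring
  rw [hsumII, zv1, zv2, zu1, e1] at hII
  have t1 : (if (Sum.inr j : Idx n) = Sum.inr j then (1:ℂ) else 0) = 1 := if_pos rfl
  have t2 : (if (Sum.inr j : Idx n) = Sum.inl i then (-1:ℂ) else 0) = 0 := if_neg (by simp)
  have t3 : (if (Sum.inl i : Idx n) = Sum.inr j then (1:ℂ) else 0) = 0 := if_neg (by simp)
  have t4 : (if (Sum.inl i : Idx n) = Sum.inl i then (-1:ℂ) else 0) = -1 := if_pos rfl
  simp only [Dp_inl_eq, Dp_inr_eq] at hII
  simp only [t1, t2, t3, t4, if_true] at hII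
  rw [← hm] at hII
  -- relation I
  have hI := hMR (Sum.inl i) (Sum.inr j) x'
  have hsumI : ∑ t : Fin (2 * k),
      (Dp n (Sum.inl i) (x' t) * F (Function.update x' t (Sum.inr j)) +
       Dp n (Sum.inr j) (x' t) * F (Function.update x' t (Sum.inl i)))
      = (Dp n (Sum.inl i) (x' v2) * F (Function.update x' v2 (Sum.inr j)) +
       Dp n (Sum.inr j) (x' v2) * F (Function.update x' v2 (Sum.inl i)))
      + (Dp n (Sum.inl i) (x' u1) * F (Function.update x' u1 (Sum.inr j)) +
       Dp n (Sum.inr j) (x' u1) * F (Function.update x' u1 (Sum.inl i)))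
      + (Dp n (Sum.inl i) (x' u2) * F (Function.update x' u2 (Sum.inr j)) +
       Dp n (Sum.inr j) (x' u2) * F (Function.update x' u2 (Sum.inl i))) := by
    apply sum_three v2 u1 u2 (Ne.symm d14) (Ne.symm d34) d13
    intro t a1 a2 a3
    by_cases hv1 : t = v1
    · subst hv1
      have g1 : (Sum.inr j : Idx n) ≠ Sum.inr i := Ne.symm inrij
      have g2 : (Sum.inr j : Idx n) ≠ Sum.inl j := by simp
      rw [xv1, Dp_inl_eq, Dp_inr_eq, if_neg g1, if_neg g2]
      ring
    · have hxt : x' t = a t := by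
        rw [hx', Function.update_of_ne a1, hm, Function.update_of_ne a2, hz,
          Function.update_of_ne hv1]
      obtain ⟨f1, f2, f3, f4⟩ := hrest t a2 hv1 a3 a1
      rw [hxt, Dp_inl_eq, Dp_inr_eq, if_neg f2, if_neg f3]
      ring
  rw [hsumI, xv2, xu1, xu2, e3, e4, e5] at hI
  have s1 : (if (Sum.inr i : Idx n) = Sum.inr i then (1:ℂ) else 0) = 1 := if_pos rfl
  have s2 : (if (Sum.inr i : Idx n) = Sum.inl j then (-1:ℂ) else 0) = 0 := if_neg (by simp)
  have s3 : (if (Sum.inl j : Idx n) = Sum.inr i then (1:ℂ) else 0) = 0 := if_neg (by simp)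
  have s4 : (if (Sum.inl j : Idx n) = Sum.inl j then (-1:ℂ) else 0) = -1 := if_pos rfl
  simp only [Dp_inl_eq, Dp_inr_eq] at hI
  simp only [s1, s2, s3, s4, if_true] at hI
  linear_combination hII + hI

end SpAux
namespace SpAux
variable {n k : ℕ}

def flipIdx : Idx n → Idx n := Sum.elim (fun i => Sum.inr i) (fun i => Sum.inl i)

lemma flipIdx_flipIdx (b : Idx n) : flipIdx (flipIdx b) = b := by
  rcases b with m | m <;> rfl

lemma flipIdx_ne (b : Idx n) : flipIdx b ≠ b := by
  rcases b with m | m <;> simp [flipIdx]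

lemma cnt_pos' (a : Fin (2 * k) → Idx n) (i : Fin (2 * k)) : 1 ≤ cnt a (a i) := by
  rw [cnt]
  exact Finset.card_pos.mpr ⟨i, by simp⟩

/-- every multiplicity-free balanced index is `genIdx` of a canonical chord diagram -/
lemma mf_structure (hkn : k ≤ n) (a : Fin (2 * k) → Idx n)
    (hbal : ∀ ℓ : Fin n, cnt a (Sum.inl ℓ) = cnt a (Sum.inr ℓ))
    (hmf : ∀ b : Idx n, cnt a b ≤ 1) :
    ∃ (d : Fin k → Fin (2 * k) × Fin (2 * k)) (hd : IsCDRep k d)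
      (ε : Fin k → Bool) (φ : Fin k → Fin n),
      Function.Injective φ ∧ a = genIdx hkn hd.1 ε φ := by
  classical
  have hflip1 : ∀ i, cnt a (flipIdx (a i)) = 1 := by
    intro i
    have h1 : cnt a (a i) = 1 := le_antisymm (hmf _) (cnt_pos' a i)
    rcases hai : a i with m | m
    · rw [hai] at h1; have hb := hbal m; rw [hb] at h1
      simpa [flipIdx, hai] using h1
    · rw [hai] at h1; have hb := hbal m; rw [← hb] at h1
      simpa [flipIdx, hai] using h1
  have hπe : ∀ i, ∃! i' : Fin (2 * k), a i' = flipIdx (a i) := by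
    intro i
    obtain ⟨b, hb⟩ := Finset.card_eq_one.1 (hflip1 i)
    refine ⟨b, ?_, ?_⟩
    · have : b ∈ Finset.univ.filter (fun i' => a i' = flipIdx (a i)) := by
        rw [hb]; exact Finset.mem_singleton_self b
      exact (Finset.mem_filter.1 this).2
    · intro y hy
      have : y ∈ Finset.univ.filter (fun i' => a i' = flipIdx (a i)) :=
        Finset.mem_filter.2 ⟨Finset.mem_univ y, hy⟩
      rw [hb] at this
      exact Finset.mem_singleton.1 this
  choose π hπ hπu using hπe
  have hππ : ∀ i, π (π i) = i := by
    intro i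
    have h1 : a i = flipIdx (a (π i)) := by rw [hπ i, flipIdx_flipIdx]
    exact (hπu (π i) i h1).symm
  have hπne : ∀ i, π i ≠ i := fun i he => flipIdx_ne (a i) (by rw [← hπ i, he])
  set S : Finset (Fin (2 * k)) := Finset.univ.filter (fun i => i < π i) with hS
  have hmemS : ∀ i, i ∈ S ↔ i < π i := by
    intro i; rw [hS, Finset.mem_filter]; simp
  have hcompl : ∀ i, i ∉ S → π i ∈ S := by
    intro i hi
    rw [hmemS] at hi
    rw [hmemS, hππ]
    rcases lt_trichotomy (π i) i with h | h | h
    · exact h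
    · exact absurd h (hπne i)
    · exact absurd h hi
  have hScard : S.card = k := by
    have hbij : S.card = Sᶜ.card := by
      apply Finset.card_bij (fun i _ => π i)
      · intro i hi
        rw [Finset.mem_compl, hmemS, hππ]
        rw [hmemS] at hi
        exact not_lt.2 (le_of_lt hi)
      · intro i _ j _ he
        rw [← hππ i, he, hππ]
      · intro j hj
        refine ⟨π j, ?_, hππ j⟩
        exact hcompl j (Finset.mem_compl.1 hj)
    have htot := Finset.card_add_card_compl S
    rw [← hbij] at htot
    simp only [Fintype.card_fin] at htot
    omega
  set ι := S.orderIsoOfFin hScard with hι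
  set d : Fin k → Fin (2 * k) × Fin (2 * k) := fun r => ((ι r : Fin (2 * k)), π (ι r)) with hdd
  have hmem2 : ∀ r, ((ι r : Fin (2 * k))) ∈ S := fun r => (ι r).2
  have hOCD : IsOCD k d := by
    intro i
    by_cases hiS : i ∈ S
    · obtain ⟨r, hr⟩ := ι.surjective ⟨i, hiS⟩
      exact ⟨(r, false), by simp [pos, hdd, hr]⟩
    · obtain ⟨r, hr⟩ := ι.surjective ⟨π i, hcompl i hiS⟩
      refine ⟨(r, true), ?_⟩
      have : (ι r : Fin (2 * k)) = π i := by rw [hr]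
      simp [pos, hdd, this, hππ]
  have hd : IsCDRep k d := by
    refine ⟨hOCD, ?_, ?_⟩
    · intro r
      exact (hmemS _).1 (hmem2 r)
    · intro r s hrs
      exact Subtype.coe_lt_coe.2 (ι.strictMono hrs)
  refine ⟨d, hd, fun r => (a (ι r)).isRight, fun r => Sum.elim id id (a (ι r)), ?_, ?_⟩
  · -- injectivity of letters
    intro r r' he
    simp only at he
    rcases h1 : a (ι r) with m | m <;> rcases h2 : a (ι r') with m' | m' <;>
      rw [h1, h2] at he <;> simp only [Sum.elim_inl, Sum.elim_inr, id] at he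
    · -- both inl
      subst he
      by_cases hrr : (ι r : Fin (2 * k)) = (ι r' : Fin (2 * k))
      · exact ι.injective (Subtype.ext hrr)
      · exfalso
        have : 1 < cnt a (Sum.inl m) := by
          rw [cnt, Finset.one_lt_card]
          exact ⟨ι r, by simp [h1], ι r', by simp [h2], hrr⟩
        exact absurd (hmf _) (not_le.2 this)
    · -- inl, inr : partner relation
      exfalso
      subst he
      have : (ι r' : Fin (2 * k)) = π (ι r) := hπu _ _
        (show a (ι r' : Fin (2 * k)) = flipIdx (a (ι r : Fin (2 * k))) by rw [h2, h1]; rfl)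
      have hin : π (ι r) ∈ S := this ▸ hmem2 r'
      rw [hmemS, hππ] at hin
      exact absurd ((hmemS _).1 (hmem2 r)) (not_lt.2 (le_of_lt hin))
    · -- inr, inl
      exfalso
      subst he
      have : (ι r' : Fin (2 * k)) = π (ι r) := hπu _ _
        (show a (ι r' : Fin (2 * k)) = flipIdx (a (ι r : Fin (2 * k))) by rw [h2, h1]; rfl)
      have hin : π (ι r) ∈ S := this ▸ hmem2 r'
      rw [hmemS, hππ] at hin
      exact absurd ((hmemS _).1 (hmem2 r)) (not_lt.2 (le_of_lt hin))
    · -- both inr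
      subst he
      by_cases hrr : (ι r : Fin (2 * k)) = (ι r' : Fin (2 * k))
      · exact ι.injective (Subtype.ext hrr)
      · exfalso
        have : 1 < cnt a (Sum.inr m) := by
          rw [cnt, Finset.one_lt_card]
          exact ⟨ι r, by simp [h1], ι r', by simp [h2], hrr⟩
        exact absurd (hmf _) (not_le.2 this)
  · -- a = genIdx
    funext i
    obtain ⟨⟨r, b⟩, rfl⟩ := (pos_bijective hOCD).2 i
    cases b
    · have hp : pos k d (r, false) = (d r).1 := rfl
      rw [hp, genIdx_fst]
      have hfst : (d r).1 = (ι r : Fin (2 * k)) := rfl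
      rw [hfst]
      rcases hv : a (ι r) with m | m <;> simp [hv]
    · have hp : pos k d (r, true) = (d r).2 := rfl
      rw [hp, genIdx_snd]
      have hsnd : (d r).2 = π (ι r) := rfl
      rw [hsnd, hπ (ι r)]
      rcases hv : a (ι r) with m | m <;> simp [hv, flipIdx]

end SpAux
namespace SpAux
variable {n k : ℕ}

lemma genIdx_apply_pos (hkn : k ≤ n) {d : Fin k → Fin (2 * k) × Fin (2 * k)}
    (hd : IsOCD k d) (ε : Fin k → Bool) (φ : Fin k → Fin n) (s : Fin k) (b : Bool) :
    genIdx hkn hd ε φ (pos k d (s, b)) =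
      if xor b (ε s) then Sum.inr (φ s) else Sum.inl (φ s) := by
  have he : (Ec hd).symm (pos k d (s, b)) = (s, b) := by
    rw [← Ec_apply hd]; exact (Ec hd).symm_apply_apply _
  simp [genIdx, he]

lemma genIdx_letter_ne (hkn : k ≤ n) {d : Fin k → Fin (2 * k) × Fin (2 * k)}
    (hd : IsOCD k d) (ε : Fin k → Bool) {φ : Fin k → Fin n} (hinj : Function.Injective φ)
    (r : Fin k) (i : Fin (2 * k)) (hi1 : i ≠ (d r).1) (hi2 : i ≠ (d r).2) :
    genIdx hkn hd ε φ i ≠ Sum.inl (φ r) ∧ genIdx hkn hd ε φ i ≠ Sum.inr (φ r) := by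
  obtain ⟨⟨s, b⟩, rfl⟩ := (pos_bijective hd).2 i
  have hs : s ≠ r := by
    intro h
    subst h
    cases b
    · exact hi1 rfl
    · exact hi2 rfl
  have hφ : φ s ≠ φ r := fun h => hs (hinj h)
  rw [genIdx_apply_pos]
  rcases xor b (ε s) <;> simp [hφ]

/-- GA : flipping chord `r₀` at the index level -/
lemma genIdx_flip (hkn : k ≤ n) {d : Fin k → Fin (2 * k) × Fin (2 * k)}
    (hd : IsOCD k d) (ε : Fin k → Bool) (φ : Fin k → Fin n) (r₀ : Fin k) :
    Function.update (Function.update (genIdx hkn hd ε φ) ((d r₀).2) (Sum.inr (φ r₀)))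
      ((d r₀).1) (Sum.inl (φ r₀)) = genIdx hkn hd (Function.update ε r₀ false) φ := by
  funext i
  obtain ⟨⟨s, b⟩, rfl⟩ := (pos_bijective hd).2 i
  by_cases hs : s = r₀
  · subst hs
    cases b
    · have hp : pos k d (s, false) = (d s).1 := rfl
      rw [hp, Function.update_self, ← hp, genIdx_apply_pos]
      simp
    · have hp : pos k d (s, true) = (d s).2 := rfl
      rw [hp, Function.update_of_ne (Ne.symm (chord_fst_ne_snd hd s)), Function.update_self,
        ← hp, genIdx_apply_pos]
      simp
  · have hne1 : pos k d (s, b) ≠ (d r₀).1 := pos_ne hd (b' := false) (by simp [hs])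
    have hne2 : pos k d (s, b) ≠ (d r₀).2 := pos_ne hd (b' := true) (by simp [hs])
    rw [Function.update_of_ne hne1, Function.update_of_ne hne2,
      genIdx_apply_pos, genIdx_apply_pos, Function.update_of_ne hs]

/-- GB : relabelling chord `r₀` to a fresh letter, unflipped orientation -/
lemma genIdx_relabel (hkn : k ≤ n) {d : Fin k → Fin (2 * k) × Fin (2 * k)}
    (hd : IsOCD k d) (φ : Fin k → Fin n) (r₀ : Fin k) (j : Fin n) :
    Function.update (Function.update (genIdx hkn hd (fun _ => false) φ)
        ((d r₀).2) (Sum.inr j)) ((d r₀).1) (Sum.inl j)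
      = genIdx hkn hd (fun _ => false) (Function.update φ r₀ j) := by
  funext i
  obtain ⟨⟨s, b⟩, rfl⟩ := (pos_bijective hd).2 i
  by_cases hs : s = r₀
  · subst hs
    cases b
    · have hp : pos k d (s, false) = (d s).1 := rfl
      rw [hp, Function.update_self, ← hp, genIdx_apply_pos]
      simp
    · have hp : pos k d (s, true) = (d s).2 := rfl
      rw [hp, Function.update_of_ne (Ne.symm (chord_fst_ne_snd hd s)), Function.update_self,
        ← hp, genIdx_apply_pos]
      simp
  · have hne1 : pos k d (s, b) ≠ (d r₀).1 := pos_ne hd (b' := false) (by simp [hs])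
    have hne2 : pos k d (s, b) ≠ (d r₀).2 := pos_ne hd (b' := true) (by simp [hs])
    rw [Function.update_of_ne hne1, Function.update_of_ne hne2,
      genIdx_apply_pos, genIdx_apply_pos, Function.update_of_ne hs]

/-- GC : swapping the letters of chords `r₀` and `r₁` at the index level -/
lemma genIdx_swap (hkn : k ≤ n) {d : Fin k → Fin (2 * k) × Fin (2 * k)}
    (hd : IsOCD k d) (φ : Fin k → Fin n) (r₀ r₁ : Fin k) (hne : r₀ ≠ r₁) :
    Function.update (Function.update (Function.update (Function.update
      (genIdx hkn hd (fun _ => false) φ)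
        ((d r₀).1) (Sum.inl (φ r₁))) ((d r₀).2) (Sum.inr (φ r₁)))
        ((d r₁).1) (Sum.inl (φ r₀))) ((d r₁).2) (Sum.inr (φ r₀))
      = genIdx hkn hd (fun _ => false)
          (Function.update (Function.update φ r₀ (φ r₁)) r₁ (φ r₀)) := by
  funext i
  obtain ⟨⟨s, b⟩, rfl⟩ := (pos_bijective hd).2 i
  have hq : ∀ (s' : Fin k) (b' : Bool), (s, b) ≠ (s', b') →
      pos k d (s, b) ≠ (if b' then (d s').2 else (d s').1) := by
    intro s' b' h
    cases b'
    · exact pos_ne hd (b' := false) h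
    · exact pos_ne hd (b' := true) h
  by_cases hs0 : s = r₀
  · subst hs0
    cases b
    · have hp : pos k d (s, false) = (d s).1 := rfl
      have k1 : pos k d (s, false) ≠ (d r₁).2 := hq r₁ true (by simp [hne])
      have k2 : pos k d (s, false) ≠ (d r₁).1 := hq r₁ false (by simp [hne])
      have k3 : pos k d (s, false) ≠ (d s).2 := hq s true (by simp)
      rw [Function.update_of_ne k1, Function.update_of_ne k2, Function.update_of_ne k3,
        hp, Function.update_self, ← hp, genIdx_apply_pos]
      simp [Function.update_of_ne hne, Function.update_self]
    · have hp : pos k d (s, true) = (d s).2 := rfl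
      have k1 : pos k d (s, true) ≠ (d r₁).2 := hq r₁ true (by simp [hne])
      have k2 : pos k d (s, true) ≠ (d r₁).1 := hq r₁ false (by simp [hne])
      rw [Function.update_of_ne k1, Function.update_of_ne k2, hp, Function.update_self,
        ← hp, genIdx_apply_pos]
      simp [Function.update_of_ne hne, Function.update_self]
  · by_cases hs1 : s = r₁
    · subst hs1
      cases b
      · have hp : pos k d (s, false) = (d s).1 := rfl
        have k1 : pos k d (s, false) ≠ (d s).2 := hq s true (by simp)
        rw [Function.update_of_ne k1, hp, Function.update_self, ← hp, genIdx_apply_pos]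
        simp [Function.update_self]
      · have hp : pos k d (s, true) = (d s).2 := rfl
        rw [hp, Function.update_self, ← hp, genIdx_apply_pos]
        simp [Function.update_self]
    · have k1 : pos k d (s, b) ≠ (d r₁).2 := hq r₁ true (by simp [hs1])
      have k2 : pos k d (s, b) ≠ (d r₁).1 := hq r₁ false (by simp [hs1])
      have k3 : pos k d (s, b) ≠ (d r₀).2 := hq r₀ true (by simp [hs0])
      have k4 : pos k d (s, b) ≠ (d r₀).1 := hq r₀ false (by simp [hs0])
      rw [Function.update_of_ne k1, Function.update_of_ne k2, Function.update_of_ne k3,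
        Function.update_of_ne k4, genIdx_apply_pos, genIdx_apply_pos,
        Function.update_of_ne hs1, Function.update_of_ne hs0]

end SpAux
namespace SpAux
variable {n k : ℕ}

lemma genIdx_fst0 (hkn : k ≤ n) {d : Fin k → Fin (2 * k) × Fin (2 * k)} (hd : IsOCD k d)
    (φ : Fin k → Fin n) (r : Fin k) :
    genIdx hkn hd (fun _ => false) φ ((d r).1) = Sum.inl (φ r) := by
  rw [genIdx_fst]; simp

lemma genIdx_snd0 (hkn : k ≤ n) {d : Fin k → Fin (2 * k) × Fin (2 * k)} (hd : IsOCD k d)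
    (φ : Fin k → Fin n) (r : Fin k) :
    genIdx hkn hd (fun _ => false) φ ((d r).2) = Sum.inr (φ r) := by
  rw [genIdx_snd]; simp

/-- Lemma P : sorting the letters to the canonical assignment. -/
lemma F_sorted {F : (Fin (2 * k) → Idx n) → ℂ} (hMR : MR n k F) (hkn : k ≤ n)
    {d : Fin k → Fin (2 * k) × Fin (2 * k)} (hd : IsCDRep k d)
    (hu : F (genIdx hkn hd.1 (fun _ => false) (Fin.castLE hkn)) = 0) :
    ∀ (N : ℕ) (φ : Fin k → Fin n), Function.Injective φ →
      (Finset.univ.filter (fun r => φ r ≠ Fin.castLE hkn r)).card ≤ N →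
      F (genIdx hkn hd.1 (fun _ => false) φ) = 0 := by
  intro N
  induction N with
  | zero =>
    intro φ _ hcard
    have hempty : Finset.univ.filter (fun r => φ r ≠ Fin.castLE hkn r) = ∅ :=
      Finset.card_eq_zero.1 (Nat.le_zero.1 hcard)
    have hφ : φ = Fin.castLE hkn := by
      funext r
      by_contra hne
      have : r ∈ Finset.univ.filter (fun r => φ r ≠ Fin.castLE hkn r) := by
        simp [hne]
      rw [hempty] at this
      exact absurd this (Finset.notMem_empty r)
    rw [hφ]; exact hu
  | succ N IH =>
    intro φ hinj hcard
    rcases Finset.eq_empty_or_nonempty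
        (Finset.univ.filter (fun r => φ r ≠ Fin.castLE hkn r)) with hempty | ⟨r₀, hr₀mem⟩
    · have hφ : φ = Fin.castLE hkn := by
        funext r
        by_contra hne
        have : r ∈ Finset.univ.filter (fun r => φ r ≠ Fin.castLE hkn r) := by simp [hne]
        rw [hempty] at this
        exact absurd this (Finset.notMem_empty r)
      rw [hφ]; exact hu
    · have hr₀ : φ r₀ ≠ Fin.castLE hkn r₀ := (Finset.mem_filter.1 hr₀mem).2
      set a := genIdx hkn hd.1 (fun _ => false) φ with ha
      by_cases hex : ∃ r₁, φ r₁ = Fin.castLE hkn r₀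
      · -- transposition case
        obtain ⟨r₁, hr₁⟩ := hex
        have hne : r₀ ≠ r₁ := fun h => hr₀ (by rw [h, hr₁, ← h])
        have hφne : φ r₀ ≠ φ r₁ := fun h => hne (hinj h)
        have h1 : a ((d r₀).1) = Sum.inl (φ r₀) := genIdx_fst0 hkn hd.1 φ r₀
        have h2 : a ((d r₀).2) = Sum.inr (φ r₀) := genIdx_snd0 hkn hd.1 φ r₀
        have h3 : a ((d r₁).1) = Sum.inl (φ r₁) := genIdx_fst0 hkn hd.1 φ r₁
        have h4 : a ((d r₁).2) = Sum.inr (φ r₁) := genIdx_snd0 hkn hd.1 φ r₁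
        have hrest : ∀ t, t ≠ (d r₀).1 → t ≠ (d r₀).2 → t ≠ (d r₁).1 → t ≠ (d r₁).2 →
            a t ≠ Sum.inl (φ r₀) ∧ a t ≠ Sum.inr (φ r₀) ∧
            a t ≠ Sum.inl (φ r₁) ∧ a t ≠ Sum.inr (φ r₁) := by
          intro t t1 t2 t3 t4
          obtain ⟨p1, p2⟩ := genIdx_letter_ne hkn hd.1 _ hinj r₀ t t1 t2
          obtain ⟨p3, p4⟩ := genIdx_letter_ne hkn hd.1 _ hinj r₁ t t3 t4
          exact ⟨p1, p2, p3, p4⟩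
        have htr := F_transpose hMR a ((d r₀).1) ((d r₀).2) ((d r₁).1) ((d r₁).2)
          (φ r₀) (φ r₁) hφne h1 h2 h3 h4 hrest
        rw [ha, genIdx_swap hkn hd.1 φ r₀ r₁ hne] at htr
        set φ' := Function.update (Function.update φ r₀ (φ r₁)) r₁ (φ r₀) with hφ'
        have hinj' : Function.Injective φ' := by
          have : φ' = φ ∘ (Equiv.swap r₀ r₁) := by
            funext r
            by_cases h1' : r = r₁
            · subst h1'
              rw [hφ', Function.update_self, Function.comp_apply, Equiv.swap_apply_right]
            · by_cases h0' : r = r₀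
              · subst h0'
                rw [hφ', Function.update_of_ne hne, Function.update_self,
                  Function.comp_apply, Equiv.swap_apply_left]
              · rw [hφ', Function.update_of_ne h1', Function.update_of_ne h0',
                  Function.comp_apply, Equiv.swap_apply_of_ne_of_ne h0' h1']
          rw [this]
          exact hinj.comp (Equiv.injective _)
        have hsub : Finset.univ.filter (fun r => φ' r ≠ Fin.castLE hkn r) ⊆
            (Finset.univ.filter (fun r => φ r ≠ Fin.castLE hkn r)).erase r₀ := by
          intro r hr
          have hr' : φ' r ≠ Fin.castLE hkn r := (Finset.mem_filter.1 hr).2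
          rw [Finset.mem_erase]
          constructor
          · intro h
            subst h
            apply hr'
            rw [hφ', Function.update_of_ne hne, Function.update_self, hr₁]
          · rw [Finset.mem_filter]
            refine ⟨Finset.mem_univ r, ?_⟩
            by_cases h1' : r = r₁
            · subst h1'
              intro hcon
              apply hne
              exact Fin.castLE_injective hkn (by rw [← hr₁, hcon])
            · by_cases h0' : r = r₀
              · subst h0'
                exact hr₀
              · intro hcon
                apply hr'
                rw [hφ', Function.update_of_ne h1', Function.update_of_ne h0', hcon]
        have hcard' : (Finset.univ.filter (fun r => φ' r ≠ Fin.castLE hkn r)).card ≤ N := by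
          have h1' := Finset.card_le_card hsub
          have h2' := Finset.card_erase_of_mem hr₀mem
          omega
        rw [htr]
        exact IH φ' hinj' hcard'
      · -- fresh-letter relabelling case
        push_neg at hex
        have h2 : a ((d r₀).2) = Sum.inr (φ r₀) := genIdx_snd0 hkn hd.1 φ r₀
        have hfresh : ∀ i, a i ≠ Sum.inl (Fin.castLE hkn r₀) ∧
            a i ≠ Sum.inr (Fin.castLE hkn r₀) := by
          intro i
          obtain ⟨⟨s, b⟩, rfl⟩ := (pos_bijective hd.1).2 i
          rw [ha, genIdx_apply_pos]
          have := hex s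
          rcases xor b false <;> simp [this]
        have hexp := F_expand hMR a ((d r₀).2) (φ r₀) (Fin.castLE hkn r₀) h2 hfresh
        have hfilter : Finset.univ.filter (fun i => a i = Sum.inl (φ r₀)) = {(d r₀).1} := by
          ext i
          simp only [Finset.mem_filter, Finset.mem_univ, true_and, Finset.mem_singleton]
          constructor
          · intro hv
            obtain ⟨⟨s, b⟩, rfl⟩ := (pos_bijective hd.1).2 i
            rw [ha, genIdx_apply_pos] at hv
            cases b
            · simp only [Bool.xor_false, if_neg (Bool.false_ne_true)] at hv
              have hφs : φ s = φ r₀ := Sum.inl.inj hv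
              rw [hinj hφs]; rfl
            · simp only [Bool.xor_false, if_pos rfl] at hv
              exact absurd hv Sum.inr_ne_inl
          · intro h
            rw [h]
            exact genIdx_fst0 hkn hd.1 φ r₀
        rw [hfilter, Finset.sum_singleton] at hexp
        rw [ha, genIdx_relabel hkn hd.1 φ r₀ (Fin.castLE hkn r₀)] at hexp
        set φ' := Function.update φ r₀ (Fin.castLE hkn r₀) with hφ'
        have hinj' : Function.Injective φ' := by
          intro x y hxy
          by_cases hx : x = r₀ <;> by_cases hy : y = r₀
          · rw [hx, hy]
          · exfalso
            rw [hφ', hx, Function.update_self, Function.update_of_ne hy] at hxy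
            exact hex y hxy.symm
          · exfalso
            rw [hφ', hy, Function.update_self, Function.update_of_ne hx] at hxy
            exact hex x hxy
          · rw [hφ', Function.update_of_ne hx, Function.update_of_ne hy] at hxy
            exact hinj hxy
        have hsub : Finset.univ.filter (fun r => φ' r ≠ Fin.castLE hkn r) ⊆
            (Finset.univ.filter (fun r => φ r ≠ Fin.castLE hkn r)).erase r₀ := by
          intro r hr
          have hr' : φ' r ≠ Fin.castLE hkn r := (Finset.mem_filter.1 hr).2
          rw [Finset.mem_erase]
          have hrne : r ≠ r₀ := by
            intro h
            subst h
            exact hr' (by rw [hφ', Function.update_self])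
          refine ⟨hrne, Finset.mem_filter.2 ⟨Finset.mem_univ r, ?_⟩⟩
          intro hcon
          exact hr' (by rw [hφ', Function.update_of_ne hrne, hcon])
        have hcard' : (Finset.univ.filter (fun r => φ' r ≠ Fin.castLE hkn r)).card ≤ N := by
          have h1' := Finset.card_le_card hsub
          have h2' := Finset.card_erase_of_mem hr₀mem
          omega
        rw [hexp]
        exact IH φ' hinj' hcard'

/-- Lemma O : removing the orientation flips. -/
lemma F_genIdx_zero {F : (Fin (2 * k) → Idx n) → ℂ} (hMR : MR n k F) (hkn : k ≤ n)
    {d : Fin k → Fin (2 * k) × Fin (2 * k)} (hd : IsCDRep k d)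
    (hu : F (genIdx hkn hd.1 (fun _ => false) (Fin.castLE hkn)) = 0) :
    ∀ (N : ℕ) (ε : Fin k → Bool) (φ : Fin k → Fin n), Function.Injective φ →
      (Finset.univ.filter (fun r => ε r = true)).card ≤ N →
      F (genIdx hkn hd.1 ε φ) = 0 := by
  intro N
  induction N with
  | zero =>
    intro ε φ hinj hcard
    have hempty : Finset.univ.filter (fun r => ε r = true) = ∅ :=
      Finset.card_eq_zero.1 (Nat.le_zero.1 hcard)
    have hε : ε = fun _ => false := by
      funext r
      by_contra hne
      have : r ∈ Finset.univ.filter (fun r => ε r = true) := by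
        simp only [Finset.mem_filter, Finset.mem_univ, true_and]
        cases h : ε r
        · exact absurd h hne
        · rfl
      rw [hempty] at this
      exact absurd this (Finset.notMem_empty r)
    rw [hε]
    exact F_sorted hMR hkn hd hu k φ hinj
      (le_trans (Finset.card_le_univ _) (by simp))
  | succ N IH =>
    intro ε φ hinj hcard
    rcases Finset.eq_empty_or_nonempty
        (Finset.univ.filter (fun r => ε r = true)) with hempty | ⟨r₀, hr₀mem⟩
    · have hε : ε = fun _ => false := by
        funext r
        by_contra hne
        have : r ∈ Finset.univ.filter (fun r => ε r = true) := by
          simp only [Finset.mem_filter, Finset.mem_univ, true_and]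
          cases h : ε r
          · exact absurd h hne
          · rfl
        rw [hempty] at this
        exact absurd this (Finset.notMem_empty r)
      rw [hε]
      exact F_sorted hMR hkn hd hu k φ hinj
        (le_trans (Finset.card_le_univ _) (by simp))
    · have hr₀ : ε r₀ = true := (Finset.mem_filter.1 hr₀mem).2
      set a := genIdx hkn hd.1 ε φ with ha
      have hs : a ((d r₀).2) = Sum.inl (φ r₀) := by
        rw [ha, genIdx_snd, hr₀]; simp
      have ht : a ((d r₀).1) = Sum.inr (φ r₀) := by
        rw [ha, genIdx_fst, hr₀]; simp
      have hrest : ∀ i, i ≠ (d r₀).2 → i ≠ (d r₀).1 →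
          a i ≠ Sum.inl (φ r₀) ∧ a i ≠ Sum.inr (φ r₀) := by
        intro i hi2 hi1
        exact genIdx_letter_ne hkn hd.1 _ hinj r₀ i hi1 hi2
      have hfl := F_flip hMR a ((d r₀).2) ((d r₀).1) (φ r₀) hs ht hrest
      rw [ha, genIdx_flip hkn hd.1 ε φ r₀] at hfl
      have hsub : Finset.univ.filter (fun r => Function.update ε r₀ false r = true) ⊆
          (Finset.univ.filter (fun r => ε r = true)).erase r₀ := by
        intro r hr
        have hr' := (Finset.mem_filter.1 hr).2
        have hrne : r ≠ r₀ := by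
          intro h
          subst h
          rw [Function.update_self] at hr'
          exact Bool.false_ne_true hr'
        rw [Function.update_of_ne hrne] at hr'
        exact Finset.mem_erase.2 ⟨hrne, Finset.mem_filter.2 ⟨Finset.mem_univ r, hr'⟩⟩
      have hcard' : (Finset.univ.filter
          (fun r => Function.update ε r₀ false r = true)).card ≤ N := by
        have h1' := Finset.card_le_card hsub
        have h2' := Finset.card_erase_of_mem hr₀mem
        omega
      rw [hfl, IH (Function.update ε r₀ false) φ hinj hcard', neg_zero]

/-- the multiplicity-free case of the main induction -/
lemma F_mf_zero {F : (Fin (2 * k) → Idx n) → ℂ} (hMR : MR n k F) (hkn : k ≤ n)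
    (hu : ∀ (d : Fin k → Fin (2 * k) × Fin (2 * k)) (hd : IsCDRep k d),
      F (genIdx hkn hd.1 (fun _ => false) (Fin.castLE hkn)) = 0)
    (a : Fin (2 * k) → Idx n)
    (hbal : ∀ ℓ : Fin n, cnt a (Sum.inl ℓ) = cnt a (Sum.inr ℓ))
    (hmf : ∀ b : Idx n, cnt a b ≤ 1) : F a = 0 := by
  obtain ⟨d, hd, ε, φ, hinj, haeq⟩ := mf_structure hkn a hbal hmf
  rw [haeq]
  exact F_genIdx_zero hMR hkn hd (hu d hd) k ε φ hinj
    (le_trans (Finset.card_le_univ _) (by simp))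

end SpAux
namespace SpAux
variable {n k : ℕ}

/-- the collision measure -/
def mu (a : Fin (2 * k) → Idx n) : ℕ := ∑ b : Idx n, (cnt a b) ^ 2

lemma cnt_update_int (a : Fin (2 * k) → Idx n) (t : Fin (2 * k)) (v b : Idx n) :
    (cnt (Function.update a t v) b : ℤ) =
      (cnt a b : ℤ) + (if v = b then 1 else 0) - (if a t = b then 1 else 0) := by
  have hrepr : ∀ (f : Fin (2 * k) → Idx n),
      (cnt f b : ℤ) = ∑ i : Fin (2 * k), (if f i = b then (1 : ℤ) else 0) := by
    intro f
    rw [cnt]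
    push_cast [Finset.card_filter]
    rfl
  rw [hrepr, hrepr]
  rw [← Finset.sum_erase_add _ _ (Finset.mem_univ t),
    ← Finset.sum_erase_add _ _ (Finset.mem_univ t)]
  have he : ∀ i ∈ Finset.univ.erase t,
      (if Function.update a t v i = b then (1 : ℤ) else 0) =
      (if a i = b then (1 : ℤ) else 0) := by
    intro i hi
    rw [Function.update_of_ne (Finset.mem_erase.1 hi).1]
  rw [Finset.sum_congr rfl he, Function.update_self]
  ring

lemma mu_update (a : Fin (2 * k) → Idx n) (t : Fin (2 * k)) (v : Idx n) (hv : v ≠ a t) :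
    (mu (Function.update a t v) : ℤ) =
      (mu a : ℤ) + 2 * (cnt a v : ℤ) - 2 * (cnt a (a t) : ℤ) + 2 := by
  have hterm : ∀ b : Idx n, (cnt (Function.update a t v) b : ℤ) ^ 2 =
      (cnt a b : ℤ) ^ 2 + (2 * (cnt a b : ℤ) + 1) * (if v = b then 1 else 0) +
        (- 2 * (cnt a b : ℤ) + 1) * (if a t = b then 1 else 0) := by
    intro b
    rw [cnt_update_int]
    by_cases h1 : v = b <;> by_cases h2 : a t = b
    · exact absurd (h1.trans h2.symm) hv
    · rw [if_pos h1, if_neg h2]; ring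
    · rw [if_neg h1, if_pos h2]; ring
    · rw [if_neg h1, if_neg h2]; ring
  have : (mu (Function.update a t v) : ℤ) = ∑ b : Idx n,
      ((cnt a b : ℤ) ^ 2 + (2 * (cnt a b : ℤ) + 1) * (if v = b then 1 else 0) +
        (- 2 * (cnt a b : ℤ) + 1) * (if a t = b then 1 else 0)) := by
    rw [mu]
    push_cast
    exact Finset.sum_congr rfl fun b _ => hterm b
  rw [this, Finset.sum_add_distrib, Finset.sum_add_distrib]
  simp only [mul_ite, mul_one, mul_zero]
  rw [Finset.sum_ite_eq Finset.univ v (fun b => 2 * (cnt a b : ℤ) + 1),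
    Finset.sum_ite_eq Finset.univ (a t) (fun b => - 2 * (cnt a b : ℤ) + 1)]
  simp only [Finset.mem_univ, if_true]
  rw [mu]
  push_cast
  ring

lemma fresh_letter (hkn : k ≤ n) (a : Fin (2 * k) → Idx n)
    (hbal : ∀ ℓ : Fin n, cnt a (Sum.inl ℓ) = cnt a (Sum.inr ℓ))
    (ℓ₀ : Fin n) (hℓ₀ : 2 ≤ cnt a (Sum.inl ℓ₀)) :
    ∃ j : Fin n, cnt a (Sum.inl j) = 0 ∧ cnt a (Sum.inr j) = 0 := by
  by_contra hcon
  push_neg at hcon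
  have hall : ∀ j : Fin n, 1 ≤ cnt a (Sum.inl j) := by
    intro j
    rcases Nat.eq_zero_or_pos (cnt a (Sum.inl j)) with h | h
    · exact absurd (by rw [← hbal j]; exact h) (hcon j h)
    · exact h
  have htotal : ∑ b : Idx n, cnt a b = 2 * k := by
    have := Finset.card_eq_sum_card_fiberwise
      (f := a) (s := Finset.univ) (t := (Finset.univ : Finset (Idx n)))
      (fun i _ => Finset.mem_univ (a i))
    simpa [cnt] using this.symm
  have hsplit : ∑ b : Idx n, cnt a b =
      ∑ ℓ : Fin n, cnt a (Sum.inl ℓ) + ∑ ℓ : Fin n, cnt a (Sum.inr ℓ) :=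
    Fintype.sum_sum_type _
  have hbalsum : ∑ ℓ : Fin n, cnt a (Sum.inr ℓ) = ∑ ℓ : Fin n, cnt a (Sum.inl ℓ) :=
    Finset.sum_congr rfl fun ℓ _ => (hbal ℓ).symm
  have hk_eq : ∑ ℓ : Fin n, cnt a (Sum.inl ℓ) = k := by omega
  have hgt : ∑ _ℓ : Fin n, 1 < ∑ ℓ : Fin n, cnt a (Sum.inl ℓ) :=
    Finset.sum_lt_sum (fun i _ => hall i) ⟨ℓ₀, Finset.mem_univ ℓ₀, by omega⟩
  have hn : ∑ _ℓ : Fin n, 1 = n := by simp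
  omega

end SpAux
namespace SpAux
variable {n k : ℕ}

/-- The key fact: an invariant functional vanishing on all canonical tensors vanishes. -/
theorem star (hkn : k ≤ n) {F : (Fin (2 * k) → Idx n) → ℂ} (hMR : MR n k F)
    (hu : ∀ (d : Fin k → Fin (2 * k) × Fin (2 * k)) (hd : IsCDRep k d),
      F (genIdx hkn hd.1 (fun _ => false) (Fin.castLE hkn)) = 0) :
    ∀ a, F a = 0 := by
  suffices H : ∀ (N : ℕ) (a : Fin (2 * k) → Idx n), mu a ≤ N → F a = 0 by
    intro a
    exact H (mu a) a le_rfl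
  intro N
  induction N using Nat.strong_induction_on with
  | _ N IH =>
  intro a hμ
  by_cases hbal : ∀ ℓ : Fin n, cnt a (Sum.inl ℓ) = cnt a (Sum.inr ℓ)
  · by_cases hmf : ∀ b : Idx n, cnt a b ≤ 1
    · exact F_mf_zero hMR hkn hu a hbal hmf
    · push_neg at hmf
      obtain ⟨b₀, hb₀⟩ := hmf
      have hℓe : ∃ ℓ, 2 ≤ cnt a (Sum.inl ℓ) := by
        rcases b₀ with ℓ | ℓ
        · exact ⟨ℓ, hb₀⟩
        · exact ⟨ℓ, by rw [hbal ℓ]; exact hb₀⟩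
      obtain ⟨ℓ, hℓ2⟩ := hℓe
      obtain ⟨j, hj1, hj2⟩ := fresh_letter hkn a hbal ℓ hℓ2
      have hcr : 2 ≤ cnt a (Sum.inr ℓ) := by rw [← hbal ℓ]; exact hℓ2
      have hjℓ : j ≠ ℓ := by
        intro h
        rw [h] at hj1
        omega
      have htne : (Finset.univ.filter (fun i => a i = Sum.inr ℓ)).Nonempty := by
        rw [← Finset.card_pos, ← cnt]
        omega
      obtain ⟨t, htmem⟩ := htne
      have ht : a t = Sum.inr ℓ := (Finset.mem_filter.1 htmem).2
      have hfresh : ∀ i, a i ≠ Sum.inl j ∧ a i ≠ Sum.inr j := by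
        intro i
        constructor <;> intro h
        · have : 1 ≤ cnt a (Sum.inl j) := by
            rw [cnt]
            exact Finset.card_pos.mpr ⟨i, by simp [h]⟩
          omega
        · have : 1 ≤ cnt a (Sum.inr j) := by
            rw [cnt]
            exact Finset.card_pos.mpr ⟨i, by simp [h]⟩
          omega
      have hexp := F_expand hMR a t ℓ j ht hfresh
      rw [hexp]
      apply Finset.sum_eq_zero
      intro i hi
      have hai : a i = Sum.inl ℓ := (Finset.mem_filter.1 hi).2
      have hit : i ≠ t := ne_of_values hai ht (by simp)
      set a1 := Function.update a t (Sum.inr j) with ha1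
      set a2 := Function.update a1 i (Sum.inl j) with ha2
      have hv1 : (Sum.inr j : Idx n) ≠ a t := by
        rw [ht]
        exact fun h => hjℓ (Sum.inr.inj h)
      have ha1i : a1 i = a i := Function.update_of_ne hit _ _
      have hv2 : (Sum.inl j : Idx n) ≠ a1 i := by
        rw [ha1i, hai]
        exact fun h => hjℓ (Sum.inl.inj h)
      have e1 := mu_update a t (Sum.inr j) hv1
      rw [ht] at e1
      have e2 := mu_update a1 i (Sum.inl j) hv2
      rw [ha1i, hai] at e2
      have c1 : (cnt a1 (Sum.inl j) : ℤ) = (cnt a (Sum.inl j) : ℤ) := by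
        rw [ha1, cnt_update_int]
        simp [ht]
      have c2 : (cnt a1 (Sum.inl ℓ) : ℤ) = (cnt a (Sum.inl ℓ) : ℤ) := by
        rw [ha1, cnt_update_int]
        simp [ht, fun h : ℓ = j => hjℓ h.symm]
      have hlt : mu a2 < mu a := by
        have hℓ2' : (2 : ℤ) ≤ (cnt a (Sum.inl ℓ) : ℤ) := by exact_mod_cast hℓ2
        have hcr' : (2 : ℤ) ≤ (cnt a (Sum.inr ℓ) : ℤ) := by exact_mod_cast hcr
        have hj1' : (cnt a (Sum.inl j) : ℤ) = 0 := by exact_mod_cast hj1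
        have hj2' : (cnt a (Sum.inr j) : ℤ) = 0 := by exact_mod_cast hj2
        have : (mu a2 : ℤ) < (mu a : ℤ) := by
          rw [e2, c1, c2, e1, hj1', hj2']
          linarith
        exact_mod_cast this
      exact IH (mu a2) (lt_of_lt_of_le hlt hμ) a2 le_rfl
  · push_neg at hbal
    obtain ⟨ℓ, hℓ⟩ := hbal
    exact F_unbalanced hMR a ℓ hℓ

end SpAux
namespace SpAux
variable {n k : ℕ}

lemma sum_subtype_ite (d : Fin k → Fin (2 * k) × Fin (2 * k)) (hd : IsCDRep k d)
    (g : {c : Fin k → Fin (2 * k) × Fin (2 * k) // IsCDRep k c} → ℂ) :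
    ∑ c : {c : Fin k → Fin (2 * k) × Fin (2 * k) // IsCDRep k c},
      g c * (if c.1 = d then 1 else 0) = g ⟨d, hd⟩ := by
  have hterm : ∀ c : {c : Fin k → Fin (2 * k) × Fin (2 * k) // IsCDRep k c},
      g c * (if c.1 = d then 1 else 0) = if c = ⟨d, hd⟩ then g c else 0 := by
    intro c
    by_cases hc : c.1 = d
    · rw [if_pos hc, if_pos (Subtype.ext hc), mul_one]
    · rw [if_neg hc, if_neg (fun h => hc (by rw [h])), mul_zero]
  rw [Finset.sum_congr rfl (fun c _ => hterm c), Finset.sum_ite_eq' Finset.univ ⟨d, hd⟩ g,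
    if_pos (Finset.mem_univ _)]

end SpAux
/-- STATEMENT 11: for `k ≤ n`, the family `{β_ĉ : c ∈ 𝒞(k)}` is a basis of the space of
`sp(2n,ℂ)`-invariant linear functionals on `V^{⊗2k}`: every invariant functional (i.e.
multilinear functional, identified with a linear functional on the tensor power) is a
unique linear combination of the `β_ĉ`. -/
theorem invariant_functionals_basis (n k : ℕ) (hk : 0 < k) (hkn : k ≤ n)
    (f : MultilinearMap ℂ (fun _ : Fin (2 * k) => Vs n) ℂ)
    (hf : ∀ ξ : Vs n →ₗ[ℂ] Vs n, IsSp n ξ → ∀ x : Fin (2 * k) → Vs n,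
      ∑ i : Fin (2 * k), f (Function.update x i (ξ (x i))) = 0) :
    ∃! lam : {c : Fin k → Fin (2 * k) × Fin (2 * k) // IsCDRep k c} → ℂ,
      ∀ x : Fin (2 * k) → Vs n,
        f x = ∑ c : {c : Fin k → Fin (2 * k) × Fin (2 * k) // IsCDRep k c},
          lam c * betaFun n k c.1 x := by
  classical
  set CD := {c : Fin k → Fin (2 * k) × Fin (2 * k) // IsCDRep k c} with hCD
  set lam : CD → ℂ := fun c => f (uFam n k hkn c.1) with hlam
  have hbeta_eval : ∀ (c : CD) (d : CD),
      betaFun n k c.1 (uFam n k hkn d.1) = if c.1 = d.1 then 1 else 0 :=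
    fun c d => SpAux.beta_eval hkn c.2 d.2
  -- the difference functional on basis indices
  set G : (Fin (2 * k) → SpAux.Idx n) → ℂ :=
    (fun a => f ((SpAux.ev n) ∘ a)) -
      (fun a => ∑ c : CD, lam c * betaFun n k c.1 ((SpAux.ev n) ∘ a)) with hG
  have hMRG : SpAux.MR n k G := by
    apply SpAux.MR_sub
    · exact SpAux.MR_of_invariant f hf
    · have : (fun a => ∑ c : CD, lam c * betaFun n k c.1 ((SpAux.ev n) ∘ a)) =
          (fun a => ∑ c : CD, (fun (c : CD) (a' : Fin (2 * k) → SpAux.Idx n) =>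
            lam c * betaFun n k c.1 ((SpAux.ev n) ∘ a')) c a) := rfl
      rw [this]
      exact SpAux.MR_sum _ (fun c => SpAux.MR_smul (lam c) (SpAux.MR_beta c.2.1))
  have hGu : ∀ (d : Fin k → Fin (2 * k) × Fin (2 * k)) (hd : IsCDRep k d),
      G (SpAux.genIdx hkn hd.1 (fun _ => false) (Fin.castLE hkn)) = 0 := by
    intro d hd
    have hev : (SpAux.ev n) ∘ (SpAux.genIdx hkn hd.1 (fun _ => false) (Fin.castLE hkn)) =
        uFam n k hkn d := (SpAux.uFam_eq_ev_uIdx hkn hd.1).symm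
    rw [hG]
    simp only [Pi.sub_apply]
    rw [hev]
    have : ∑ c : CD, lam c * betaFun n k c.1 (uFam n k hkn d) = lam ⟨d, hd⟩ := by
      rw [Finset.sum_congr rfl (fun c _ => by rw [hbeta_eval c ⟨d, hd⟩])]
      exact SpAux.sum_subtype_ite d hd lam
    rw [this, hlam]
    simp
  have hGzero : ∀ a, G a = 0 := SpAux.star hkn hMRG hGu
  have hbasis : ∀ a : Fin (2 * k) → SpAux.Idx n,
      f ((SpAux.ev n) ∘ a) = ∑ c : CD, lam c * betaFun n k c.1 ((SpAux.ev n) ∘ a) := by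
    intro a
    have := hGzero a
    rw [hG] at this
    simp only [Pi.sub_apply] at this
    linear_combination this
  refine ⟨lam, ?_, ?_⟩
  · -- the expansion identity
    intro x
    rw [SpAux.ml_expand f x]
    have hswap : ∀ c : CD, betaFun n k c.1 x =
        ∑ a : Fin (2 * k) → SpAux.Idx n,
          (∏ i, x i (a i)) * betaFun n k c.1 ((SpAux.ev n) ∘ a) := by
      intro c
      have h := SpAux.ml_expand (SpAux.betaML c.2.1) x
      exact h
    calc ∑ a : Fin (2 * k) → SpAux.Idx n, (∏ i, x i (a i)) * f ((SpAux.ev n) ∘ a)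
        = ∑ a : Fin (2 * k) → SpAux.Idx n, (∏ i, x i (a i)) *
            ∑ c : CD, lam c * betaFun n k c.1 ((SpAux.ev n) ∘ a) := by
          exact Finset.sum_congr rfl fun a _ => by rw [hbasis a]
      _ = ∑ a : Fin (2 * k) → SpAux.Idx n, ∑ c : CD,
            lam c * ((∏ i, x i (a i)) * betaFun n k c.1 ((SpAux.ev n) ∘ a)) := by
          refine Finset.sum_congr rfl fun a _ => ?_
          rw [Finset.mul_sum]
          exact Finset.sum_congr rfl fun c _ => by ring
      _ = ∑ c : CD, ∑ a : Fin (2 * k) → SpAux.Idx n,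
            lam c * ((∏ i, x i (a i)) * betaFun n k c.1 ((SpAux.ev n) ∘ a)) :=
          Finset.sum_comm
      _ = ∑ c : CD, lam c * betaFun n k c.1 x := by
          refine Finset.sum_congr rfl fun c _ => ?_
          rw [hswap c, Finset.mul_sum]
  · -- uniqueness
    intro lam' hlam'
    funext d
    have h := hlam' (uFam n k hkn d.1)
    rw [Finset.sum_congr rfl (fun c _ => by rw [hbeta_eval c d])] at h
    rw [SpAux.sum_subtype_ite d.1 d.2 lam'] at h
    have : (⟨d.1, d.2⟩ : CD) = d := Subtype.ext rfl
    rw [this] at h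
    rw [hlam]
    exact h.symm

end
end

section
/- Let k ≤ n be positive integers. The images of the vectors u_k(ĉ), c ∈ 𝒞(k), form a basis of the coinvariant space (V^{⊗2k})_{sp(2n,ℂ)} = V^{⊗2k}/span{ξ·x : ξ ∈ sp(2n,ℂ), x ∈ V^{⊗2k}}, and this basis is dual to the basis {β_ĉ : c ∈ 𝒞(k)} of the space of sp(2n,ℂ)-invariant functionals. (This is the even, m = 0, case of the paper's coinvariants lemma for osp(2n|m).) -/
open scoped BigOperators

noncomputable section

open scoped TensorProduct

/-- The subspace of `V^{⊗2k}` spanned by the elements `ξ·x` for `ξ ∈ sp(2n,ℂ)` and pure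
tensors `x` (here `ξ` acts by derivations); the quotient by it is the space of
`sp(2n,ℂ)`-coinvariants `(V^{⊗2k})_{sp(2n,ℂ)}`. -/
def spanSp (n k : ℕ) : Submodule ℂ (⨂[ℂ] _i : Fin (2 * k), Vs n) :=
  Submodule.span ℂ
    {w | ∃ ξ : Vs n →ₗ[ℂ] Vs n, IsSp n ξ ∧ ∃ x : Fin (2 * k) → Vs n,
      w = ∑ i : Fin (2 * k), PiTensorProduct.tprod ℂ (Function.update x i (ξ (x i)))}

namespace Coinv

variable {n k : ℕ}

/-- basis vector for a letter -/
def bv (n : ℕ) (a : Fin n ⊕ Fin n) : Vs n := Pi.single a 1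

lemma symp_add_left (a a' b : Vs n) : symp n (a + a') b = symp n a b + symp n a' b := by
  unfold symp; rw [← Finset.sum_add_distrib]
  exact Finset.sum_congr rfl (fun i _ => by simp only [Pi.add_apply]; ring)

lemma symp_add_right (a b b' : Vs n) : symp n a (b + b') = symp n a b + symp n a b' := by
  unfold symp; rw [← Finset.sum_add_distrib]
  exact Finset.sum_congr rfl (fun i _ => by simp only [Pi.add_apply]; ring)

lemma symp_smul_left (c : ℂ) (a b : Vs n) : symp n (c • a) b = c * symp n a b := by
  unfold symp; rw [Finset.mul_sum]
  exact Finset.sum_congr rfl (fun i _ => by simp only [Pi.smul_apply, smul_eq_mul]; ring)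

lemma symp_smul_right (c : ℂ) (a b : Vs n) : symp n a (c • b) = c * symp n a b := by
  unfold symp; rw [Finset.mul_sum]
  exact Finset.sum_congr rfl (fun i _ => by simp only [Pi.smul_apply, smul_eq_mul]; ring)

lemma symp_zero_left (b : Vs n) : symp n 0 b = 0 := by simp [symp]

lemma symp_zero_right (a : Vs n) : symp n a 0 = 0 := by simp [symp]

lemma symp_bv_left_inl (i : Fin n) (b : Vs n) : symp n (bv n (Sum.inl i)) b = b (Sum.inr i) := by
  simp [symp, bv, Pi.single_apply]

lemma symp_bv_left_inr (i : Fin n) (b : Vs n) : symp n (bv n (Sum.inr i)) b = -(b (Sum.inl i)) := by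
  simp [symp, bv, Pi.single_apply]

lemma symp_bv_right_inl (i : Fin n) (a : Vs n) : symp n a (bv n (Sum.inl i)) = -(a (Sum.inr i)) := by
  simp [symp, bv, Pi.single_apply]

lemma symp_bv_right_inr (i : Fin n) (a : Vs n) : symp n a (bv n (Sum.inr i)) = a (Sum.inl i) := by
  simp [symp, bv, Pi.single_apply]

/-- the matrix unit `e_{ab}` : `x ↦ x b • e_a`. -/
def opE (n : ℕ) (a b : Fin n ⊕ Fin n) : Vs n →ₗ[ℂ] Vs n :=
  LinearMap.smulRight (LinearMap.proj b) (bv n a)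

lemma opE_apply (a b : Fin n ⊕ Fin n) (x : Vs n) : opE n a b x = x b • bv n a := rfl

lemma bv_apply (a b : Fin n ⊕ Fin n) : bv n a b = if b = a then 1 else 0 := Pi.single_apply a 1 b

lemma opE_bv (a b c : Fin n ⊕ Fin n) :
    opE n a b (bv n c) = if c = b then bv n a else 0 := by
  rw [opE_apply, bv_apply]
  by_cases h : c = b
  · subst h; simp
  · rw [if_neg fun hb => h hb.symm, if_neg h, zero_smul]

/-- `ξX r s : p_r ↦ p_s, q_s ↦ -q_r`. -/
def ξX (n : ℕ) (r s : Fin n) : Vs n →ₗ[ℂ] Vs n :=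
  opE n (Sum.inl s) (Sum.inl r) - opE n (Sum.inr r) (Sum.inr s)

/-- `ξS r : q_r ↦ p_r`. -/
def ξS (n : ℕ) (r : Fin n) : Vs n →ₗ[ℂ] Vs n := opE n (Sum.inl r) (Sum.inr r)

lemma isSp_ξX (r s : Fin n) : IsSp n (ξX n r s) := by
  intro a b
  have ha : (ξX n r s) a = a (Sum.inl r) • bv n (Sum.inl s) - a (Sum.inr s) • bv n (Sum.inr r) := rfl
  have hb : (ξX n r s) b = b (Sum.inl r) • bv n (Sum.inl s) - b (Sum.inr s) • bv n (Sum.inr r) := rfl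
  rw [ha, hb, sub_eq_add_neg, sub_eq_add_neg, ← neg_smul, ← neg_smul,
    symp_add_left, symp_add_right, symp_smul_left, symp_smul_left,
    symp_smul_right, symp_smul_right, symp_bv_left_inl, symp_bv_left_inr,
    symp_bv_right_inl, symp_bv_right_inr]
  ring

lemma isSp_ξS (r : Fin n) : IsSp n (ξS n r) := by
  intro a b
  have ha : (ξS n r) a = a (Sum.inr r) • bv n (Sum.inl r) := rfl
  have hb : (ξS n r) b = b (Sum.inr r) • bv n (Sum.inl r) := rfl
  rw [ha, hb, symp_smul_left, symp_smul_right, symp_bv_left_inl, symp_bv_right_inl]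
  ring

end Coinv
namespace Coinv

variable {n k : ℕ}

/-- the basis tensor with letters `f`. -/
def et (n k : ℕ) (f : Fin (2 * k) → Fin n ⊕ Fin n) : ⨂[ℂ] _i : Fin (2 * k), Vs n :=
  PiTensorProduct.tprod ℂ (fun i => bv n (f i))

/-- class of the basis tensor in the coinvariant space. -/
def Ef (n k : ℕ) (f : Fin (2 * k) → Fin n ⊕ Fin n) :
    (⨂[ℂ] _i : Fin (2 * k), Vs n) ⧸ spanSp n k :=
  (spanSp n k).mkQ (et n k f)

lemma gen_mem (ξ : Vs n →ₗ[ℂ] Vs n) (hξ : IsSp n ξ) (x : Fin (2 * k) → Vs n) :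
    (∑ i : Fin (2 * k), PiTensorProduct.tprod ℂ (Function.update x i (ξ (x i)))) ∈ spanSp n k :=
  Submodule.subset_span ⟨ξ, hξ, x, rfl⟩

lemma Erel (ξ : Vs n →ₗ[ℂ] Vs n) (hξ : IsSp n ξ) (γ : Fin n ⊕ Fin n → ℂ)
    (m : Fin n ⊕ Fin n → Fin n ⊕ Fin n)
    (hmatch : ∀ a, ξ (bv n a) = γ a • bv n (m a)) (f : Fin (2 * k) → Fin n ⊕ Fin n) :
    ∑ i : Fin (2 * k), γ (f i) • Ef n k (Function.update f i (m (f i))) = 0 := by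
  have h0 := gen_mem ξ hξ (fun j => bv n (f j))
  have h1 : (spanSp n k).mkQ
      (∑ i : Fin (2 * k), PiTensorProduct.tprod ℂ
        (Function.update (fun j => bv n (f j)) i (ξ (bv n (f i))))) = 0 :=
    (Submodule.Quotient.mk_eq_zero _).2 h0
  rw [map_sum] at h1
  rw [← h1]
  apply Finset.sum_congr rfl
  intro i _
  have h2 : (fun j => bv n (Function.update f i (m (f i)) j))
      = Function.update (fun j => bv n (f j)) i (bv n (m (f i))) := by
    funext j
    by_cases hj : j = i
    · subst hj; simp
    · simp [Function.update_of_ne hj]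
  rw [hmatch (f i), MultilinearMap.map_update_smul, map_smul, Ef, et, h2]

lemma Q3 (r s : Fin n) (f : Fin (2 * k) → Fin n ⊕ Fin n) :
    ∑ i : Fin (2 * k), (if f i = Sum.inl r then Ef n k (Function.update f i (Sum.inl s)) else 0)
    = ∑ i : Fin (2 * k),
        (if f i = Sum.inr s then Ef n k (Function.update f i (Sum.inr r)) else 0) := by
  classical
  have hmatch : ∀ a, (ξX n r s) (bv n a)
      = (Sum.elim (fun t => if t = r then (1:ℂ) else 0) (fun t => if t = s then -1 else 0) a)
        • bv n (Sum.elim (fun _ => (Sum.inl s : Fin n ⊕ Fin n)) (fun _ => Sum.inr r) a) := by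
    rintro (t | t)
    · by_cases h : t = r <;>
        simp [ξX, LinearMap.sub_apply, opE_bv, h, Sum.inl.injEq]
    · by_cases h : t = s <;>
        simp [ξX, LinearMap.sub_apply, opE_bv, h, Sum.inr.injEq]
  have h0 := Erel (ξX n r s) (isSp_ξX r s) _ _ hmatch f
  have key : ∀ i ∈ (Finset.univ : Finset (Fin (2 * k))),
      (Sum.elim (fun t => if t = r then (1:ℂ) else 0) (fun t => if t = s then -1 else 0) (f i))
        • Ef n k (Function.update f i
            (Sum.elim (fun _ => (Sum.inl s : Fin n ⊕ Fin n)) (fun _ => Sum.inr r) (f i)))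
      = (if f i = Sum.inl r then Ef n k (Function.update f i (Sum.inl s)) else 0)
        - (if f i = Sum.inr s then Ef n k (Function.update f i (Sum.inr r)) else 0) := by
    intro i _
    rcases hfi : f i with t | t
    · by_cases h : t = r <;> simp [hfi, h, Sum.inl.injEq]
    · by_cases h : t = s <;> simp [hfi, h, Sum.inr.injEq]
  rw [Finset.sum_congr rfl key, Finset.sum_sub_distrib, sub_eq_zero] at h0
  exact h0

lemma Q2 (r : Fin n) (f : Fin (2 * k) → Fin n ⊕ Fin n) :
    ∑ i : Fin (2 * k),
      (if f i = Sum.inr r then Ef n k (Function.update f i (Sum.inl r)) else 0) = 0 := by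
  classical
  have hmatch : ∀ a, (ξS n r) (bv n a)
      = (Sum.elim (fun _ => (0:ℂ)) (fun t => if t = r then 1 else 0) a)
        • bv n (Sum.elim (fun _ => (Sum.inl r : Fin n ⊕ Fin n)) (fun _ => Sum.inl r) a) := by
    rintro (t | t)
    · simp [ξS, opE_bv]
    · by_cases h : t = r <;> simp [ξS, opE_bv, h, Sum.inr.injEq]
  have h0 := Erel (ξS n r) (isSp_ξS r) _ _ hmatch f
  have key : ∀ i ∈ (Finset.univ : Finset (Fin (2 * k))),
      (Sum.elim (fun _ => (0:ℂ)) (fun t => if t = r then 1 else 0) (f i))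
        • Ef n k (Function.update f i
            (Sum.elim (fun _ => (Sum.inl r : Fin n ⊕ Fin n)) (fun _ => Sum.inl r) (f i)))
      = (if f i = Sum.inr r then Ef n k (Function.update f i (Sum.inl r)) else 0) := by
    intro i _
    rcases hfi : f i with t | t
    · simp [hfi]
    · by_cases h : t = r <;> simp [hfi, h, Sum.inr.injEq]
  rw [Finset.sum_congr rfl key] at h0
  exact h0

lemma sum_ite_one {M : Type*} [AddCommMonoid M] (P : Fin (2 * k) → Prop) [DecidablePred P]
    (g : Fin (2 * k) → M) (i0 : Fin (2 * k)) (h1 : P i0) (h2 : ∀ j, P j → j = i0) :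
    ∑ i : Fin (2 * k), (if P i then g i else 0) = g i0 := by
  rw [Finset.sum_eq_single_of_mem i0 (Finset.mem_univ _)
    (fun b _ hb => if_neg fun hp => hb (h2 b hp))]
  exact if_pos h1

lemma sum_ite_two {M : Type*} [AddCommMonoid M] (P : Fin (2 * k) → Prop) [DecidablePred P]
    (g : Fin (2 * k) → M) (i0 j0 : Fin (2 * k)) (hne : i0 ≠ j0) (h1 : P i0) (h1' : P j0)
    (h2 : ∀ j, P j → j = i0 ∨ j = j0) :
    ∑ i : Fin (2 * k), (if P i then g i else 0) = g i0 + g j0 := by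
  rw [← Finset.sum_subset (Finset.subset_univ ({i0, j0} : Finset (Fin (2 * k))))
    (fun x _ hx => if_neg fun hp => hx (by
      rcases h2 x hp with h | h <;> simp [h]))]
  rw [Finset.sum_pair hne, if_pos h1, if_pos h1']

/-- the number of positions carrying letter `a`. -/
def cnt (f : Fin (2 * k) → Fin n ⊕ Fin n) (a : Fin n ⊕ Fin n) : ℕ :=
  (Finset.univ.filter fun i => f i = a).card

lemma E_unbalanced (f : Fin (2 * k) → Fin n ⊕ Fin n) (r : Fin n)
    (h : cnt f (Sum.inl r) ≠ cnt f (Sum.inr r)) : Ef n k f = 0 := by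
  have h3 := Q3 r r f
  have e1 : ∀ i : Fin (2 * k),
      (if f i = Sum.inl r then Ef n k (Function.update f i (Sum.inl r)) else 0)
      = (if f i = Sum.inl r then Ef n k f else 0) := by
    intro i
    by_cases hc : f i = Sum.inl r
    · rw [if_pos hc, if_pos hc, ← hc, Function.update_eq_self]
    · rw [if_neg hc, if_neg hc]
  have e2 : ∀ i : Fin (2 * k),
      (if f i = Sum.inr r then Ef n k (Function.update f i (Sum.inr r)) else 0)
      = (if f i = Sum.inr r then Ef n k f else 0) := by
    intro i
    by_cases hc : f i = Sum.inr r
    · rw [if_pos hc, if_pos hc, ← hc, Function.update_eq_self]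
    · rw [if_neg hc, if_neg hc]
  rw [Finset.sum_congr rfl (fun i _ => e1 i), Finset.sum_congr rfl (fun i _ => e2 i),
    ← Finset.sum_filter, ← Finset.sum_filter, Finset.sum_const, Finset.sum_const] at h3
  have h4 : ((cnt f (Sum.inl r) : ℂ)) • Ef n k f = ((cnt f (Sum.inr r) : ℂ)) • Ef n k f := by
    rw [Nat.cast_smul_eq_nsmul, Nat.cast_smul_eq_nsmul]; exact h3
  have h5 : (((cnt f (Sum.inl r) : ℂ)) - ((cnt f (Sum.inr r) : ℂ))) • Ef n k f = 0 := by
    rw [sub_smul, h4, sub_self]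
  rcases smul_eq_zero.1 h5 with h6 | h6
  · exact absurd (Nat.cast_injective (sub_eq_zero.1 h6)) h
  · exact h6

end Coinv
namespace Coinv

variable {n k : ℕ}

/-- the entry map of an oriented chord diagram. -/
def ent (c : Fin k → Fin (2 * k) × Fin (2 * k)) : Fin k × Bool → Fin (2 * k) :=
  fun x => if x.2 then (c x.1).2 else (c x.1).1

lemma ent_false (c : Fin k → Fin (2 * k) × Fin (2 * k)) (t : Fin k) :
    ent c (t, false) = (c t).1 := rfl

lemma ent_true (c : Fin k → Fin (2 * k) × Fin (2 * k)) (t : Fin k) :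
    ent c (t, true) = (c t).2 := rfl

lemma ent_bij {c : Fin k → Fin (2 * k) × Fin (2 * k)} (hc : IsOCD k c) :
    Function.Bijective (ent c) := by
  rw [Fintype.bijective_iff_surjective_and_card]
  refine ⟨hc, ?_⟩
  simp [Fintype.card_prod]
  ring

lemma ent_inj {c : Fin k → Fin (2 * k) × Fin (2 * k)} (hc : IsOCD k c) :
    Function.Injective (ent c) := (ent_bij hc).1

lemma c1_inj {c : Fin k → Fin (2 * k) × Fin (2 * k)} (hc : IsOCD k c) {t t' : Fin k}
    (h : (c t).1 = (c t').1) : t = t' := by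
  have := ent_inj hc (a₁ := (t, false)) (a₂ := (t', false)) (by rw [ent_false, ent_false, h])
  exact (Prod.mk.injEq _ _ _ _ ▸ this).1

lemma c2_inj {c : Fin k → Fin (2 * k) × Fin (2 * k)} (hc : IsOCD k c) {t t' : Fin k}
    (h : (c t).2 = (c t').2) : t = t' := by
  have := ent_inj hc (a₁ := (t, true)) (a₂ := (t', true)) (by rw [ent_true, ent_true, h])
  exact (Prod.mk.injEq _ _ _ _ ▸ this).1

lemma c1_ne_c2 {c : Fin k → Fin (2 * k) × Fin (2 * k)} (hc : IsOCD k c) (t t' : Fin k) :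
    (c t).1 ≠ (c t').2 := by
  intro h
  have := ent_inj hc (a₁ := (t, false)) (a₂ := (t', true)) (by rw [ent_false, ent_true, h])
  simp at this

/-- the span of the images of the `u`-vectors. -/
def Usub (n k : ℕ) (hkn : k ≤ n) :
    Submodule ℂ ((⨂[ℂ] _i : Fin (2 * k), Vs n) ⧸ spanSp n k) :=
  Submodule.span ℂ (Set.range fun c : {c : Fin k → Fin (2 * k) × Fin (2 * k) // IsCDRep k c} =>
    (spanSp n k).mkQ (PiTensorProduct.tprod ℂ (uFam n k hkn c.1)))

lemma uFam_eq_bv (hkn : k ≤ n) {c : Fin k → Fin (2 * k) × Fin (2 * k)} (hc : IsCDRep k c)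
    (f : Fin (2 * k) → Fin n ⊕ Fin n)
    (hf1 : ∀ t, f ((c t).1) = Sum.inl (Fin.castLE hkn t))
    (hf2 : ∀ t, f ((c t).2) = Sum.inr (Fin.castLE hkn t)) :
    (fun i => bv n (f i)) = uFam n k hkn c := by
  funext i
  obtain ⟨⟨t, b⟩, rfl⟩ := (ent_bij hc.1).2 i
  cases b
  · rw [ent_false, hf1, uFam]
    rw [Finset.sum_eq_single t]
    · rw [if_pos rfl, if_neg (c1_ne_c2 hc.1 t t)]
      simp [bv, pvec]
    · intro r _ hr
      rw [if_neg (fun h => hr (c1_inj hc.1 h).symm), if_neg (c1_ne_c2 hc.1 t r), add_zero]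
    · intro h; exact absurd (Finset.mem_univ t) h
  · rw [ent_true, hf2, uFam]
    rw [Finset.sum_eq_single t]
    · rw [if_pos rfl, if_neg (fun h => c1_ne_c2 hc.1 t t h.symm)]
      simp [bv, qvec]
    · intro r _ hr
      rw [if_neg (fun h => c1_ne_c2 hc.1 r t h.symm), if_neg (fun h => hr (c2_inj hc.1 h).symm),
        add_zero]
    · intro h; exact absurd (Finset.mem_univ t) h

lemma Ef_canonical_mem (hkn : k ≤ n) {c : Fin k → Fin (2 * k) × Fin (2 * k)}
    (hc : IsCDRep k c) (f : Fin (2 * k) → Fin n ⊕ Fin n)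
    (hf1 : ∀ t, f ((c t).1) = Sum.inl (Fin.castLE hkn t))
    (hf2 : ∀ t, f ((c t).2) = Sum.inr (Fin.castLE hkn t)) :
    Ef n k f ∈ Usub n k hkn := by
  have : Ef n k f = (spanSp n k).mkQ (PiTensorProduct.tprod ℂ (uFam n k hkn c)) := by
    rw [Ef, et, uFam_eq_bv hkn hc f hf1 hf2]
  rw [this]
  exact Submodule.subset_span ⟨⟨c, hc⟩, rfl⟩

end Coinv
namespace Coinv

variable {n k : ℕ}

section Param

variable {c : Fin k → Fin (2 * k) × Fin (2 * k)} {lam : Fin k → Fin n} {eps : Fin k → Bool}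
  {f : Fin (2 * k) → Fin n ⊕ Fin n}

/-- where a `p`-letter can sit. -/
lemma pos_inl (hc : IsOCD k c) (hlam : Function.Injective lam)
    (hf1 : ∀ t, f ((c t).1) = (if eps t then Sum.inr (lam t) else Sum.inl (lam t)))
    (hf2 : ∀ t, f ((c t).2) = (if eps t then Sum.inl (lam t) else Sum.inr (lam t)))
    (t : Fin k) (x : Fin (2 * k)) (hx : f x = Sum.inl (lam t)) :
    x = if eps t then (c t).2 else (c t).1 := by
  obtain ⟨⟨t', b'⟩, rfl⟩ := (ent_bij hc).2 x
  cases b'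
  · rw [ent_false] at hx ⊢
    rw [hf1 t'] at hx
    by_cases he : eps t'
    · rw [if_pos he] at hx; exact absurd hx (by simp)
    · rw [if_neg he] at hx
      have ht : t' = t := hlam (by simpa using hx)
      subst ht
      rw [if_neg he]
  · rw [ent_true] at hx ⊢
    rw [hf2 t'] at hx
    by_cases he : eps t'
    · rw [if_pos he] at hx
      have ht : t' = t := hlam (by simpa using hx)
      subst ht
      rw [if_pos he]
    · rw [if_neg he] at hx; exact absurd hx (by simp)

lemma pos_inr (hc : IsOCD k c) (hlam : Function.Injective lam)
    (hf1 : ∀ t, f ((c t).1) = (if eps t then Sum.inr (lam t) else Sum.inl (lam t)))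
    (hf2 : ∀ t, f ((c t).2) = (if eps t then Sum.inl (lam t) else Sum.inr (lam t)))
    (t : Fin k) (x : Fin (2 * k)) (hx : f x = Sum.inr (lam t)) :
    x = if eps t then (c t).1 else (c t).2 := by
  obtain ⟨⟨t', b'⟩, rfl⟩ := (ent_bij hc).2 x
  cases b'
  · rw [ent_false] at hx ⊢
    rw [hf1 t'] at hx
    by_cases he : eps t'
    · rw [if_pos he] at hx
      have ht : t' = t := hlam (by simpa using hx)
      subst ht
      rw [if_pos he]
    · rw [if_neg he] at hx; exact absurd hx (by simp)
  · rw [ent_true] at hx ⊢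
    rw [hf2 t'] at hx
    by_cases he : eps t'
    · rw [if_pos he] at hx; exact absurd hx (by simp)
    · rw [if_neg he] at hx
      have ht : t' = t := hlam (by simpa using hx)
      subst ht
      rw [if_neg he]

lemma fresh_no (hc : IsOCD k c)
    (hf1 : ∀ t, f ((c t).1) = (if eps t then Sum.inr (lam t) else Sum.inl (lam t)))
    (hf2 : ∀ t, f ((c t).2) = (if eps t then Sum.inl (lam t) else Sum.inr (lam t)))
    {s : Fin n} (hs : ∀ t, lam t ≠ s) (x : Fin (2 * k)) :
    f x ≠ Sum.inl s ∧ f x ≠ Sum.inr s := by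
  obtain ⟨⟨t', b'⟩, rfl⟩ := (ent_bij hc).2 x
  cases b'
  · rw [ent_false, hf1 t']
    by_cases he : eps t' <;> simp [he, hs t', (hs t')]
  · rw [ent_true, hf2 t']
    by_cases he : eps t' <;> simp [he, hs t', (hs t')]

lemma moveA (hc : IsCDRep k c) (hlam : Function.Injective lam)
    (hf1 : ∀ t, f ((c t).1) = (if eps t then Sum.inr (lam t) else Sum.inl (lam t)))
    (hf2 : ∀ t, f ((c t).2) = (if eps t then Sum.inl (lam t) else Sum.inr (lam t)))
    (t0 : Fin k) (h0 : eps t0 = true) :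
    Ef n k f = - Ef n k (Function.update (Function.update f ((c t0).1) (Sum.inl (lam t0)))
      ((c t0).2) (Sum.inr (lam t0))) := by
  set r := lam t0
  set i := (c t0).1
  set a := (c t0).2
  have hia : i ≠ a := c1_ne_c2 hc.1 t0 t0
  have hfi : f i = Sum.inr r := by rw [hf1 t0, if_pos h0]
  have hfa : f a = Sum.inl r := by rw [hf2 t0, if_pos h0]
  set g0 := Function.update f a (Sum.inr r) with hg0
  have hg0i : g0 i = Sum.inr r := by rw [hg0, Function.update_of_ne hia, hfi]
  have hg0a : g0 a = Sum.inr r := Function.update_self a _ f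
  have h2 : ∀ x, g0 x = Sum.inr r → x = i ∨ x = a := by
    intro x hx
    by_cases hxa : x = a
    · exact Or.inr hxa
    · left
      rw [hg0, Function.update_of_ne hxa] at hx
      have := pos_inr hc.1 hlam hf1 hf2 t0 x hx
      rw [if_pos h0] at this
      exact this
  have hq := Q2 (n := n) (k := k) r g0
  rw [sum_ite_two _ _ i a hia hg0i hg0a h2] at hq
  have e1 : Function.update g0 a (Sum.inl r) = f := by
    rw [hg0, Function.update_idem, ← hfa, Function.update_eq_self]
  have e2 : Function.update g0 i (Sum.inl r)
      = Function.update (Function.update f i (Sum.inl r)) a (Sum.inr r) := by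
    rw [hg0, Function.update_comm hia]
  rw [e1, e2] at hq
  exact eq_neg_of_add_eq_zero_right hq

lemma moveB (hc : IsCDRep k c) (hlam : Function.Injective lam)
    (hf1 : ∀ t, f ((c t).1) = (if eps t then Sum.inr (lam t) else Sum.inl (lam t)))
    (hf2 : ∀ t, f ((c t).2) = (if eps t then Sum.inl (lam t) else Sum.inr (lam t)))
    (t0 : Fin k) {s : Fin n} (hs : ∀ t, lam t ≠ s) (h0 : eps t0 = false) :
    Ef n k f = Ef n k (Function.update (Function.update f ((c t0).1) (Sum.inl s))
      ((c t0).2) (Sum.inr s)) := by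
  set r := lam t0 with hr
  set i := (c t0).1
  set b := (c t0).2
  have hib : i ≠ b := c1_ne_c2 hc.1 t0 t0
  have hfi : f i = Sum.inl r := by rw [hf1 t0, h0]; rfl
  have hfb : f b = Sum.inr r := by rw [hf2 t0, h0]; rfl
  set g0 := Function.update f i (Sum.inl s) with hg0
  have hq := Q3 (n := n) (k := k) s r g0
  -- LHS: unique position i
  have hg0i : g0 i = Sum.inl s := Function.update_self i _ f
  have hL1 : ∀ x, g0 x = Sum.inl s → x = i := by
    intro x hx
    by_cases hxi : x = i
    · exact hxi
    · rw [hg0, Function.update_of_ne hxi] at hx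
      exact absurd hx (fresh_no hc.1 hf1 hf2 hs x).1
  rw [sum_ite_one _ _ i hg0i hL1] at hq
  -- RHS: unique position b
  have hg0b : g0 b = Sum.inr r := by rw [hg0, Function.update_of_ne (Ne.symm hib), hfb]
  have hR1 : ∀ x, g0 x = Sum.inr r → x = b := by
    intro x hx
    by_cases hxi : x = i
    · subst hxi; rw [hg0i] at hx; exact absurd hx (by simp)
    · rw [hg0, Function.update_of_ne hxi] at hx
      have := pos_inr hc.1 hlam hf1 hf2 t0 x hx
      rw [h0] at this
      exact this
  rw [sum_ite_one _ _ b hg0b hR1] at hq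
  have e1 : Function.update g0 i (Sum.inl r) = f := by
    rw [hg0, Function.update_idem, ← hfi, Function.update_eq_self]
  have e2 : Function.update g0 b (Sum.inr s)
      = Function.update (Function.update f i (Sum.inl s)) b (Sum.inr s) := by
    rw [hg0]
  rw [e1, e2] at hq
  exact hq


lemma moveC (hc : IsCDRep k c) (hlam : Function.Injective lam)
    (hf1 : ∀ t, f ((c t).1) = (if eps t then Sum.inr (lam t) else Sum.inl (lam t)))
    (hf2 : ∀ t, f ((c t).2) = (if eps t then Sum.inl (lam t) else Sum.inr (lam t)))
    (t0 t1 : Fin k) (hne01 : t0 ≠ t1) (h0 : eps t0 = false) (h1 : eps t1 = false) :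
    Ef n k f = Ef n k (Function.update (Function.update (Function.update (Function.update f
      ((c t0).1) (Sum.inl (lam t1))) ((c t1).1) (Sum.inl (lam t0)))
      ((c t0).2) (Sum.inr (lam t1))) ((c t1).2) (Sum.inr (lam t0))) := by
  set r := lam t0 with hrdef
  set s := lam t1 with hsdef
  set i := (c t0).1 with hidef
  set a := (c t0).2 with hadef
  set j := (c t1).1 with hjdef
  set b := (c t1).2 with hbdef
  have hrs : r ≠ s := fun h => hne01 (hlam h)
  have hsr : s ≠ r := Ne.symm hrs
  have hij : i ≠ j := fun h => hne01 (c1_inj hc.1 h)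
  have hji : j ≠ i := Ne.symm hij
  have hia : i ≠ a := c1_ne_c2 hc.1 t0 t0
  have hai : a ≠ i := Ne.symm hia
  have hib : i ≠ b := c1_ne_c2 hc.1 t0 t1
  have hbi : b ≠ i := Ne.symm hib
  have hja : j ≠ a := c1_ne_c2 hc.1 t1 t0
  have haj : a ≠ j := Ne.symm hja
  have hjb : j ≠ b := c1_ne_c2 hc.1 t1 t1
  have hbj : b ≠ j := Ne.symm hjb
  have hab : a ≠ b := fun h => hne01 (c2_inj hc.1 h)
  have hba : b ≠ a := Ne.symm hab
  have hfi : f i = Sum.inl r := by rw [hidef, hf1 t0, h0]; rfl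
  have hfa : f a = Sum.inr r := by rw [hadef, hf2 t0, h0]; rfl
  have hfj : f j = Sum.inl s := by rw [hjdef, hf1 t1, h1]; rfl
  have hfb : f b = Sum.inr s := by rw [hbdef, hf2 t1, h1]; rfl
  have posl0 : ∀ x, f x = Sum.inl r → x = i := by
    intro x hx
    have := pos_inl hc.1 hlam hf1 hf2 t0 x hx
    rwa [h0] at this
  have posr1 : ∀ x, f x = Sum.inr s → x = b := by
    intro x hx
    have := pos_inr hc.1 hlam hf1 hf2 t1 x hx
    rwa [h1] at this
  -- relation (1)
  have hq1 : Ef n k (Function.update (Function.update f i (Sum.inl s)) j (Sum.inl r)) + Ef n k f = Ef n k (Function.update (Function.update f j (Sum.inl r)) b (Sum.inr r)) := by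
    have hyi : Function.update f j (Sum.inl r) i = Sum.inl r := by
      rw [Function.update_of_ne hij, hfi]
    have hyj : Function.update f j (Sum.inl r) j = Sum.inl r := Function.update_self j _ f
    have hyb : Function.update f j (Sum.inl r) b = Sum.inr s := by
      rw [Function.update_of_ne hbj, hfb]
    have hL : ∀ x, Function.update f j (Sum.inl r) x = Sum.inl r → x = i ∨ x = j := by
      intro x hx
      by_cases hxj : x = j
      · exact Or.inr hxj
      · rw [Function.update_of_ne hxj] at hx
        exact Or.inl (posl0 x hx)
    have hR : ∀ x, Function.update f j (Sum.inl r) x = Sum.inr s → x = b := by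
      intro x hx
      by_cases hxj : x = j
      · subst hxj; rw [hyj] at hx; exact absurd hx (by simp)
      · rw [Function.update_of_ne hxj] at hx
        exact posr1 x hx
    have hq := Q3 (n := n) (k := k) r s (Function.update f j (Sum.inl r))
    rw [sum_ite_two _ _ i j hij hyi hyj hL, sum_ite_one _ _ b hyb hR] at hq
    have e1 : Function.update (Function.update f j (Sum.inl r)) i (Sum.inl s) = Function.update (Function.update f i (Sum.inl s)) j (Sum.inl r) :=
      Function.update_comm hji _ _ f
    have e2 : Function.update (Function.update f j (Sum.inl r)) j (Sum.inl s) = f := by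
      rw [Function.update_idem, ← hfj, Function.update_eq_self]
    rw [e1, e2] at hq
    exact hq
  -- relation (2)
  have hq2 : Ef n k (Function.update (Function.update f i (Sum.inl s)) a (Sum.inr s)) = Ef n k f + Ef n k (Function.update (Function.update f a (Sum.inr s)) b (Sum.inr r)) := by
    have hwi : Function.update f a (Sum.inr s) i = Sum.inl r := by
      rw [Function.update_of_ne hia, hfi]
    have hwa : Function.update f a (Sum.inr s) a = Sum.inr s := Function.update_self a _ f
    have hwb : Function.update f a (Sum.inr s) b = Sum.inr s := by
      rw [Function.update_of_ne hba, hfb]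
    have hL : ∀ x, Function.update f a (Sum.inr s) x = Sum.inl r → x = i := by
      intro x hx
      by_cases hxa : x = a
      · subst hxa; rw [hwa] at hx; exact absurd hx (by simp)
      · rw [Function.update_of_ne hxa] at hx
        exact posl0 x hx
    have hR : ∀ x, Function.update f a (Sum.inr s) x = Sum.inr s → x = a ∨ x = b := by
      intro x hx
      by_cases hxa : x = a
      · exact Or.inl hxa
      · rw [Function.update_of_ne hxa] at hx
        exact Or.inr (posr1 x hx)
    have hq := Q3 (n := n) (k := k) r s (Function.update f a (Sum.inr s))
    rw [sum_ite_one _ _ i hwi hL, sum_ite_two _ _ a b hab hwa hwb hR] at hq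
    have e1 : Function.update (Function.update f a (Sum.inr s)) i (Sum.inl s) = Function.update (Function.update f i (Sum.inl s)) a (Sum.inr s) :=
      Function.update_comm hai _ _ f
    have e2 : Function.update (Function.update f a (Sum.inr s)) a (Sum.inr r) = f := by
      rw [Function.update_idem, ← hfa, Function.update_eq_self]
    rw [e1, e2] at hq
    exact hq
  -- relation (3)
  have hq3 : Ef n k (Function.update (Function.update (Function.update (Function.update f i (Sum.inl s)) j (Sum.inl r)) a (Sum.inr s)) b (Sum.inr r)) + Ef n k (Function.update (Function.update f a (Sum.inr s)) b (Sum.inr r)) = Ef n k (Function.update (Function.update f j (Sum.inl r)) b (Sum.inr r)) := by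
    have hy2i : (Function.update (Function.update (Function.update f j (Sum.inl r)) a (Sum.inr s)) b (Sum.inr r)) i = Sum.inl r := by
      rw [Function.update_of_ne hib, Function.update_of_ne hia,
        Function.update_of_ne hij, hfi]
    have hy2j : (Function.update (Function.update (Function.update f j (Sum.inl r)) a (Sum.inr s)) b (Sum.inr r)) j = Sum.inl r := by
      rw [Function.update_of_ne hjb, Function.update_of_ne hja, Function.update_self]
    have hy2a : (Function.update (Function.update (Function.update f j (Sum.inl r)) a (Sum.inr s)) b (Sum.inr r)) a = Sum.inr s := by
      rw [Function.update_of_ne hab, Function.update_self]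
    have hy2b : (Function.update (Function.update (Function.update f j (Sum.inl r)) a (Sum.inr s)) b (Sum.inr r)) b = Sum.inr r := Function.update_self b _ _
    have hL : ∀ x, (Function.update (Function.update (Function.update f j (Sum.inl r)) a (Sum.inr s)) b (Sum.inr r)) x = Sum.inl r → x = i ∨ x = j := by
      intro x hx
      by_cases hxj : x = j
      · exact Or.inr hxj
      · by_cases hxa : x = a
        · subst hxa; rw [hy2a] at hx; exact absurd hx (by simp)
        · by_cases hxb : x = b
          · subst hxb; rw [hy2b] at hx; exact absurd hx (by simp)
          · rw [Function.update_of_ne hxb, Function.update_of_ne hxa,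
              Function.update_of_ne hxj] at hx
            exact Or.inl (posl0 x hx)
    have hR : ∀ x, (Function.update (Function.update (Function.update f j (Sum.inl r)) a (Sum.inr s)) b (Sum.inr r)) x = Sum.inr s → x = a := by
      intro x hx
      by_cases hxa : x = a
      · exact hxa
      · by_cases hxj : x = j
        · subst hxj; rw [hy2j] at hx; exact absurd hx (by simp)
        · by_cases hxb : x = b
          · subst hxb; rw [hy2b] at hx
            exact absurd (Sum.inr.inj hx) hrs
          · rw [Function.update_of_ne hxb, Function.update_of_ne hxa,
              Function.update_of_ne hxj] at hx
            exact absurd (posr1 x hx) hxb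
    have hq := Q3 (n := n) (k := k) r s (Function.update (Function.update (Function.update f j (Sum.inl r)) a (Sum.inr s)) b (Sum.inr r))
    rw [sum_ite_two _ _ i j hij hy2i hy2j hL, sum_ite_one _ _ a hy2a hR] at hq
    have e1 : Function.update (Function.update (Function.update (Function.update f j (Sum.inl r)) a (Sum.inr s)) b (Sum.inr r)) i (Sum.inl s) = Function.update (Function.update (Function.update (Function.update f i (Sum.inl s)) j (Sum.inl r)) a (Sum.inr s)) b (Sum.inr r) := by
      funext x
      by_cases hxi : x = i
      · subst hxi
        rw [Function.update_self, Function.update_of_ne hib, Function.update_of_ne hia,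
          Function.update_of_ne hij, Function.update_self]
      · rw [Function.update_of_ne hxi]
        by_cases hxb : x = b
        · subst hxb; rw [Function.update_self, Function.update_self]
        · rw [Function.update_of_ne hxb, Function.update_of_ne hxb]
          by_cases hxa : x = a
          · subst hxa; rw [Function.update_self, Function.update_self]
          · rw [Function.update_of_ne hxa, Function.update_of_ne hxa]
            by_cases hxj : x = j
            · subst hxj; rw [Function.update_self, Function.update_self]
            · rw [Function.update_of_ne hxj, Function.update_of_ne hxj,
                Function.update_of_ne hxi]
    have e2 : Function.update (Function.update (Function.update (Function.update f j (Sum.inl r)) a (Sum.inr s)) b (Sum.inr r)) j (Sum.inl s) = Function.update (Function.update f a (Sum.inr s)) b (Sum.inr r) := by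
      funext x
      by_cases hxj : x = j
      · subst hxj
        rw [Function.update_self, Function.update_of_ne hjb, Function.update_of_ne hja, hfj]
      · rw [Function.update_of_ne hxj]
        by_cases hxb : x = b
        · subst hxb; rw [Function.update_self, Function.update_self]
        · rw [Function.update_of_ne hxb, Function.update_of_ne hxb]
          by_cases hxa : x = a
          · subst hxa; rw [Function.update_self, Function.update_self]
          · rw [Function.update_of_ne hxa, Function.update_of_ne hxa,
              Function.update_of_ne hxj]
    have e3 : Function.update (Function.update (Function.update (Function.update f j (Sum.inl r)) a (Sum.inr s)) b (Sum.inr r)) a (Sum.inr r) = Function.update (Function.update f j (Sum.inl r)) b (Sum.inr r) := by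
      funext x
      by_cases hxa : x = a
      · subst hxa
        rw [Function.update_self, Function.update_of_ne hab, Function.update_of_ne haj, hfa]
      · rw [Function.update_of_ne hxa]
        by_cases hxb : x = b
        · subst hxb; rw [Function.update_self, Function.update_self]
        · rw [Function.update_of_ne hxb, Function.update_of_ne hxb, Function.update_of_ne hxa]
    rw [e1, e2, e3] at hq
    exact hq
  -- relation (4)
  have hq4 : Ef n k (Function.update (Function.update f i (Sum.inl s)) a (Sum.inr s)) = Ef n k (Function.update (Function.update f i (Sum.inl s)) j (Sum.inl r)) + Ef n k (Function.update (Function.update (Function.update (Function.update f i (Sum.inl s)) j (Sum.inl r)) a (Sum.inr s)) b (Sum.inr r)) := by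
    have hw2i : (Function.update (Function.update (Function.update f i (Sum.inl s)) j (Sum.inl r)) a (Sum.inr s)) i = Sum.inl s := by
      rw [Function.update_of_ne hia, Function.update_of_ne hij, Function.update_self]
    have hw2j : (Function.update (Function.update (Function.update f i (Sum.inl s)) j (Sum.inl r)) a (Sum.inr s)) j = Sum.inl r := by
      rw [Function.update_of_ne hja, Function.update_self]
    have hw2a : (Function.update (Function.update (Function.update f i (Sum.inl s)) j (Sum.inl r)) a (Sum.inr s)) a = Sum.inr s := Function.update_self a _ _
    have hw2b : (Function.update (Function.update (Function.update f i (Sum.inl s)) j (Sum.inl r)) a (Sum.inr s)) b = Sum.inr s := by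
      rw [Function.update_of_ne hba, Function.update_of_ne hbj, Function.update_of_ne hbi, hfb]
    have hL : ∀ x, (Function.update (Function.update (Function.update f i (Sum.inl s)) j (Sum.inl r)) a (Sum.inr s)) x = Sum.inl r → x = j := by
      intro x hx
      by_cases hxj : x = j
      · exact hxj
      · by_cases hxa : x = a
        · subst hxa; rw [hw2a] at hx; exact absurd hx (by simp)
        · by_cases hxi : x = i
          · subst hxi; rw [hw2i] at hx
            exact absurd hx (by simp [Sum.inl.injEq, hsr])
          · rw [Function.update_of_ne hxa, Function.update_of_ne hxj,
              Function.update_of_ne hxi] at hx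
            exact absurd (posl0 x hx) hxi
    have hR : ∀ x, (Function.update (Function.update (Function.update f i (Sum.inl s)) j (Sum.inl r)) a (Sum.inr s)) x = Sum.inr s → x = a ∨ x = b := by
      intro x hx
      by_cases hxa : x = a
      · exact Or.inl hxa
      · by_cases hxj : x = j
        · subst hxj; rw [hw2j] at hx; exact absurd hx (by simp)
        · by_cases hxi : x = i
          · subst hxi; rw [hw2i] at hx; exact absurd hx (by simp)
          · rw [Function.update_of_ne hxa, Function.update_of_ne hxj,
              Function.update_of_ne hxi] at hx
            exact Or.inr (posr1 x hx)
    have hq := Q3 (n := n) (k := k) r s (Function.update (Function.update (Function.update f i (Sum.inl s)) j (Sum.inl r)) a (Sum.inr s))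
    rw [sum_ite_one _ _ j hw2j hL, sum_ite_two _ _ a b hab hw2a hw2b hR] at hq
    have e1 : Function.update (Function.update (Function.update (Function.update f i (Sum.inl s)) j (Sum.inl r)) a (Sum.inr s)) j (Sum.inl s) = Function.update (Function.update f i (Sum.inl s)) a (Sum.inr s) := by
      funext x
      by_cases hxj : x = j
      · subst hxj
        rw [Function.update_self, Function.update_of_ne hja, Function.update_of_ne hji, hfj]
      · rw [Function.update_of_ne hxj]
        by_cases hxa : x = a
        · subst hxa; rw [Function.update_self, Function.update_self]
        · rw [Function.update_of_ne hxa, Function.update_of_ne hxa, Function.update_of_ne hxj]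
    have e2 : Function.update (Function.update (Function.update (Function.update f i (Sum.inl s)) j (Sum.inl r)) a (Sum.inr s)) a (Sum.inr r) = Function.update (Function.update f i (Sum.inl s)) j (Sum.inl r) := by
      funext x
      by_cases hxa : x = a
      · subst hxa
        rw [Function.update_self, Function.update_of_ne haj, Function.update_of_ne hai, hfa]
      · rw [Function.update_of_ne hxa, Function.update_of_ne hxa]
    rw [e1, e2] at hq
    exact hq
  -- combine the four relations
  have h13 : Ef n k (Function.update (Function.update f i (Sum.inl s)) j (Sum.inl r)) + Ef n k f
      = Ef n k (Function.update (Function.update (Function.update (Function.update f i (Sum.inl s)) j (Sum.inl r)) a (Sum.inr s)) b (Sum.inr r)) + Ef n k (Function.update (Function.update f a (Sum.inr s)) b (Sum.inr r)) := hq1.trans hq3.symm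
  have h24 : Ef n k f + Ef n k (Function.update (Function.update f a (Sum.inr s)) b (Sum.inr r))
      = Ef n k (Function.update (Function.update f i (Sum.inl s)) j (Sum.inl r)) + Ef n k (Function.update (Function.update (Function.update (Function.update f i (Sum.inl s)) j (Sum.inl r)) a (Sum.inr s)) b (Sum.inr r)) := hq2.symm.trans hq4
  have hd : (Ef n k f - Ef n k (Function.update (Function.update (Function.update (Function.update f i (Sum.inl s)) j (Sum.inl r)) a (Sum.inr s)) b (Sum.inr r))) + (Ef n k f - Ef n k (Function.update (Function.update (Function.update (Function.update f i (Sum.inl s)) j (Sum.inl r)) a (Sum.inr s)) b (Sum.inr r)))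
      = (Ef n k (Function.update (Function.update f i (Sum.inl s)) j (Sum.inl r)) + Ef n k f - (Ef n k (Function.update (Function.update (Function.update (Function.update f i (Sum.inl s)) j (Sum.inl r)) a (Sum.inr s)) b (Sum.inr r)) + Ef n k (Function.update (Function.update f a (Sum.inr s)) b (Sum.inr r))))
        + (Ef n k f + Ef n k (Function.update (Function.update f a (Sum.inr s)) b (Sum.inr r)) - (Ef n k (Function.update (Function.update f i (Sum.inl s)) j (Sum.inl r)) + Ef n k (Function.update (Function.update (Function.update (Function.update f i (Sum.inl s)) j (Sum.inl r)) a (Sum.inr s)) b (Sum.inr r))))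
      := by abel
  rw [sub_eq_zero.2 h13, sub_eq_zero.2 h24, add_zero] at hd
  have h2 : (2 : ℂ) • (Ef n k f - Ef n k (Function.update (Function.update (Function.update (Function.update f i (Sum.inl s)) j (Sum.inl r)) a (Sum.inr s)) b (Sum.inr r))) = 0 := by
    rw [two_smul]; exact hd
  rcases smul_eq_zero.1 h2 with h | h
  · exact absurd h two_ne_zero
  · exact sub_eq_zero.1 h

lemma card_filter_lt {p q : Fin k → Prop} [DecidablePred p] [DecidablePred q] (t0 : Fin k)
    (hp : p t0) (hq : ¬ q t0) (himp : ∀ x, q x → p x) :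
    (Finset.univ.filter q).card < (Finset.univ.filter p).card := by
  apply Finset.card_lt_card
  constructor
  · intro x hx
    exact Finset.mem_filter.2 ⟨Finset.mem_univ x, himp x (Finset.mem_filter.1 hx).2⟩
  · intro hsub
    exact hq (Finset.mem_filter.1 (hsub (Finset.mem_filter.2 ⟨Finset.mem_univ t0, hp⟩))).2

lemma span_param (hkn : k ≤ n) : ∀ (N : ℕ) (c : Fin k → Fin (2 * k) × Fin (2 * k)),
    IsCDRep k c → ∀ (lam : Fin k → Fin n), Function.Injective lam → ∀ (eps : Fin k → Bool)
    (f : Fin (2 * k) → Fin n ⊕ Fin n),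
    (∀ t, f ((c t).1) = (if eps t then Sum.inr (lam t) else Sum.inl (lam t))) →
    (∀ t, f ((c t).2) = (if eps t then Sum.inl (lam t) else Sum.inr (lam t))) →
    (Finset.univ.filter fun t => eps t = true).card
      + (Finset.univ.filter fun t => lam t ≠ Fin.castLE hkn t).card ≤ N →
    Ef n k f ∈ Usub n k hkn := by
  intro N
  induction N with
  | zero =>
    intro c hc lam hlam eps f hf1 hf2 hD
    have hD1 : (Finset.univ.filter fun t => eps t = true) = ∅ :=
      Finset.card_eq_zero.1 (by omega)
    have hD2 : (Finset.univ.filter fun t => lam t ≠ Fin.castLE hkn t) = ∅ :=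
      Finset.card_eq_zero.1 (by omega)
    have heps : ∀ t, eps t = false := by
      intro t
      by_contra h
      have ht : t ∈ Finset.univ.filter fun t => eps t = true :=
        Finset.mem_filter.2 ⟨Finset.mem_univ t, by revert h; cases eps t <;> simp⟩
      rw [hD1] at ht
      exact absurd ht (Finset.notMem_empty t)
    have hLam : ∀ t, lam t = Fin.castLE hkn t := by
      intro t
      by_contra h
      have ht : t ∈ Finset.univ.filter fun t => lam t ≠ Fin.castLE hkn t :=
        Finset.mem_filter.2 ⟨Finset.mem_univ t, h⟩
      rw [hD2] at ht
      exact absurd ht (Finset.notMem_empty t)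
    refine Ef_canonical_mem hkn hc f (fun t => ?_) (fun t => ?_)
    · rw [hf1 t, heps t, ← hLam t]; rfl
    · rw [hf2 t, heps t, ← hLam t]; rfl
  | succ N ih =>
    intro c hc lam hlam eps f hf1 hf2 hD
    by_cases hE : ∃ t0, eps t0 = true
    · obtain ⟨t0, h0⟩ := hE
      rw [moveA hc hlam hf1 hf2 t0 h0]
      refine neg_mem (ih c hc lam hlam (Function.update eps t0 false)
        (Function.update (Function.update f ((c t0).1) (Sum.inl (lam t0)))
          ((c t0).2) (Sum.inr (lam t0))) ?_ ?_ ?_)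
      · intro t
        by_cases ht : t = t0
        · subst ht
          rw [Function.update_of_ne (c1_ne_c2 hc.1 t t), Function.update_self,
            Function.update_self]
          rfl
        · rw [Function.update_of_ne (c1_ne_c2 hc.1 t t0),
            Function.update_of_ne (fun h => ht (c1_inj hc.1 h)),
            Function.update_of_ne ht, hf1 t]
      · intro t
        by_cases ht : t = t0
        · subst ht
          rw [Function.update_self, Function.update_self]
          rfl
        · rw [Function.update_of_ne (fun h => ht (c2_inj hc.1 h)),
            Function.update_of_ne (fun h => (c1_ne_c2 hc.1 t0 t) h.symm),
            Function.update_of_ne ht, hf2 t]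
      · have hlt : (Finset.univ.filter fun t => Function.update eps t0 false t = true).card
            < (Finset.univ.filter fun t => eps t = true).card := by
          refine card_filter_lt t0 h0 ?_ ?_
          · rw [Function.update_self]; simp
          · intro x hx
            by_cases hxt : x = t0
            · subst hxt; rw [Function.update_self] at hx; exact absurd hx (by simp)
            · rwa [Function.update_of_ne hxt] at hx
        omega
    · have heps : ∀ t, eps t = false := by
        intro t
        cases h' : eps t
        · rfl
        · exact absurd ⟨t, h'⟩ hE
      by_cases hLam : ∀ t, lam t = Fin.castLE hkn t
      · refine Ef_canonical_mem hkn hc f (fun t => ?_) (fun t => ?_)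
        · rw [hf1 t, heps t, ← hLam t]; rfl
        · rw [hf2 t, heps t, ← hLam t]; rfl
      · push_neg at hLam
        obtain ⟨t0, ht0⟩ := hLam
        by_cases hhit : ∃ t1, lam t1 = Fin.castLE hkn t0
        · obtain ⟨t1, ht1⟩ := hhit
          have hne01 : t0 ≠ t1 := fun h => ht0 (h ▸ ht1)
          have hswap : Function.update (Function.update lam t0 (lam t1)) t1 (lam t0)
              = lam ∘ (Equiv.swap t0 t1) := by
            funext x
            by_cases hx1 : x = t1
            · subst hx1
              rw [Function.update_self, Function.comp_apply, Equiv.swap_apply_right]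
            · by_cases hx0 : x = t0
              · subst hx0
                rw [Function.update_of_ne hne01, Function.update_self,
                  Function.comp_apply, Equiv.swap_apply_left]
              · rw [Function.update_of_ne hx1, Function.update_of_ne hx0,
                  Function.comp_apply, Equiv.swap_apply_of_ne_of_ne hx0 hx1]
          have hlam' : Function.Injective
              (Function.update (Function.update lam t0 (lam t1)) t1 (lam t0)) := by
            rw [hswap]
            exact hlam.comp (Equiv.swap t0 t1).injective
          rw [moveC hc hlam hf1 hf2 t0 t1 hne01 (heps t0) (heps t1)]
          set lam' := Function.update (Function.update lam t0 (lam t1)) t1 (lam t0) with hlamdef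
          have hl0 : lam' t0 = lam t1 := by
            rw [hlamdef, Function.update_of_ne hne01, Function.update_self]
          have hl1 : lam' t1 = lam t0 := Function.update_self t1 _ _
          have hlo : ∀ t, t ≠ t0 → t ≠ t1 → lam' t = lam t := by
            intro t h0' h1'
            rw [hlamdef, Function.update_of_ne h1', Function.update_of_ne h0']
          refine ih c hc lam' hlam' eps
            (Function.update (Function.update (Function.update (Function.update f
              ((c t0).1) (Sum.inl (lam t1))) ((c t1).1) (Sum.inl (lam t0)))
              ((c t0).2) (Sum.inr (lam t1))) ((c t1).2) (Sum.inr (lam t0))) ?_ ?_ ?_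
          · intro t
            by_cases h0' : t = t0
            · subst h0'
              rw [Function.update_of_ne (c1_ne_c2 hc.1 t t1),
                Function.update_of_ne (c1_ne_c2 hc.1 t t),
                Function.update_of_ne (fun h => hne01 (c1_inj hc.1 h)),
                Function.update_self, heps t, hl0]
              rfl
            · by_cases h1' : t = t1
              · subst h1'
                rw [Function.update_of_ne (c1_ne_c2 hc.1 t t),
                  Function.update_of_ne (c1_ne_c2 hc.1 t t0),
                  Function.update_self, heps t, hl1]
                rfl
              · rw [Function.update_of_ne (c1_ne_c2 hc.1 t t1),
                  Function.update_of_ne (c1_ne_c2 hc.1 t t0),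
                  Function.update_of_ne (fun h => h1' (c1_inj hc.1 h)),
                  Function.update_of_ne (fun h => h0' (c1_inj hc.1 h)),
                  hf1 t, hlo t h0' h1']
          · intro t
            by_cases h0' : t = t0
            · subst h0'
              rw [Function.update_of_ne (fun h => hne01 (c2_inj hc.1 h)),
                Function.update_self, heps t, hl0]
              rfl
            · by_cases h1' : t = t1
              · subst h1'
                rw [Function.update_self, heps t, hl1]
                rfl
              · rw [Function.update_of_ne (fun h => h1' (c2_inj hc.1 h)),
                  Function.update_of_ne (fun h => h0' (c2_inj hc.1 h)),
                  Function.update_of_ne (fun h => (c1_ne_c2 hc.1 t1 t) h.symm),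
                  Function.update_of_ne (fun h => (c1_ne_c2 hc.1 t0 t) h.symm),
                  hf2 t, hlo t h0' h1']
          · have hlt : (Finset.univ.filter fun t => lam' t ≠ Fin.castLE hkn t).card
                < (Finset.univ.filter fun t => lam t ≠ Fin.castLE hkn t).card := by
              refine card_filter_lt t0 ht0 ?_ ?_
              · rw [hl0, ht1]; simp
              · intro x hx
                by_cases hx0 : x = t0
                · subst hx0; rw [hl0, ht1] at hx; exact absurd rfl hx
                · by_cases hx1 : x = t1
                  · subst hx1
                    intro h
                    rw [ht1] at h
                    have : t0 = x := by
                      have := congrArg Fin.val h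
                      simp at this
                      exact Fin.ext this
                    exact hne01 this
                  · rwa [hlo x hx0 hx1] at hx
            omega
        · push_neg at hhit
          have hfresh : ∀ t, lam t ≠ Fin.castLE hkn t0 := hhit
          rw [moveB hc hlam hf1 hf2 t0 hfresh (heps t0)]
          set lam' := Function.update lam t0 (Fin.castLE hkn t0) with hlamdef
          have hlam' : Function.Injective lam' := by
            intro x y h
            by_cases hx : x = t0 <;> by_cases hy : y = t0
            · rw [hx, hy]
            · subst hx
              rw [hlamdef, Function.update_self, Function.update_of_ne hy] at h
              exact absurd h.symm (hfresh y)
            · subst hy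
              rw [hlamdef, Function.update_self, Function.update_of_ne hx] at h
              exact absurd h (hfresh x)
            · rw [hlamdef, Function.update_of_ne hx, Function.update_of_ne hy] at h
              exact hlam h
          have hl0 : lam' t0 = Fin.castLE hkn t0 := Function.update_self t0 _ _
          have hlo : ∀ t, t ≠ t0 → lam' t = lam t := fun t ht =>
            Function.update_of_ne ht _ _
          refine ih c hc lam' hlam' eps
            (Function.update (Function.update f ((c t0).1) (Sum.inl (Fin.castLE hkn t0)))
              ((c t0).2) (Sum.inr (Fin.castLE hkn t0))) ?_ ?_ ?_
          · intro t
            by_cases ht : t = t0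
            · subst ht
              rw [Function.update_of_ne (c1_ne_c2 hc.1 t t), Function.update_self,
                heps t, hl0]
              rfl
            · rw [Function.update_of_ne (c1_ne_c2 hc.1 t t0),
                Function.update_of_ne (fun h => ht (c1_inj hc.1 h)),
                hf1 t, hlo t ht]
          · intro t
            by_cases ht : t = t0
            · subst ht
              rw [Function.update_self, heps t, hl0]
              rfl
            · rw [Function.update_of_ne (fun h => ht (c2_inj hc.1 h)),
                Function.update_of_ne (fun h => (c1_ne_c2 hc.1 t0 t) h.symm),
                hf2 t, hlo t ht]
          · have hlt : (Finset.univ.filter fun t => lam' t ≠ Fin.castLE hkn t).card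
                < (Finset.univ.filter fun t => lam t ≠ Fin.castLE hkn t).card := by
              refine card_filter_lt t0 ht0 ?_ ?_
              · rw [hl0]; simp
              · intro x hx
                by_cases hx0 : x = t0
                · subst hx0
                  rw [hl0] at hx
                  exact absurd rfl hx
                · rwa [hlo x hx0] at hx
            omega

end Param

end Coinv
namespace Coinv

variable {n k : ℕ}

lemma cnt_pos {f : Fin (2 * k) → Fin n ⊕ Fin n} {a : Fin n ⊕ Fin n} {i : Fin (2 * k)}
    (h : f i = a) : 0 < cnt f a :=
  Finset.card_pos.2 ⟨i, Finset.mem_filter.2 ⟨Finset.mem_univ i, h⟩⟩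

lemma cnt_zero_no {f : Fin (2 * k) → Fin n ⊕ Fin n} {a : Fin n ⊕ Fin n}
    (h : cnt f a = 0) (x : Fin (2 * k)) : f x ≠ a := by
  intro hx
  have := cnt_pos hx
  omega

/-- the balance condition. -/
def bal (f : Fin (2 * k) → Fin n ⊕ Fin n) : Prop :=
  ∀ r : Fin n, cnt f (Sum.inl r) = cnt f (Sum.inr r)

lemma sum_cnt (f : Fin (2 * k) → Fin n ⊕ Fin n) :
    ∑ a : Fin n ⊕ Fin n, cnt f a = 2 * k := by
  have h1 : ∀ a, cnt f a = ∑ i : Fin (2 * k), if f i = a then 1 else 0 := fun a =>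
    Finset.card_filter _ _
  rw [Finset.sum_congr rfl (fun a _ => h1 a), Finset.sum_comm]
  have h2 : ∀ i, (∑ a : Fin n ⊕ Fin n, if f i = a then 1 else 0) = 1 := fun i => by simp
  rw [Finset.sum_congr rfl (fun i _ => h2 i)]
  simp

lemma sum_cnt_inl {f : Fin (2 * k) → Fin n ⊕ Fin n} (hbal : bal f) :
    ∑ r : Fin n, cnt f (Sum.inl r) = k := by
  have h1 := sum_cnt f
  rw [Fintype.sum_sum_type] at h1
  have h2 : ∑ r : Fin n, cnt f (Sum.inl r) = ∑ r : Fin n, cnt f (Sum.inr r) :=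
    Finset.sum_congr rfl fun r _ => hbal r
  omega

lemma exists_fresh (hkn : k ≤ n) {f : Fin (2 * k) → Fin n ⊕ Fin n} (hbal : bal f)
    {r0 : Fin n} (h2 : 2 ≤ cnt f (Sum.inl r0)) :
    ∃ s, cnt f (Sum.inl s) = 0 ∧ cnt f (Sum.inr s) = 0 := by
  by_contra hno
  push_neg at hno
  have hall : ∀ s, 1 ≤ cnt f (Sum.inl s) := by
    intro s
    rcases Nat.eq_zero_or_pos (cnt f (Sum.inl s)) with h | h
    · exact absurd (hbal s ▸ h) (hno s h)
    · exact h
  have hsum := sum_cnt_inl hbal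
  have herase : (Finset.univ.erase r0).card • 1 ≤ ∑ r ∈ Finset.univ.erase r0, cnt f (Sum.inl r) :=
    Finset.card_nsmul_le_sum _ _ _ (fun x _ => hall x)
  have hsplit : cnt f (Sum.inl r0) + ∑ r ∈ Finset.univ.erase r0, cnt f (Sum.inl r)
      = ∑ r : Fin n, cnt f (Sum.inl r) :=
    Finset.add_sum_erase _ (fun r => cnt f (Sum.inl r)) (Finset.mem_univ r0)
  have hcard : (Finset.univ.erase r0).card = n - 1 := by
    rw [Finset.card_erase_of_mem (Finset.mem_univ r0)]
    simp
  rw [hcard, smul_eq_mul, mul_one] at herase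
  have hn : 0 < n := lt_of_lt_of_le (lt_of_lt_of_le (by omega : (0:ℕ) < k)
    (le_refl k)) hkn
  omega

/-- the collision set measuring non-injectivity. -/
def coll (f : Fin (2 * k) → Fin n ⊕ Fin n) : Finset (Fin (2 * k) × Fin (2 * k)) :=
  Finset.univ.filter fun p => p.1 ≠ p.2 ∧ f p.1 = f p.2

lemma inj_of_coll_zero {f : Fin (2 * k) → Fin n ⊕ Fin n} (h : (coll f).card = 0) :
    Function.Injective f := by
  intro x y hxy
  by_contra hne
  have : (x, y) ∈ coll f := Finset.mem_filter.2 ⟨Finset.mem_univ _, hne, hxy⟩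
  rw [Finset.card_eq_zero] at h
  rw [h] at this
  exact absurd this (Finset.notMem_empty _)

lemma coll_lt {f : Fin (2 * k) → Fin n ⊕ Fin n} {r s : Fin n} {x j0 i' : Fin (2 * k)}
    (hx : f x = Sum.inl r) (hj0 : f j0 = Sum.inr r) (hi' : f i' = Sum.inl r) (hxi' : i' ≠ x)
    (hs1 : ∀ y, f y ≠ Sum.inl s) (hs2 : ∀ y, f y ≠ Sum.inr s) :
    (coll (Function.update (Function.update f j0 (Sum.inr s)) x (Sum.inl s))).card
      < (coll f).card := by
  have hxj0 : x ≠ j0 := fun h => by rw [h, hj0] at hx; exact absurd hx (by simp)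
  have hij0 : i' ≠ j0 := fun h => by rw [h, hj0] at hi'; exact absurd hi' (by simp)
  set g := Function.update (Function.update f j0 (Sum.inr s)) x (Sum.inl s) with hg
  have hgval : ∀ y, y ≠ x → y ≠ j0 → g y = f y := by
    intro y h1 h2
    rw [hg, Function.update_of_ne h1, Function.update_of_ne h2]
  have hgx : g x = Sum.inl s := Function.update_self x _ _
  have hgj0 : g j0 = Sum.inr s := by
    rw [hg, Function.update_of_ne (Ne.symm hxj0), Function.update_self]
  have honly : ∀ y, y ≠ x → y ≠ j0 → g y ≠ Sum.inl s ∧ g y ≠ Sum.inr s := by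
    intro y h1 h2
    rw [hgval y h1 h2]
    exact ⟨hs1 y, hs2 y⟩
  apply Finset.card_lt_card
  constructor
  · intro p hp
    obtain ⟨hpmem, hpne, hpval⟩ := Finset.mem_filter.1 hp
    have h1 : p.1 ≠ x ∧ p.1 ≠ j0 := by
      constructor
      · intro h
        rw [h, hgx] at hpval
        by_cases h2x : p.2 = x
        · exact hpne (h.trans h2x.symm)
        · by_cases h2j : p.2 = j0
          · rw [h2j, hgj0] at hpval; exact absurd hpval (by simp)
          · exact absurd hpval.symm (honly p.2 h2x h2j).1
      · intro h
        rw [h, hgj0] at hpval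
        by_cases h2x : p.2 = x
        · rw [h2x, hgx] at hpval; exact absurd hpval (by simp)
        · by_cases h2j : p.2 = j0
          · exact hpne (h.trans h2j.symm)
          · exact absurd hpval.symm (honly p.2 h2x h2j).2
    have h2 : p.2 ≠ x ∧ p.2 ≠ j0 := by
      constructor
      · intro h
        rw [h, hgx] at hpval
        exact absurd hpval (honly p.1 h1.1 h1.2).1
      · intro h
        rw [h, hgj0] at hpval
        exact absurd hpval (honly p.1 h1.1 h1.2).2
    refine Finset.mem_filter.2 ⟨Finset.mem_univ _, hpne, ?_⟩
    rw [← hgval p.1 h1.1 h1.2, ← hgval p.2 h2.1 h2.2]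
    exact hpval
  · intro hsub
    have hmem : (x, i') ∈ coll f :=
      Finset.mem_filter.2 ⟨Finset.mem_univ _, Ne.symm hxi', by rw [hx, hi']⟩
    have := hsub hmem
    obtain ⟨-, -, hval⟩ := Finset.mem_filter.1 this
    have hgi' : g i' = Sum.inl r := by rw [hgval i' hxi' hij0, hi']
    rw [hgx, hgi'] at hval
    have : s = r := by simpa using hval
    exact hs1 x (this ▸ hx)

end Coinv
namespace Coinv

variable {n k : ℕ}

lemma span_injective (hkn : k ≤ n) {f : Fin (2 * k) → Fin n ⊕ Fin n}
    (hinj : Function.Injective f) (hbal : bal f) : Ef n k f ∈ Usub n k hkn := by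
  classical
  have hswap_ne : ∀ a : Fin n ⊕ Fin n, Sum.swap a ≠ a := by rintro (r | r) <;> simp
  have hex : ∀ i : Fin (2 * k), ∃! j, f j = Sum.swap (f i) := by
    intro i
    have hpos : 0 < cnt f (Sum.swap (f i)) := by
      rcases hfi : f i with r | r
      · simp only [Sum.swap_inl]
        rw [← hbal r]
        exact cnt_pos hfi
      · simp only [Sum.swap_inr]
        rw [hbal r]
        exact cnt_pos hfi
    obtain ⟨j, hj⟩ := Finset.card_pos.1 hpos
    obtain ⟨-, hfj⟩ := Finset.mem_filter.1 hj
    exact ⟨j, hfj, fun y hy => hinj (hy.trans hfj.symm)⟩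
  choose pt hpt hptu using hex
  have hptinv : ∀ i, pt (pt i) = i := fun i => hinj (by rw [hpt, hpt, Sum.swap_swap])
  have hptne : ∀ i, pt i ≠ i := by
    intro i h'
    have := hpt i
    rw [h'] at this
    exact hswap_ne (f i) this.symm
  have hptInj : Function.Injective pt := by
    intro x y h
    rw [← hptinv x, h, hptinv y]
  set M := Finset.univ.filter (fun i : Fin (2 * k) => i < pt i) with hM
  have hcompl : (Finset.univ.filter (fun i : Fin (2 * k) => ¬ i < pt i)).card = M.card := by
    apply Finset.card_bij (fun i _ => pt i)
    · intro i hi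
      obtain ⟨-, hi2⟩ := Finset.mem_filter.1 hi
      refine Finset.mem_filter.2 ⟨Finset.mem_univ _, ?_⟩
      rw [hptinv]
      exact lt_of_le_of_ne (not_lt.1 hi2) (hptne i)
    · intro x _ y _ h
      exact hptInj h
    · intro y hy
      obtain ⟨-, hy2⟩ := Finset.mem_filter.1 hy
      refine ⟨pt y, Finset.mem_filter.2 ⟨Finset.mem_univ _, ?_⟩, hptinv y⟩
      rw [hptinv]
      exact not_lt.2 (le_of_lt hy2)
  have htotal := Finset.card_filter_add_card_filter_not
    (s := (Finset.univ : Finset (Fin (2 * k)))) (p := fun i => i < pt i)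
  have hMcard : M.card = k := by
    rw [Finset.card_univ, Fintype.card_fin, ← hM] at htotal
    omega
  set iso := M.orderIsoOfFin hMcard with hiso
  set emb : Fin k → Fin (2 * k) := fun t => (iso t : Fin (2 * k)) with hemb
  have hembmem : ∀ t, emb t ∈ M := fun t => (iso t).2
  have hemblt : ∀ t, emb t < pt (emb t) := fun t => (Finset.mem_filter.1 (hembmem t)).2
  have hembmono : StrictMono emb := fun t t' h => Subtype.coe_lt_coe.2 (iso.strictMono h)
  have hembinj : Function.Injective emb := hembmono.injective
  set c : Fin k → Fin (2 * k) × Fin (2 * k) := fun t => (emb t, pt (emb t)) with hcdef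
  have hcOCD : IsOCD k c := by
    intro i
    by_cases hi : i < pt i
    · have himem : i ∈ M := Finset.mem_filter.2 ⟨Finset.mem_univ _, hi⟩
      refine ⟨(iso.symm ⟨i, himem⟩, false), ?_⟩
      simp [hcdef, hemb]
    · have hpi : pt i < i := lt_of_le_of_ne (not_lt.1 hi) (hptne i)
      have hpmem : pt i ∈ M := by
        refine Finset.mem_filter.2 ⟨Finset.mem_univ _, ?_⟩
        rw [hptinv]
        exact hpi
      refine ⟨(iso.symm ⟨pt i, hpmem⟩, true), ?_⟩
      simp [hcdef, hemb, hptinv]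
  have hc : IsCDRep k c := ⟨hcOCD, fun t => hemblt t, fun t s h => hembmono h⟩
  set lam : Fin k → Fin n := fun t => Sum.elim id id (f (emb t)) with hlamdef
  set eps : Fin k → Bool := fun t => (f (emb t)).isRight with hepsdef
  have hf1 : ∀ t, f ((c t).1) = (if eps t then Sum.inr (lam t) else Sum.inl (lam t)) := by
    intro t
    rcases hfe : f (emb t) with r | r <;> simp [hcdef, hlamdef, hepsdef, hfe]
  have hf2 : ∀ t, f ((c t).2) = (if eps t then Sum.inl (lam t) else Sum.inr (lam t)) := by
    intro t
    have hp : f (pt (emb t)) = Sum.swap (f (emb t)) := hpt (emb t)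
    rcases hfe : f (emb t) with r | r <;>
      simp [hcdef, hlamdef, hepsdef, hfe, hp, hfe ▸ hp]
  have hlam : Function.Injective lam := by
    intro t t' h
    rw [hlamdef] at h
    simp only at h
    rcases hfe : f (emb t) with r | r <;> rcases hfe' : f (emb t') with r' | r' <;>
        rw [hfe, hfe'] at h <;> simp only [Sum.elim_inl, Sum.elim_inr, id] at h <;> subst h
    · exact hembinj (hinj (hfe.trans hfe'.symm))
    · exfalso
      have h1 : f (pt (emb t)) = Sum.inr r := by rw [hpt, hfe, Sum.swap_inl]
      have h2 : pt (emb t) = emb t' := hinj (h1.trans hfe'.symm)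
      have h3 := hemblt t
      have h4 := hemblt t'
      rw [h2] at h3
      have h5 : pt (emb t') = emb t := by rw [← h2, hptinv]
      rw [h5] at h4
      exact lt_asymm h3 h4
    · exfalso
      have h1 : f (pt (emb t')) = Sum.inr r := by rw [hpt, hfe', Sum.swap_inl]
      have h2 : pt (emb t') = emb t := hinj (h1.trans hfe.symm)
      have h3 := hemblt t'
      have h4 := hemblt t
      rw [h2] at h3
      have h5 : pt (emb t) = emb t' := by rw [← h2, hptinv]
      rw [h5] at h4
      exact lt_asymm h3 h4
    · exact hembinj (hinj (hfe.trans hfe'.symm))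
  refine span_param hkn (k + k) c hc lam hlam eps f hf1 hf2 ?_
  have b1 : (Finset.univ.filter fun t => eps t = true).card ≤ k := by
    calc (Finset.univ.filter fun t => eps t = true).card
        ≤ (Finset.univ : Finset (Fin k)).card := Finset.card_filter_le _ _
      _ = k := by simp
  have b2 : (Finset.univ.filter fun t => lam t ≠ Fin.castLE hkn t).card ≤ k := by
    calc (Finset.univ.filter fun t => lam t ≠ Fin.castLE hkn t).card
        ≤ (Finset.univ : Finset (Fin k)).card := Finset.card_filter_le _ _
      _ = k := by simp
  omega

end Coinv
namespace Coinv

variable {n k : ℕ}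

lemma span_all (hkn : k ≤ n) : ∀ (N : ℕ) (f : Fin (2 * k) → Fin n ⊕ Fin n),
    (coll f).card ≤ N → Ef n k f ∈ Usub n k hkn := by
  intro N
  induction N with
  | zero =>
    intro f hN
    have hinj := inj_of_coll_zero (Nat.le_zero.1 hN)
    by_cases hbal : bal f
    · exact span_injective hkn hinj hbal
    · obtain ⟨r, hr⟩ := not_forall.1 hbal
      rw [E_unbalanced f r hr]
      exact zero_mem _
  | succ N ih =>
    intro f hN
    by_cases hbal : bal f
    · by_cases hinj : Function.Injective f
      · exact span_injective hkn hinj hbal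
      · obtain ⟨i1, i2, hval, hne⟩ := Function.not_injective_iff.1 hinj
        have h2 : ∃ r, 2 ≤ cnt f (Sum.inl r) := by
          rcases ha : f i1 with r | r
          · refine ⟨r, Finset.one_lt_card.2 ?_⟩
            exact ⟨i1, Finset.mem_filter.2 ⟨Finset.mem_univ _, ha⟩,
              i2, Finset.mem_filter.2 ⟨Finset.mem_univ _, hval ▸ ha⟩, hne⟩
          · refine ⟨r, ?_⟩
            rw [hbal r]
            refine Finset.one_lt_card.2 ?_
            exact ⟨i1, Finset.mem_filter.2 ⟨Finset.mem_univ _, ha⟩,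
              i2, Finset.mem_filter.2 ⟨Finset.mem_univ _, hval ▸ ha⟩, hne⟩
        obtain ⟨r, h2r⟩ := h2
        have h2q : 2 ≤ cnt f (Sum.inr r) := by rw [← hbal r]; exact h2r
        obtain ⟨s, hs1, hs2⟩ := exists_fresh hkn hbal h2r
        have hpos : 0 < cnt f (Sum.inr r) := by omega
        obtain ⟨j0, hj0mem⟩ := Finset.card_pos.1 hpos
        have hj0 : f j0 = Sum.inr r := (Finset.mem_filter.1 hj0mem).2
        have hq := Q3 (n := n) (k := k) r s (Function.update f j0 (Sum.inr s))
        have hg0j0 : Function.update f j0 (Sum.inr s) j0 = Sum.inr s :=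
          Function.update_self j0 _ f
        have hRu : ∀ x, Function.update f j0 (Sum.inr s) x = Sum.inr s → x = j0 := by
          intro x hx
          by_cases hxj : x = j0
          · exact hxj
          · rw [Function.update_of_ne hxj] at hx
            exact absurd hx (cnt_zero_no hs2 x)
        rw [sum_ite_one _ _ j0 hg0j0 hRu] at hq
        have e0 : Function.update (Function.update f j0 (Sum.inr s)) j0 (Sum.inr r) = f := by
          rw [Function.update_idem, ← hj0, Function.update_eq_self]
        rw [e0] at hq
        rw [← hq]
        apply Submodule.sum_mem
        intro x _
        by_cases hx : Function.update f j0 (Sum.inr s) x = Sum.inl r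
        · rw [if_pos hx]
          have hxj0 : x ≠ j0 := by
            intro h
            rw [h, hg0j0] at hx
            exact absurd hx (by simp)
          have hfx : f x = Sum.inl r := by
            rw [Function.update_of_ne hxj0] at hx
            exact hx
          obtain ⟨i', hi'mem, hi'x⟩ := Finset.exists_mem_ne h2r x
          have hi' : f i' = Sum.inl r := (Finset.mem_filter.1 hi'mem).2
          have hcoll := coll_lt hfx hj0 hi' hi'x (cnt_zero_no hs1) (cnt_zero_no hs2)
          exact ih _ (by omega)
        · rw [if_neg hx]
          exact zero_mem _
    · obtain ⟨r, hr⟩ := not_forall.1 hbal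
      rw [E_unbalanced f r hr]
      exact zero_mem _

lemma mk_tprod_mem (hkn : k ≤ n) (x : Fin (2 * k) → Vs n) :
    (spanSp n k).mkQ (PiTensorProduct.tprod ℂ x) ∈ Usub n k hkn := by
  have hx : x = fun i => ∑ a : Fin n ⊕ Fin n, x i a • bv n a := by
    funext i b
    rw [Finset.sum_apply]
    simp [bv, Pi.single_apply]
  rw [show PiTensorProduct.tprod ℂ x
      = PiTensorProduct.tprod ℂ (fun i => ∑ a : Fin n ⊕ Fin n, x i a • bv n a) by rw [← hx]]
  rw [MultilinearMap.map_sum, map_sum]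
  apply Submodule.sum_mem
  intro g _
  rw [MultilinearMap.map_smul_univ, map_smul]
  exact Submodule.smul_mem _ _ (span_all hkn _ g le_rfl)

lemma Usub_eq_top (hkn : k ≤ n) : Usub n k hkn = ⊤ := by
  rw [eq_top_iff]
  intro q _
  obtain ⟨t, rfl⟩ := Submodule.mkQ_surjective (spanSp n k) q
  have ht : t ∈ Submodule.span ℂ (Set.range (PiTensorProduct.tprod ℂ (s := fun _ : Fin (2 * k) => Vs n))) := by
    rw [PiTensorProduct.span_tprod_eq_top]
    trivial
  refine Submodule.span_induction ?_ ?_ ?_ ?_ ht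
  · rintro w ⟨x, rfl⟩
    exact mk_tprod_mem hkn x
  · rw [map_zero]; exact zero_mem _
  · intro a b _ _ ha hb
    rw [map_add]; exact add_mem ha hb
  · intro a w _ hw
    rw [map_smul]; exact Submodule.smul_mem _ _ hw

end Coinv
namespace Coinv

variable {n k : ℕ}

lemma uFam_at1 (hkn : k ≤ n) {c : Fin k → Fin (2 * k) × Fin (2 * k)} (hc : IsOCD k c)
    (t : Fin k) : uFam n k hkn c ((c t).1) = bv n (Sum.inl (Fin.castLE hkn t)) := by
  rw [uFam, Finset.sum_eq_single t]
  · rw [if_pos rfl, if_neg (c1_ne_c2 hc t t)]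
    simp [bv, pvec]
  · intro r _ hr
    rw [if_neg (fun h => hr (c1_inj hc h).symm), if_neg (c1_ne_c2 hc t r), add_zero]
  · intro h; exact absurd (Finset.mem_univ t) h

lemma uFam_at2 (hkn : k ≤ n) {c : Fin k → Fin (2 * k) × Fin (2 * k)} (hc : IsOCD k c)
    (t : Fin k) : uFam n k hkn c ((c t).2) = bv n (Sum.inr (Fin.castLE hkn t)) := by
  rw [uFam, Finset.sum_eq_single t]
  · rw [if_pos rfl, if_neg (fun h => c1_ne_c2 hc t t h.symm)]
    simp [bv, qvec]
  · intro r _ hr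
    rw [if_neg (fun h => c1_ne_c2 hc r t h.symm), if_neg (fun h => hr (c2_inj hc h).symm),
      add_zero]
  · intro h; exact absurd (Finset.mem_univ t) h

lemma symp_bv_ll (i j : Fin n) : symp n (bv n (Sum.inl i)) (bv n (Sum.inl j)) = 0 := by
  rw [symp_bv_left_inl, bv_apply]
  simp

lemma symp_bv_rr (i j : Fin n) : symp n (bv n (Sum.inr i)) (bv n (Sum.inr j)) = 0 := by
  rw [symp_bv_left_inr, bv_apply]
  simp

lemma symp_bv_lr (i j : Fin n) :
    symp n (bv n (Sum.inl i)) (bv n (Sum.inr j)) = if i = j then 1 else 0 := by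
  rw [symp_bv_left_inl, bv_apply]
  simp [Sum.inr.injEq]

lemma beta_delta (hkn : k ≤ n) {c c' : Fin k → Fin (2 * k) × Fin (2 * k)}
    (hc : IsCDRep k c) (hc' : IsCDRep k c') :
    betaFun n k c' (uFam n k hkn c) = if c' = c then 1 else 0 := by
  by_cases hcc : c' = c
  · subst hcc
    rw [if_pos rfl, betaFun]
    rw [Finset.prod_congr rfl (fun t _ => by
      rw [uFam_at1 hkn hc'.1 t, uFam_at2 hkn hc'.1 t, symp_bv_lr, if_pos rfl])]
    simp
  · rw [if_neg hcc]
    by_cases hall : ∀ t, symp n (uFam n k hkn c ((c' t).1)) (uFam n k hkn c ((c' t).2)) ≠ 0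
    · exfalso
      have key : ∀ t, ∃ u, c' t = c u := by
        intro t
        obtain ⟨⟨u1, b1⟩, he1⟩ := (ent_bij hc.1).2 ((c' t).1)
        obtain ⟨⟨u2, b2⟩, he2⟩ := (ent_bij hc.1).2 ((c' t).2)
        have ht := hall t
        cases b1 <;> cases b2
        · rw [ent_false] at he1 he2
          rw [← he1, ← he2, uFam_at1 hkn hc.1, uFam_at1 hkn hc.1, symp_bv_ll] at ht
          exact absurd rfl ht
        · rw [ent_false] at he1
          rw [ent_true] at he2
          rw [← he1, ← he2, uFam_at1 hkn hc.1, uFam_at2 hkn hc.1, symp_bv_lr] at ht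
          have hu : u1 = u2 := by
            by_contra hu
            rw [if_neg (fun h => hu (Fin.castLE_injective hkn h))] at ht
            exact absurd rfl ht
          subst hu
          exact ⟨u1, Prod.ext he1.symm he2.symm⟩
        · rw [ent_true] at he1
          rw [ent_false] at he2
          rw [← he1, ← he2, uFam_at2 hkn hc.1, uFam_at1 hkn hc.1] at ht
          rw [symp_bv_left_inr, bv_apply] at ht
          have hu : u1 = u2 := by
            by_contra hu
            rw [if_neg (fun h : Sum.inl (Fin.castLE hkn u1) = Sum.inl (Fin.castLE hkn u2) =>
              hu (Fin.castLE_injective hkn (Sum.inl.inj h)))] at ht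
            exact absurd (neg_zero) ht
          subst hu
          exfalso
          have hlt1 := hc'.2.1 t
          have hlt2 := hc.2.1 u1
          rw [← he1, ← he2] at hlt1
          exact lt_asymm hlt1 hlt2
        · rw [ent_true] at he1 he2
          rw [← he1, ← he2, uFam_at2 hkn hc.1, uFam_at2 hkn hc.1, symp_bv_rr] at ht
          exact absurd rfl ht
      choose T hT using key
      have hTinj : Function.Injective T := by
        intro t t' h
        have : c' t = c' t' := by rw [hT t, hT t', h]
        exact c1_inj hc'.1 (by rw [this])
      have hTmono : StrictMono T := by
        intro t t' hlt
        have h1 : (c' t).1 < (c' t').1 := hc'.2.2 t t' hlt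
        rw [hT t, hT t'] at h1
        rcases lt_trichotomy (T t) (T t') with h | h | h
        · exact h
        · rw [h] at h1; exact absurd h1 (lt_irrefl _)
        · exact absurd (hc.2.2 _ _ h) (lt_asymm h1)
      have hTid : T = id := by
        have hbij : Function.Bijective T := Finite.injective_iff_bijective.1 hTinj
        refine (StrictMono.range_inj hTmono strictMono_id).1 ?_
        rw [Set.range_id, Set.range_eq_univ]
        exact hbij.2
      apply hcc
      funext t
      rw [hT t, hTid]
      rfl
    · push_neg at hall
      obtain ⟨t0, ht0⟩ := hall
      rw [betaFun]
      exact Finset.prod_eq_zero (Finset.mem_univ t0) ht0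

end Coinv
namespace Coinv

variable {n k : ℕ}

lemma prod_updateA [dec : DecidableEq (Fin (2 * k))] {c : Fin k → Fin (2 * k) × Fin (2 * k)} (hc : IsOCD k c)
    (x : Fin (2 * k) → Vs n) (t0 : Fin k) (v : Vs n) :
    (∏ r : Fin k, symp n (Function.update x ((c t0).1) v ((c r).1))
        (Function.update x ((c t0).1) v ((c r).2)))
    = symp n v (x ((c t0).2))
      * ∏ r ∈ Finset.univ.erase t0, symp n (x ((c r).1)) (x ((c r).2)) := by
  rw [← Finset.mul_prod_erase Finset.univ _ (Finset.mem_univ t0)]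
  congr 1
  · rw [Function.update_self, Function.update_of_ne (fun h => c1_ne_c2 hc t0 t0 h.symm)]
  · refine Finset.prod_congr rfl fun r hr => ?_
    have hrt : r ≠ t0 := (Finset.mem_erase.1 hr).1
    rw [Function.update_of_ne (fun h => hrt (c1_inj hc h)),
      Function.update_of_ne (fun h => c1_ne_c2 hc t0 r h.symm)]

lemma prod_updateB [dec : DecidableEq (Fin (2 * k))] {c : Fin k → Fin (2 * k) × Fin (2 * k)} (hc : IsOCD k c)
    (x : Fin (2 * k) → Vs n) (t0 : Fin k) (v : Vs n) :
    (∏ r : Fin k, symp n (Function.update x ((c t0).2) v ((c r).1))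
        (Function.update x ((c t0).2) v ((c r).2)))
    = symp n (x ((c t0).1)) v
      * ∏ r ∈ Finset.univ.erase t0, symp n (x ((c r).1)) (x ((c r).2)) := by
  rw [← Finset.mul_prod_erase Finset.univ _ (Finset.mem_univ t0)]
  congr 1
  · rw [Function.update_self, Function.update_of_ne (c1_ne_c2 hc t0 t0)]
  · refine Finset.prod_congr rfl fun r hr => ?_
    have hrt : r ≠ t0 := (Finset.mem_erase.1 hr).1
    rw [Function.update_of_ne (c1_ne_c2 hc r t0),
      Function.update_of_ne (fun h => hrt (c2_inj hc h))]

/-- `β_c` as a multilinear map. -/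
def betaML (c : Fin k → Fin (2 * k) × Fin (2 * k)) (hc : IsOCD k c) :
    MultilinearMap ℂ (fun _ : Fin (2 * k) => Vs n) ℂ where
  toFun x := ∏ r : Fin k, symp n (x ((c r).1)) (x ((c r).2))
  map_update_add' := by
    intro dec m i u v
    obtain ⟨⟨t0, b⟩, rfl⟩ := (ent_bij hc).2 i
    cases b
    · rw [ent_false, prod_updateA hc, prod_updateA hc, prod_updateA hc, symp_add_left, add_mul]
    · rw [ent_true, prod_updateB hc, prod_updateB hc, prod_updateB hc, symp_add_right, add_mul]
  map_update_smul' := by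
    intro dec m i a u
    obtain ⟨⟨t0, b⟩, rfl⟩ := (ent_bij hc).2 i
    cases b
    · rw [ent_false, prod_updateA hc, prod_updateA hc, symp_smul_left, smul_eq_mul, mul_assoc]
    · rw [ent_true, prod_updateB hc, prod_updateB hc, symp_smul_right, smul_eq_mul, mul_assoc]

lemma betaML_vanish (c : Fin k → Fin (2 * k) × Fin (2 * k)) (hc : IsOCD k c)
    (ξ : Vs n →ₗ[ℂ] Vs n) (hξ : IsSp n ξ) (x : Fin (2 * k) → Vs n) :
    ∑ i : Fin (2 * k), betaML c hc (Function.update x i (ξ (x i))) = 0 := by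
  rw [← Equiv.sum_comp (Equiv.ofBijective (ent c) (ent_bij hc))
    (fun i => betaML c hc (Function.update x i (ξ (x i))))]
  rw [Fintype.sum_prod_type]
  simp only [Equiv.ofBijective_apply]
  rw [Finset.sum_congr rfl (fun t0 _ => Fintype.sum_bool
    (fun b => betaML c hc (Function.update x (ent c (t0, b)) (ξ (x (ent c (t0, b)))))))]
  simp only [ent_true, ent_false]
  have key : ∀ t0 : Fin k,
      betaML c hc (Function.update x ((c t0).2) (ξ (x ((c t0).2))))
      + betaML (n := n) c hc (Function.update x ((c t0).1) (ξ (x ((c t0).1)))) = 0 := by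
    intro t0
    have h1 : betaML (n := n) c hc (Function.update x ((c t0).1) (ξ (x ((c t0).1))))
        = symp n (ξ (x ((c t0).1))) (x ((c t0).2))
          * ∏ r ∈ Finset.univ.erase t0, symp n (x ((c r).1)) (x ((c r).2)) :=
      prod_updateA hc x t0 _
    have h2 : betaML (n := n) c hc (Function.update x ((c t0).2) (ξ (x ((c t0).2))))
        = symp n (x ((c t0).1)) (ξ (x ((c t0).2)))
          * ∏ r ∈ Finset.univ.erase t0, symp n (x ((c r).1)) (x ((c r).2)) :=
      prod_updateB hc x t0 _
    rw [h1, h2, ← add_mul, add_comm (symp n (x ((c t0).1)) (ξ (x ((c t0).2))))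
      (symp n (ξ (x ((c t0).1))) (x ((c t0).2))), hξ (x ((c t0).1)) (x ((c t0).2)), zero_mul]
  rw [Finset.sum_congr rfl (fun t0 _ => key t0)]
  simp

/-- the induced functional on the coinvariant space. -/
def lamQ (c : Fin k → Fin (2 * k) × Fin (2 * k)) (hc : IsOCD k c) :
    ((⨂[ℂ] _i : Fin (2 * k), Vs n) ⧸ spanSp n k) →ₗ[ℂ] ℂ :=
  (spanSp n k).liftQ (PiTensorProduct.lift (betaML c hc)) (by
    rw [spanSp, Submodule.span_le]
    rintro w ⟨ξ, hξ, x, rfl⟩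
    rw [SetLike.mem_coe, LinearMap.mem_ker, map_sum]
    rw [Finset.sum_congr rfl (fun i _ => PiTensorProduct.lift.tprod _)]
    exact betaML_vanish c hc ξ hξ x)

lemma lamQ_mk (c : Fin k → Fin (2 * k) × Fin (2 * k)) (hc : IsOCD k c)
    (x : Fin (2 * k) → Vs n) :
    lamQ c hc ((spanSp n k).mkQ (PiTensorProduct.tprod ℂ x)) = betaFun n k c x := by
  rw [lamQ, Submodule.mkQ_apply, Submodule.liftQ_apply, PiTensorProduct.lift.tprod]
  rfl

end Coinv
namespace Coinv

variable {n k : ℕ}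

lemma li (hkn : k ≤ n) : LinearIndependent ℂ
    (fun c : {c : Fin k → Fin (2 * k) × Fin (2 * k) // IsCDRep k c} =>
      (spanSp n k).mkQ (PiTensorProduct.tprod ℂ (uFam n k hkn c.1))) := by
  rw [linearIndependent_iff']
  intro sfin g hsum c0 hc0
  have h := congrArg (lamQ c0.1 c0.2.1) hsum
  rw [map_sum, map_zero] at h
  rw [Finset.sum_congr rfl (fun c _ => by
    rw [map_smul, lamQ_mk c0.1 c0.2.1, beta_delta hkn c.2 c0.2])] at h
  have h3 : ∑ c ∈ sfin, (if c0 = c then g c else 0)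
      = ∑ c ∈ sfin, g c • (if c0.1 = c.1 then (1:ℂ) else 0) := by
    refine Finset.sum_congr rfl fun c _ => ?_
    by_cases hcc : c0 = c
    · simp [hcc]
    · have hne : ¬ (c0.1 = c.1) := fun hh => hcc (Subtype.ext hh)
      simp [hcc, hne]
  rw [Finset.sum_ite_eq sfin c0 g, if_pos hc0] at h3
  exact h3.trans h

end Coinv
/-- STATEMENT 14: for `k ≤ n`, the images of the vectors `u_k(ĉ)`, `c ∈ 𝒞(k)`, form a
basis of the coinvariant space `(V^{⊗2k})_{sp(2n,ℂ)}`, and this basis is dual to the basis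
`{β_ĉ}` of invariant functionals (i.e. `β_{ĉ'}(u_k(ĉ)) = δ_{c,c'}`). -/
theorem coinvariants_basis (n k : ℕ) (hk : 0 < k) (hkn : k ≤ n) :
    (∃ b : Module.Basis {c : Fin k → Fin (2 * k) × Fin (2 * k) // IsCDRep k c} ℂ
        ((⨂[ℂ] _i : Fin (2 * k), Vs n) ⧸ spanSp n k),
      ∀ c : {c : Fin k → Fin (2 * k) × Fin (2 * k) // IsCDRep k c},
        b c = Submodule.Quotient.mk (PiTensorProduct.tprod ℂ (uFam n k hkn c.1))) ∧
    ∀ c c' : {c : Fin k → Fin (2 * k) × Fin (2 * k) // IsCDRep k c},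
      betaFun n k c'.1 (uFam n k hkn c.1) = if c' = c then 1 else 0 := by
  classical
  constructor
  · have hli := Coinv.li (n := n) (k := k) hkn
    have hsp : ⊤ ≤ Submodule.span ℂ (Set.range
        (fun c : {c : Fin k → Fin (2 * k) × Fin (2 * k) // IsCDRep k c} =>
          (spanSp n k).mkQ (PiTensorProduct.tprod ℂ (uFam n k hkn c.1)))) :=
      le_of_eq (Coinv.Usub_eq_top hkn).symm
    refine ⟨Module.Basis.mk hli hsp, fun c => ?_⟩
    rw [Module.Basis.mk_apply]
    rfl
  · intro c c'
    rw [Coinv.beta_delta hkn c.2 c'.2]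
    by_cases h : c' = c
    · rw [if_pos (Subtype.ext_iff.1 h), if_pos h]
    · rw [if_neg (fun hh => h (Subtype.ext hh)), if_neg h]

end
end
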